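/- arXiv:1211.3293 — 8 statements merged into one kernel-verified Lean document; each statement's English description precedes it below -/
import Mathlib

section
/- Assume either (n ≥ 2 and |A| > 2) or n ≥ 3. A strategy profile b (with strategies b_i : ℝ₊^A → ℝ^A) is an ex-post equilibrium for the class of VCG games over (N,A,(ℝ₊^A)^n), where ℝ₊^A is the set of nonnegative valuations, if and only if for each agent i there exists a function f_i : ℝ₊^A → ℝ such that b_i(v_i)(a) = v_i(a) + f_i(v_i) for every v_i ∈ ℝ₊^A and every a ∈ A. -/
open Finset

variable {N A : Type*}

/-- `M` is a social-welfare maximizer for the coalition `S`: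
for every announced profile, the chosen alternative maximizes the announced welfare of `S`. -/
def IsSWM (S : Finset N) (M : (N → A → ℝ) → A) : Prop :=
  ∀ w : N → A → ℝ, ∀ a : A, ∑ j ∈ S, w j a ≤ ∑ j ∈ S, w j (M w)

/-- `h` is a valid vector of VCG transfer functions: `h i` does not depend on
agent `i`'s own announcement. -/
def ValidH (h : N → (N → A → ℝ) → ℝ) : Prop :=
  ∀ i : N, ∀ β β' : N → A → ℝ, (∀ j, j ≠ i → β j = β' j) → h i β = h i β'

/-- Utility of agent `i` of coalition `S`, with true valuation `vi`, when the announced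
profile is `β`, under the mechanism `M` and transfers `h`. -/
noncomputable def utility [DecidableEq N] (S : Finset N) (M : (N → A → ℝ) → A)
    (h : N → (N → A → ℝ) → ℝ) (i : N) (vi : A → ℝ) (β : N → A → ℝ) : ℝ :=
  vi (M β) + ∑ j ∈ S.erase i, β j (M β) - h i β

/-- The strategy profile `b` (restricted to `S`) is an ex-post equilibrium of the
VCG game `Γ(S, M, h, V)`: no agent of `S` can profit from a unilateral deviation,
at any profile of true valuations drawn from `V`. -/
def ExPostEq [DecidableEq N] (S : Finset N) (M : (N → A → ℝ) → A)
    (h : N → (N → A → ℝ) → ℝ) (V : N → Set (A → ℝ))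
    (b : N → (A → ℝ) → A → ℝ) : Prop :=
  ∀ i ∈ S, ∀ v : N → A → ℝ, (∀ j ∈ S, v j ∈ V j) → ∀ d : A → ℝ,
    utility S M h i (v i) (Function.update (fun j => b j (v j)) i d) ≤
      utility S M h i (v i) (fun j => b j (v j))

/-- `b` is an ex-post equilibrium for the class of VCG games over `(N, A, V)`. -/
def ExPostClass [DecidableEq N] (V : N → Set (A → ℝ))
    (b : N → (A → ℝ) → A → ℝ) : Prop :=
  ∀ S : Finset N, S.Nonempty → ∀ M : (N → A → ℝ) → A, IsSWM S M →
    ∀ h : N → (N → A → ℝ) → ℝ, ValidH h → ExPostEq S M h V b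

namespace Stmt2Proof
set_option linter.unusedSectionVars false

variable [Fintype N] [DecidableEq N] [Fintype A]

/-- Nonnegative valuation. -/
def NNv (v : A → ℝ) : Prop := ∀ a, 0 ≤ v a

/-- The combinatorial core of the ex-post equilibrium property. -/
def Star (b : N → (A → ℝ) → A → ℝ) : Prop :=
  ∀ (S : Finset N) (v : N → A → ℝ), (∀ j a, 0 ≤ v j a) → ∀ i ∈ S, ∀ x : A,
    (∀ z : A, (∑ j ∈ S, b j (v j) z) ≤ ∑ j ∈ S, b j (v j) x) →
    ∀ y : A, v i y + ∑ j ∈ S.erase i, b j (v j) y ≤ v i x + ∑ j ∈ S.erase i, b j (v j) x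

lemma exists_argmax [Nonempty A] (f : A → ℝ) : ∃ x, ∀ z, f z ≤ f x := by
  obtain ⟨x, -, hx⟩ := Finset.exists_max_image Finset.univ f
    ⟨Classical.arbitrary A, Finset.mem_univ _⟩
  exact ⟨x, fun z => hx z (Finset.mem_univ z)⟩

lemma sup_trick {G X d : ℝ} (hXd : X < d) (h : ∀ V, X < V → V < d → V ≤ G) : d ≤ G := by
  by_contra hG
  push_neg at hG
  have h1 : X < (max G X + d) / 2 := by
    have := le_max_right G X; linarith
  have h2 : (max G X + d) / 2 < d := by
    have : max G X < d := max_lt hG hXd; linarith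
  have := h _ h1 h2
  have := le_max_left G X
  linarith

lemma inf_trick {c X d : ℝ} (hXd : X < d) (h : ∀ W, X < W → W < d → c ≤ W) : c ≤ X := by
  by_contra hc
  push_neg at hc
  have h1 : X < (X + min c d) / 2 := by
    have := lt_min hc hXd; linarith
  have h2 : (X + min c d) / 2 < d := by
    have := min_le_right c d; have := lt_min hc hXd; linarith
  have := h _ h1 h2
  have := min_le_left c d
  have := lt_min hc hXd
  linarith

section StarConsequences

variable {b : N → (A → ℝ) → A → ℝ}

/-- Singleton-coalition consequence: the announcement maximizer maximizes truth. -/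
lemma star1 (hb : Star b) (j : N) (v : A → ℝ) (hv : NNv v) (x : A)
    (hx : ∀ z, b j v z ≤ b j v x) (y : A) : v y ≤ v x := by
  have key := hb {j} (fun _ => v) (fun _ a => hv a) j (mem_singleton_self j) x ?_ y
  · simpa using key
  · intro z; simpa using hx z

/-- Pair-coalition consequence. -/
lemma star2 (hb : Star b) {i j : N} (hij : i ≠ j) (u w : A → ℝ)
    (hu : NNv u) (hw : NNv w) (x : A)
    (hx : ∀ z, b i u z + b j w z ≤ b i u x + b j w x) :
    (∀ y, u y + b j w y ≤ u x + b j w x) ∧ (∀ y, b i u y + w y ≤ b i u x + w x) := by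
  set v : N → A → ℝ := fun k => if k = i then u else if k = j then w else fun _ => 0 with hv
  have hvi : v i = u := by simp [hv]
  have hvj : v j = w := by simp [hv, Ne.symm hij]
  have hvnn : ∀ k a, 0 ≤ v k a := by
    intro k a
    simp only [hv]
    split_ifs
    · exact hu a
    · exact hw a
    · exact le_refl 0
  have hiS : i ∈ ({i, j} : Finset N) := mem_insert_self i {j}
  have hjS : j ∈ ({i, j} : Finset N) := mem_insert_of_mem (mem_singleton_self j)
  have hsum : ∀ z, (∑ k ∈ ({i, j} : Finset N), b k (v k) z) = b i u z + b j w z := by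
    intro z
    rw [Finset.sum_pair hij, hvi, hvj]
  have herasei : ({i, j} : Finset N).erase i = {j} :=
    Finset.erase_insert (by simp [hij])
  have herasej : ({i, j} : Finset N).erase j = {i} := by
    rw [Finset.pair_comm]
    exact Finset.erase_insert (by simp [Ne.symm hij])
  constructor
  · intro y
    have key := hb {i, j} v hvnn i hiS x ?_ y
    · rw [herasei] at key
      simpa [hvi, hvj] using key
    · intro z; rw [hsum, hsum]; exact hx z
  · intro y
    have key := hb {i, j} v hvnn j hjS x ?_ y
    · rw [herasej] at key
      simp only [hvi, hvj, Finset.sum_singleton] at key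
      linarith
    · intro z; rw [hsum, hsum]; exact hx z

/-- Triple-coalition consequence. -/
lemma star3 (hb : Star b) {m r q : N} (hmr : m ≠ r) (hmq : m ≠ q) (hrq : r ≠ q)
    (u w s : A → ℝ) (hu : NNv u) (hw : NNv w) (hs : NNv s) (x : A)
    (hx : ∀ z, b m u z + b r w z + b q s z ≤ b m u x + b r w x + b q s x) :
    (∀ y, u y + (b r w y + b q s y) ≤ u x + (b r w x + b q s x)) ∧
    (∀ y, w y + (b m u y + b q s y) ≤ w x + (b m u x + b q s x)) ∧
    (∀ y, s y + (b m u y + b r w y) ≤ s x + (b m u x + b r w x)) := by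
  set v : N → A → ℝ := fun k => if k = m then u else if k = r then w else if k = q then s
    else fun _ => 0 with hv
  have hvm : v m = u := by simp [hv]
  have hvr : v r = w := by simp [hv, Ne.symm hmr]
  have hvq : v q = s := by simp [hv, Ne.symm hmq, Ne.symm hrq]
  have hvnn : ∀ k a, 0 ≤ v k a := by
    intro k a
    simp only [hv]
    split_ifs
    · exact hu a
    · exact hw a
    · exact hs a
    · exact le_refl 0
  have hmS : m ∈ ({m, r, q} : Finset N) := by simp
  have hrS : r ∈ ({m, r, q} : Finset N) := by simp
  have hqS : q ∈ ({m, r, q} : Finset N) := by simp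
  have hmni : m ∉ ({r, q} : Finset N) := by simp [hmr, hmq]
  have hrni : r ∉ ({q} : Finset N) := by simp [hrq]
  have hsum : ∀ z, (∑ k ∈ ({m, r, q} : Finset N), b k (v k) z)
      = b m u z + b r w z + b q s z := by
    intro z
    rw [show ({m, r, q} : Finset N) = insert m {r, q} from rfl,
      Finset.sum_insert hmni, Finset.sum_pair hrq, hvm, hvr, hvq]
    ring
  have herasem : ({m, r, q} : Finset N).erase m = {r, q} := Finset.erase_insert hmni
  have heraser : ({m, r, q} : Finset N).erase r = {m, q} := by
    have : ({m, r, q} : Finset N) = insert r {m, q} := by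
      ext t; simp; tauto
    rw [this]
    exact Finset.erase_insert (by simp [Ne.symm hmr, hrq])
  have heraseq : ({m, r, q} : Finset N).erase q = {m, r} := by
    have : ({m, r, q} : Finset N) = insert q {m, r} := by
      ext t; simp; tauto
    rw [this]
    exact Finset.erase_insert (by simp [Ne.symm hmq, Ne.symm hrq])
  refine ⟨?_, ?_, ?_⟩
  · intro y
    have key := hb {m, r, q} v hvnn m hmS x ?_ y
    · rw [herasem] at key
      rw [Finset.sum_pair hrq, Finset.sum_pair hrq] at key
      simpa [hvm, hvr, hvq] using key
    · intro z; rw [hsum, hsum]; exact hx z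
  · intro y
    have key := hb {m, r, q} v hvnn r hrS x ?_ y
    · rw [heraser] at key
      rw [Finset.sum_pair hmq, Finset.sum_pair hmq] at key
      simpa [hvm, hvr, hvq] using key
    · intro z; rw [hsum, hsum]; exact hx z
  · intro y
    have key := hb {m, r, q} v hvnn q hqS x ?_ y
    · rw [heraseq] at key
      rw [Finset.sum_pair hmr, Finset.sum_pair hmr] at key
      simpa [hvm, hvr, hvq] using key
    · intro z; rw [hsum, hsum]; exact hx z

end StarConsequences

section PartI

variable {b : N → (A → ℝ) → A → ℝ}

lemma epc_star (hepc : ExPostClass (fun _ : N => {v : A → ℝ | ∀ a, 0 ≤ v a}) b) :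
    Star b := by
  classical
  intro S v hv i hiS x hx y
  haveI : Nonempty A := ⟨x⟩
  set β : N → A → ℝ := fun j => b j (v j) with hβdef
  set R : A → ℝ := fun a => ∑ j ∈ S.erase i, β j a with hRdef
  obtain ⟨am, ham⟩ := exists_argmax R
  -- choose the deviation
  have hdesign : ∃ d : A → ℝ, d ≠ β i ∧ (∀ a, a ≠ y → d a = 0) ∧
      (∀ a, d a + R a ≤ d y + R y) := by
    by_cases hc : (fun a => if a = y then R am - R y + 1 else 0) = β i
    · refine ⟨fun a => if a = y then R am - R y + 2 else 0, ?_, ?_, ?_⟩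
      · intro hEq
        have h1 := congrFun hc y
        have h2 := congrFun hEq y
        simp only [if_pos] at h1 h2
        linarith
      · intro a ha; simp [ha]
      · intro a
        by_cases ha : a = y
        · subst ha; exact le_refl _
        · show (if a = y then _ else (0:ℝ)) + R a ≤ (if y = y then _ else (0:ℝ)) + R y
          rw [if_neg ha, if_pos rfl]
          have := ham a
          linarith
    · refine ⟨fun a => if a = y then R am - R y + 1 else 0, hc, ?_, ?_⟩
      · intro a ha; simp [ha]
      · intro a
        by_cases ha : a = y
        · subst ha; exact le_refl _
        · show (if a = y then _ else (0:ℝ)) + R a ≤ (if y = y then _ else (0:ℝ)) + R y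
          rw [if_neg ha, if_pos rfl]
          have := ham a
          linarith
  obtain ⟨d, hdne, hd0, hdmax⟩ := hdesign
  set β' : N → A → ℝ := Function.update β i d with hβ'def
  have hβ'i : β' i = d := Function.update_self i d β
  have hβ'j : ∀ j, j ≠ i → β' j = β j := fun j hj => Function.update_of_ne hj d β
  have hββ' : β ≠ β' := by
    intro hEq
    apply hdne
    rw [← hβ'i, ← hEq]
  -- sums of β' over S
  have hsumβ' : ∀ z, (∑ j ∈ S, β' j z) = d z + R z := by
    intro z
    rw [← Finset.add_sum_erase S (fun j => β' j z) hiS]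
    congr 1
    · rw [hβ'i]
    · apply Finset.sum_congr rfl
      intro j hj
      rw [hβ'j j (Finset.ne_of_mem_erase hj)]
  have hsumβ : ∀ z, (∑ j ∈ S, β j z) = β i z + R z := by
    intro z
    rw [← Finset.add_sum_erase S (fun j => β j z) hiS]
  -- the mechanism
  set M : (N → A → ℝ) → A := fun w =>
    if w = β' then y else if w = β then x
    else Classical.choose (exists_argmax (fun a => ∑ j ∈ S, w j a)) with hMdef
  have hMβ' : M β' = y := by simp [hMdef]
  have hMβ : M β = x := by
    simp only [hMdef]
    rw [if_neg hββ']
    simp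
  have hswm : IsSWM S M := by
    intro w a
    by_cases h1 : w = β'
    · subst h1
      rw [hMβ']
      rw [hsumβ' a, hsumβ' y]
      exact hdmax a
    · by_cases h2 : w = β
      · subst h2
        rw [hMβ]
        exact hx a
      · have hM : M w = Classical.choose (exists_argmax (fun a => ∑ j ∈ S, w j a)) := by
          simp only [hMdef]; rw [if_neg h1, if_neg h2]
        rw [hM]
        exact Classical.choose_spec (exists_argmax (fun a => ∑ j ∈ S, w j a)) a
  have hvalid : ValidH (fun (_ : N) (_ : N → A → ℝ) => (0 : ℝ)) := fun _ _ _ _ => rfl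
  have key := hepc S ⟨i, hiS⟩ M hswm (fun _ _ => (0 : ℝ)) hvalid i hiS v
    (fun j _ => fun a => hv j a) d
  have key2 : v i (M β') + (∑ j ∈ S.erase i, β' j (M β')) - 0 ≤
      v i (M β) + (∑ j ∈ S.erase i, β j (M β)) - 0 := key
  rw [hMβ', hMβ] at key2
  have e2 : (∑ j ∈ S.erase i, β' j y) = R y := by
    apply Finset.sum_congr rfl
    intro j hj
    rw [hβ'j j (Finset.ne_of_mem_erase hj)]
  rw [e2] at key2
  simpa using key2

lemma shift_epc
    (hshift : ∀ i : N, ∃ f : (A → ℝ) → ℝ, ∀ v : A → ℝ, (∀ a, 0 ≤ v a) →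
      ∀ a : A, b i v a = v a + f v) :
    ExPostClass (fun _ : N => {v : A → ℝ | ∀ a, 0 ≤ v a}) b := by
  classical
  choose f hf using hshift
  intro S hS M hM h hh i hiS v hv d
  set β : N → A → ℝ := fun j => b j (v j) with hβdef
  set β' : N → A → ℝ := Function.update β i d with hβ'def
  have hβ'j : ∀ j, j ≠ i → β' j = β j := fun j hj => Function.update_of_ne hj d β
  have hcancel : h i β' = h i β := (hh i β' β (fun j hj => (hβ'j j hj))).symm ▸ rfl
  have hcancel' : h i β' = h i β := by
    exact (hh i β β' (fun j hj => (hβ'j j hj).symm)).symm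
  have key : ∀ j ∈ S, ∀ a, β j a = v j a + f j (v j) := by
    intro j hj a
    exact hf j (v j) (hv j hj) a
  have hsum1 : ∀ a, v i a + ∑ j ∈ S.erase i, β j a
      = (∑ j ∈ S, v j a) + ∑ j ∈ S.erase i, f j (v j) := by
    intro a
    have e1 : (∑ j ∈ S.erase i, β j a)
        = ∑ j ∈ S.erase i, (v j a + f j (v j)) := by
      apply Finset.sum_congr rfl
      intro j hj
      exact key j (Finset.mem_of_mem_erase hj) a
    rw [e1, Finset.sum_add_distrib, ← add_assoc,
      Finset.add_sum_erase S (fun j => v j a) hiS]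
  have hsum2 : ∀ a, (∑ j ∈ S, β j a) = (∑ j ∈ S, v j a) + ∑ j ∈ S, f j (v j) := by
    intro a
    rw [← Finset.sum_add_distrib]
    apply Finset.sum_congr rfl
    intro j hj
    exact key j hj a
  have hswm : (∑ j ∈ S, v j (M β')) ≤ ∑ j ∈ S, v j (M β) := by
    have := hM β (M β')
    rw [hsum2 (M β'), hsum2 (M β)] at this
    linarith
  show v i (M β') + (∑ j ∈ S.erase i, β' j (M β')) - h i β' ≤
      v i (M β) + (∑ j ∈ S.erase i, β j (M β)) - h i β
  rw [hcancel']
  have e2 : (∑ j ∈ S.erase i, β' j (M β')) = ∑ j ∈ S.erase i, β j (M β') := by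
    apply Finset.sum_congr rfl
    intro j hj
    rw [hβ'j j (Finset.ne_of_mem_erase hj)]
  rw [e2]
  have h1 := hsum1 (M β')
  have h2 := hsum1 (M β)
  linarith

end PartI


section Foundations

variable [DecidableEq A] {b : N → (A → ℝ) → A → ℝ}

/-- One-point valuation. -/
def sing (x : A) (W : ℝ) : A → ℝ := fun t => if t = x then W else 0

/-- Two-point valuation. -/
def dbl (x y : A) (Y Z : ℝ) : A → ℝ := fun t => if t = x then Y else if t = y then Z else 0

lemma NNv_sing {x : A} {W : ℝ} (hW : 0 ≤ W) : NNv (sing x W) := by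
  intro a; unfold sing; split_ifs <;> simp [hW]

lemma NNv_dbl {x y : A} {Y Z : ℝ} (hY : 0 ≤ Y) (hZ : 0 ≤ Z) : NNv (dbl x y Y Z) := by
  intro a; unfold dbl; split_ifs <;> simp [hY, hZ]

lemma sing_self (x : A) (W : ℝ) : sing x W x = W := by simp [sing]

lemma sing_ne {x t : A} (h : t ≠ x) (W : ℝ) : sing x W t = 0 := by simp [sing, h]

lemma dbl_fst {x y : A} (hxy : x ≠ y) (Y Z : ℝ) : dbl x y Y Z x = Y := by simp [dbl]

lemma dbl_snd {x y : A} (hxy : x ≠ y) (Y Z : ℝ) : dbl x y Y Z y = Z := by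
  simp [dbl, Ne.symm hxy]

lemma dbl_ne {x y t : A} (hx : t ≠ x) (hy : t ≠ y) (Y Z : ℝ) : dbl x y Y Z t = 0 := by
  simp [dbl, hx, hy]

/-- Equal true values are announced equally (Lemma "ties to ties"). -/
lemma tie (hb : Star b) (hN : 2 ≤ Fintype.card N) (j : N) (v : A → ℝ) (hv : NNv v)
    {y z : A} (hyz : v y = v z) : b j v y = b j v z := by
  have aux : ∀ y1 z1 : A, v y1 = v z1 → b j v z1 < b j v y1 → False := by
    clear hyz y z
    intro y1 z1 hvyz hlt
    set γ : A → ℝ := b j v with hγ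
    have hyzne : y1 ≠ z1 := by rintro rfl; exact lt_irrefl _ hlt
    haveI : Nonempty A := ⟨y1⟩
    obtain ⟨tm, htm⟩ := exists_argmax γ
    set ε : ℝ := (γ y1 - γ z1) / 2 with hε
    have hεpos : 0 < ε := by simp only [hε]; linarith
    set w : A → ℝ := dbl y1 z1 (γ tm - γ y1 + 2 * ε) (γ tm - γ z1 + ε) with hw
    have hwy : w y1 = γ tm - γ y1 + 2 * ε := dbl_fst hyzne _ _
    have hwz : w z1 = γ tm - γ z1 + ε := dbl_snd hyzne _ _
    have hwt : ∀ t, t ≠ y1 → t ≠ z1 → w t = 0 := fun t h1 h2 => dbl_ne h1 h2 _ _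
    have hwnn : NNv w := NNv_dbl (by linarith [htm y1]) (by linarith [htm z1])
    obtain ⟨i, hij⟩ := Fintype.exists_ne_of_one_lt_card (by omega) j
    set β : A → ℝ := b i w with hβ
    obtain ⟨xs, hxs⟩ := exists_argmax (fun t => β t + γ t)
    obtain ⟨h1, h2⟩ := star2 hb hij w v hwnn hv xs hxs
    -- xs = y1 since w + γ is uniquely maximized at y1
    have hxy : xs = y1 := by
      by_contra hne
      have hlt2 : w xs + γ xs < w y1 + γ y1 := by
        rw [hwy]
        by_cases hz : xs = z1
        · rw [hz, hwz]; linarith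
        · rw [hwt xs hne hz]; linarith [htm xs]
      exact absurd (h1 y1) (not_le.mpr hlt2)
    subst hxy
    -- so β z1 ≤ β y1 (here xs = y1)
    have hβzy : β z1 ≤ β xs := by
      have := h2 z1
      rw [hvyz] at this
      linarith
    -- but the singleton condition forces the opposite
    obtain ⟨xb, hxb⟩ := exists_argmax β
    have hwmax := star1 hb i w hwnn xb hxb
    have hxbz : xb = z1 := by
      by_contra hne
      have hlt2 : w xb < w z1 := by
        rw [hwz]
        by_cases hy2 : xb = xs
        · rw [hy2, hwy]; linarith
        · rw [hwt xb hy2 hne]; linarith [htm z1]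
      exact absurd (hwmax z1) (not_le.mpr hlt2)
    subst hxbz
    have hymax : ∀ t, β t ≤ β xs := fun t => le_trans (hxb t) hβzy
    have := star1 hb i w hwnn xs hymax xb
    rw [hwy, hwz] at this
    linarith
  rcases lt_trichotomy (b j v y) (b j v z) with h | h | h
  · exact absurd (aux z y hyz.symm h) (fun hf => hf.elim)
  · exact h
  · exact absurd (aux y z hyz h) (fun hf => hf.elim)

/-- Strictly higher true values are announced strictly higher. -/
lemma mono (hb : Star b) (hN : 2 ≤ Fintype.card N) (j : N) (v : A → ℝ) (hv : NNv v)
    {y z : A} (h : v z < v y) : b j v z < b j v y := by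
  by_contra hcon
  push_neg at hcon
  set γ : A → ℝ := b j v with hγ
  have hyzne : y ≠ z := by rintro rfl; exact lt_irrefl _ h
  haveI : Nonempty A := ⟨y⟩
  obtain ⟨tm, htm⟩ := exists_argmax γ
  set K : ℝ := γ tm - γ y + 1 with hK
  have hKpos : 0 < K := by have := htm y; simp only [hK]; linarith
  set w : A → ℝ := dbl y z K K with hw
  have hwy : w y = K := dbl_fst hyzne _ _
  have hwz : w z = K := dbl_snd hyzne _ _
  have hwt : ∀ t, t ≠ y → t ≠ z → w t = 0 := fun t h1 h2 => dbl_ne h1 h2 _ _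
  have hwnn : NNv w := NNv_dbl (le_of_lt hKpos) (le_of_lt hKpos)
  obtain ⟨i, hij⟩ := Fintype.exists_ne_of_one_lt_card (by omega) j
  set β : A → ℝ := b i w with hβ
  have hβyz : β y = β z := tie hb hN i w hwnn (hwy.trans hwz.symm)
  obtain ⟨xs, hxs⟩ := exists_argmax (fun t => β t + γ t)
  obtain ⟨h1, h2⟩ := star2 hb hij w v hwnn hv xs hxs
  -- xs ∈ {y, z}
  have hxyz : xs = y ∨ xs = z := by
    by_contra hne
    push_neg at hne
    have hlt2 : w xs + γ xs < w y + γ y := by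
      rw [hwt xs hne.1 hne.2, hwy]
      have := htm xs
      simp only [hK]
      linarith
    exact absurd (h1 y) (not_le.mpr hlt2)
  -- z is an argmax of β + γ
  have hzmax : ∀ t, β t + γ t ≤ β z + γ z := by
    rcases hxyz with h' | h'
    · -- xs = y; then γ z ≤ γ y is forced, so with γ y ≤ γ z both equal
      have hγzy : γ z ≤ γ y := by
        have h1z := h1 z
        rw [h', hwy, hwz] at h1z
        linarith
      have hEq : γ y = γ z := le_antisymm hcon hγzy
      intro t
      have hxt := hxs t
      rw [h', hβyz, hEq] at hxt
      exact hxt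
    · intro t
      have hxt := hxs t
      rw [h'] at hxt
      exact hxt
  obtain ⟨-, h2'⟩ := star2 hb hij w v hwnn hv z hzmax
  have hfin := h2' y
  have hβyz' : b i w y = b i w z := hβyz
  rw [hβyz'] at hfin
  linarith

/-- Shape of the announcement on a one-point valuation. -/
lemma shape_sing (hb : Star b) (hN : 2 ≤ Fintype.card N) (hA : 2 ≤ Fintype.card A)
    (j : N) (x : A) {W : ℝ} (hW : 0 < W) :
    ∃ r F : ℝ, 0 < F ∧ ∀ t, b j (sing x W) t = r + if t = x then F else 0 := by
  obtain ⟨y₀, hy₀⟩ := Fintype.exists_ne_of_one_lt_card (by omega) x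
  refine ⟨b j (sing x W) y₀, b j (sing x W) x - b j (sing x W) y₀, ?_, ?_⟩
  · have : sing x W y₀ < sing x W x := by
      rw [sing_self, sing_ne hy₀]; exact hW
    have := mono hb hN j (sing x W) (NNv_sing (le_of_lt hW)) this
    linarith
  · intro t
    by_cases ht : t = x
    · subst ht; rw [if_pos rfl]; ring
    · rw [if_neg ht]
      have : sing x W t = sing x W y₀ := by rw [sing_ne ht, sing_ne hy₀]
      have := tie hb hN j (sing x W) (NNv_sing (le_of_lt hW)) this
      linarith

/-- Shape of the announcement on a two-point valuation (needs a third alternative). -/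
lemma shape_dbl (hb : Star b) (hN : 2 ≤ Fintype.card N) (hA : 3 ≤ Fintype.card A)
    (j : N) {x y : A} (hxy : x ≠ y) {Y Z : ℝ} (hZ : 0 < Z) (hZY : Z < Y) :
    ∃ r H K : ℝ, 0 < K ∧ K < H ∧
      ∀ t, b j (dbl x y Y Z) t = r + (if t = x then H else if t = y then K else 0) := by
  have hthird : ∃ z₀ : A, z₀ ≠ x ∧ z₀ ≠ y := by
    by_contra hcon
    push_neg at hcon
    have hsub : (Finset.univ : Finset A) ⊆ {x, y} := by
      intro t _
      rcases eq_or_ne t x with rfl | htx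
      · simp
      · simp [hcon t htx]
    have := Finset.card_le_card hsub
    have hle : Finset.card ({x, y} : Finset A) ≤ 2 := Finset.card_insert_le _ _ |>.trans (by simp)
    rw [Finset.card_univ] at this
    omega
  obtain ⟨z₀, hz₀x, hz₀y⟩ := hthird
  set v : A → ℝ := dbl x y Y Z with hv
  have hvnn : NNv v := NNv_dbl (by linarith) (le_of_lt hZ)
  refine ⟨b j v z₀, b j v x - b j v z₀, b j v y - b j v z₀, ?_, ?_, ?_⟩
  · have hlt : v z₀ < v y := by
      rw [hv, dbl_ne hz₀x hz₀y, dbl_snd hxy]; exact hZ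
    have := mono hb hN j v hvnn hlt
    linarith
  · have hlt : v y < v x := by
      rw [hv, dbl_snd hxy, dbl_fst hxy]; exact hZY
    have := mono hb hN j v hvnn hlt
    linarith
  · intro t
    by_cases htx : t = x
    · subst htx; rw [if_pos rfl]; ring
    · rw [if_neg htx]
      by_cases hty : t = y
      · subst hty; rw [if_pos rfl]; ring
      · rw [if_neg hty]
        have : v t = v z₀ := by rw [hv, dbl_ne htx hty, dbl_ne hz₀x hz₀y]
        have := tie hb hN j v hvnn this
        linarith

/-- Master forcing lemma: if agent `j`'s true-payoff vector `b i u + w` is uniquely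
maximized at `y₀`, then `y₀` is the argmax of the announced total, and `y₀`
also maximizes agent `i`'s true payoff. -/
lemma force (hb : Star b) {i j : N} (hij : i ≠ j) {u w : A → ℝ}
    (hu : NNv u) (hw : NNv w) [Nonempty A] {y₀ : A}
    (hforce : ∀ t, t ≠ y₀ → b i u t + w t < b i u y₀ + w y₀) :
    (∀ t, b i u t + b j w t ≤ b i u y₀ + b j w y₀) ∧
      (∀ t, u t + b j w t ≤ u y₀ + b j w y₀) := by
  obtain ⟨xs, hxs⟩ := exists_argmax (fun t => b i u t + b j w t)
  obtain ⟨h1, h2⟩ := star2 hb hij u w hu hw xs hxs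
  have hxy : xs = y₀ := by
    by_contra hne
    exact absurd (h2 y₀) (not_le.mpr (hforce xs hne))
  subst hxy
  exact ⟨hxs, h1⟩

/-- Mirror of `force`: forcing through agent `i`'s true-payoff vector. -/
lemma force' (hb : Star b) {i j : N} (hij : i ≠ j) {u w : A → ℝ}
    (hu : NNv u) (hw : NNv w) [Nonempty A] {y₀ : A}
    (hforce : ∀ t, t ≠ y₀ → u t + b j w t < u y₀ + b j w y₀) :
    (∀ t, b i u t + b j w t ≤ b i u y₀ + b j w y₀) ∧
      (∀ t, b i u t + w t ≤ b i u y₀ + w y₀) := by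
  have key := force hb (Ne.symm hij) hw hu (y₀ := y₀) ?_
  · obtain ⟨k1, k2⟩ := key
    constructor
    · intro t; have := k1 t; linarith
    · intro t; have := k2 t; linarith
  · intro t ht
    have := hforce t ht
    linarith

end Foundations

section EngineA

variable [DecidableEq A] {b : N → (A → ℝ) → A → ℝ}

lemma exists_third (hA : 3 ≤ Fintype.card A) (x z : A) : ∃ y : A, y ≠ x ∧ y ≠ z := by
  by_contra hcon
  push_neg at hcon
  have hsub : (Finset.univ : Finset A) ⊆ {x, z} := by
    intro t _
    rcases eq_or_ne t x with rfl | htx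
    · simp
    · simp [hcon t htx]
  have := Finset.card_le_card hsub
  have hle : Finset.card ({x, z} : Finset A) ≤ 2 :=
    (Finset.card_insert_le _ _).trans (by simp)
  rw [Finset.card_univ] at this
  omega

/-- The core contradiction: no agent can over-announce a one-point valuation. -/
lemma noUp (hb : Star b) (hN : 2 ≤ Fintype.card N) (hA : 3 ≤ Fintype.card A)
    (p : N) (xh : A) {X d : ℝ} (hX : 0 < X) (hXd : X < d)
    (hup : ∀ t, t ≠ xh → d + b p (sing xh X) t ≤ b p (sing xh X) xh) : False := by
  haveI : Nonempty A := ⟨xh⟩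
  have hd : 0 < d := lt_trans hX hXd
  obtain ⟨q, hqp⟩ := Fintype.exists_ne_of_one_lt_card (by omega) p
  have hpq : p ≠ q := Ne.symm hqp
  -- ties off-support, used for transports
  have transport : ∀ (j : N) (x : A) (W : ℝ), 0 ≤ W → ∀ s t : A, s ≠ x → t ≠ x →
      b j (sing x W) s = b j (sing x W) t := by
    intro j x W hW s t hs ht
    exact tie hb hN j (sing x W) (NNv_sing hW) (by rw [sing_ne hs, sing_ne ht])
  -- A2 : partner deflation below d
  have A2 : ∀ V, 0 < V → V < d → ∀ y, y ≠ xh → ∀ t, t ≠ y →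
      b q (sing y V) y ≤ X + b q (sing y V) t := by
    intro V hV0 hVd y hy t ht
    have hforce : ∀ s, s ≠ xh → b p (sing xh X) s + sing y V s <
        b p (sing xh X) xh + sing y V xh := by
      intro s hs
      rw [sing_ne (Ne.symm hy)]
      have h1 : d + b p (sing xh X) s ≤ b p (sing xh X) xh := hup s hs
      by_cases hsy : s = y
      · subst hsy; rw [sing_self]; linarith
      · rw [sing_ne hsy]; linarith
    obtain ⟨-, h2⟩ := force hb hpq (NNv_sing (le_of_lt hX)) (NNv_sing (le_of_lt hV0)) hforce
    have key := h2 y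
    rw [sing_ne hy, sing_self] at key
    have htr : b q (sing y V) xh = b q (sing y V) t :=
      transport q y V (le_of_lt hV0) xh t (Ne.symm hy) ht
    rw [htr] at key
    linarith
  -- A3' : self inflation on the window, at every slot
  have A3 : ∀ x : A, ∀ W, X < W → W < d → ∀ t, t ≠ x →
      d + b p (sing x W) t ≤ b p (sing x W) x := by
    intro x W hXW hWd t ht
    have hW0 : 0 < W := lt_trans hX hXW
    obtain ⟨y, hyx, hyxh⟩ := exists_third hA x xh
    have key : ∀ V, X < V → V < d → V ≤ b p (sing x W) x - b p (sing x W) t := by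
      intro V hXV hVd
      have hV0 : 0 < V := lt_trans hX hXV
      have hforce : ∀ s, s ≠ x → sing x W s + b q (sing y V) s <
          sing x W x + b q (sing y V) x := by
        intro s hs
        rw [sing_ne hs, sing_self]
        by_cases hsy : s = y
        · subst hsy
          have := A2 V hV0 hVd s hyxh x (Ne.symm hyx)
          linarith
        · have htr : b q (sing y V) s = b q (sing y V) x :=
            transport q y V (le_of_lt hV0) s x hsy (Ne.symm hyx)
          rw [htr]; linarith
      obtain ⟨-, h2⟩ := force' hb hpq (NNv_sing (le_of_lt hW0)) (NNv_sing (le_of_lt hV0)) hforce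
      have key2 := h2 y
      rw [sing_self, sing_ne (Ne.symm hyx)] at key2
      have htr : b p (sing x W) y = b p (sing x W) t :=
        transport p x W (le_of_lt hW0) y t hyx ht
      rw [htr] at key2
      linarith
    have := sup_trick hXd key
    linarith
  -- A4 : the gap theorem, values below d are below X
  have A4 : ∀ x : A, ∀ W, 0 < W → ∀ t, t ≠ x →
      ¬ (d + b p (sing x W) t ≤ b p (sing x W) x) →
      b p (sing x W) x ≤ X + b p (sing x W) t := by
    intro x W hW0 t ht hnot
    push_neg at hnot
    obtain ⟨y, hyx, hyxh⟩ := exists_third hA x xh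
    set F : ℝ := b p (sing x W) x - b p (sing x W) t with hF
    have hFd : F < d := by simp only [hF]; linarith
    set V : ℝ := (max F X + d) / 2 with hV
    have hFV : F < V := by
      have := le_max_left F X; simp only [hV]
      have : max F X < d := max_lt hFd hXd
      have := le_max_left F X
      linarith
    have hXV : X < V := by
      have h1 : max F X < d := max_lt hFd hXd
      have h2 := le_max_right F X
      simp only [hV]; linarith
    have hVd : V < d := by
      have h1 : max F X < d := max_lt hFd hXd
      simp only [hV]; linarith
    have hV0 : 0 < V := lt_trans hX hXV
    have htr : b p (sing x W) y = b p (sing x W) t :=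
      transport p x W (le_of_lt hW0) y t hyx ht
    have hforce : ∀ s, s ≠ y → b p (sing x W) s + sing y V s <
        b p (sing x W) y + sing y V y := by
      intro s hs
      rw [sing_self]
      by_cases hsx : s = x
      · rw [hsx, sing_ne (Ne.symm hyx)]
        have hFV' : b p (sing x W) x - b p (sing x W) t < V := hFV
        linarith [htr]
      · have htr2 : b p (sing x W) s = b p (sing x W) y :=
          transport p x W (le_of_lt hW0) s y hsx hyx
        rw [sing_ne hs, htr2]
        linarith
    obtain ⟨h1, -⟩ := force hb hpq (NNv_sing (le_of_lt hW0)) (NNv_sing (le_of_lt hV0)) hforce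
    have key := h1 x
    have hqtie := A2 V hV0 hVd y hyxh x (Ne.symm hyx)
    rw [htr] at key
    linarith
  -- the infimum machinery
  set Sx : A → Set ℝ := fun x => {W | 0 < W ∧ ∀ t, t ≠ x →
    d + b p (sing x W) t ≤ b p (sing x W) x} with hSx
  set ξ : A → ℝ := fun x => sInf (Sx x) with hξ
  have hmem : ∀ x W, X < W → W < d → W ∈ Sx x := by
    intro x W h1 h2
    exact ⟨lt_trans hX h1, A3 x W h1 h2⟩
  have hSne : ∀ x, ((X + d) / 2) ∈ Sx x := by
    intro x
    exact hmem x _ (by linarith) (by linarith)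
  have hbdd : ∀ x, BddBelow (Sx x) := by
    intro x
    exact ⟨0, fun W hW => le_of_lt hW.1⟩
  have hξle : ∀ x, ξ x ≤ X := by
    intro x
    have : ∀ W, X < W → W < d → ξ x ≤ W := by
      intro W h1 h2
      exact csInf_le (hbdd x) (hmem x W h1 h2)
    exact inf_trick hXd this
  have hξpos : ∀ x, 0 < ξ x := by
    intro x
    by_contra hcon
    push_neg at hcon
    obtain ⟨y, hyx⟩ := Fintype.exists_ne_of_one_lt_card (by omega) x
    set V : ℝ := (X + d) / 2 with hV
    have hV0 : 0 < V := by simp only [hV]; linarith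
    have hE : b q (sing y V) x < b q (sing y V) y := by
      apply mono hb hN q (sing y V) (NNv_sing (le_of_lt hV0))
      rw [sing_self, sing_ne (Ne.symm hyx)]
      exact hV0
    set E : ℝ := b q (sing y V) y - b q (sing y V) x with hEd
    have hE0 : 0 < E := by simp only [hEd]; linarith
    have hlt : ξ x < E := lt_of_le_of_lt hcon hE0
    obtain ⟨W, hWmem, hWE⟩ := (csInf_lt_iff (hbdd x) ⟨_, hSne x⟩).mp hlt
    obtain ⟨hW0, hWin⟩ := hWmem
    have hforce : ∀ s, s ≠ x → b p (sing x W) s + sing y V s <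
        b p (sing x W) x + sing y V x := by
      intro s hs
      rw [sing_ne (Ne.symm hyx)]
      have h1 := hWin s hs
      by_cases hsy : s = y
      · subst hsy
        rw [sing_self]
        have : V < d := by simp only [hV]; linarith
        linarith
      · rw [sing_ne hsy]; linarith
    obtain ⟨-, h2⟩ := force hb hpq (NNv_sing (le_of_lt hW0)) (NNv_sing (le_of_lt hV0)) hforce
    have key := h2 y
    rw [sing_ne hyx, sing_self] at key
    simp only [hEd] at hWE
    linarith
  -- the two-point comparison: ξ z < ξ x for any distinct triple
  have hlt : ∀ x y z : A, y ≠ x → z ≠ x → z ≠ y → ξ z < ξ x := by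
    intro x y z hyx hzx hzy
    set V₁ : ℝ := (X + d) / 2 with hV₁
    set V₂ : ℝ := (d - X) / 4 with hV₂
    have hV₂0 : 0 < V₂ := by simp only [hV₂]; linarith
    have hV₂₁ : V₂ < V₁ := by simp only [hV₁, hV₂]; linarith
    have hV₁d : V₁ < d := by simp only [hV₁]; linarith
    have hV₁0 : 0 < V₁ := lt_trans hV₂0 hV₂₁
    obtain ⟨rq, H, K, hK0, hKH, hsq⟩ := shape_dbl hb hN hA q (Ne.symm hzy) hV₂0 hV₂₁
    set w1 : A → ℝ := dbl y z V₁ V₂ with hw1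
    have hw1nn : NNv w1 := NNv_dbl (le_of_lt hV₁0) (le_of_lt hV₂0)
    have hbw1y : b q w1 y = rq + H := by
      have := hsq y; rw [if_pos rfl] at this; exact this
    have hbw1z : b q w1 z = rq + K := by
      have := hsq z; rw [if_neg hzy, if_pos rfl] at this; exact this
    have hbw1o : ∀ t, t ≠ y → t ≠ z → b q w1 t = rq := by
      intro t h1 h2
      have := hsq t; rw [if_neg h1, if_neg h2] at this; simpa using this
    -- A6 : H ≤ ξ x
    have hA6 : H ≤ ξ x := by
      apply le_csInf ⟨_, hSne x⟩
      intro W hW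
      obtain ⟨hW0, hWin⟩ := hW
      have hforce : ∀ s, s ≠ x → b p (sing x W) s + w1 s <
          b p (sing x W) x + w1 x := by
        intro s hs
        rw [show w1 x = 0 from dbl_ne (Ne.symm hyx) (Ne.symm hzx) _ _]
        have h1 := hWin s hs
        by_cases hsy : s = y
        · rw [hsy] at h1 ⊢
          rw [show w1 y = V₁ from dbl_fst (Ne.symm hzy) _ _]
          linarith
        · by_cases hsz : s = z
          · rw [hsz] at h1 ⊢
            rw [show w1 z = V₂ from dbl_snd (Ne.symm hzy) _ _]
            linarith
          · rw [show w1 s = 0 from dbl_ne hsy hsz _ _]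
            linarith
      obtain ⟨-, h2⟩ := force hb hpq (NNv_sing (le_of_lt hW0)) hw1nn hforce
      have key := h2 y
      rw [sing_ne hyx, sing_self, hbw1y] at key
      have hx0 : b q w1 x = rq := hbw1o x (Ne.symm hyx) (Ne.symm hzx)
      rw [hx0] at key
      linarith
    -- A7 : ξ z + K ≤ H
    have hA7 : ξ z + K ≤ H := by
      have key : ∀ W₂, 0 < W₂ → W₂ < ξ z → W₂ ≤ H - K := by
        intro W₂ hW₂0 hW₂ξ
        have hnmem : W₂ ∉ Sx z := by
          intro hin
          exact absurd (csInf_le (hbdd z) hin) (not_le.mpr hW₂ξ)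
        have hex : ∃ t, t ≠ z ∧ ¬ (d + b p (sing z W₂) t ≤ b p (sing z W₂) z) := by
          by_contra hcon
          push_neg at hcon
          exact hnmem ⟨hW₂0, fun t ht => hcon t ht⟩
        obtain ⟨t, htz, hnot⟩ := hex
        have hgap := A4 z W₂ hW₂0 t htz hnot
        have htr : b p (sing z W₂) t = b p (sing z W₂) y :=
          transport p z W₂ (le_of_lt hW₂0) t y htz (Ne.symm hzy)
        rw [htr] at hgap
        have hforce : ∀ s, s ≠ y → b p (sing z W₂) s + w1 s <
            b p (sing z W₂) y + w1 y := by
          intro s hs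
          rw [show w1 y = V₁ from dbl_fst (Ne.symm hzy) _ _]
          by_cases hsz : s = z
          · rw [hsz]
            rw [show w1 z = V₂ from dbl_snd (Ne.symm hzy) _ _]
            have harith : X + V₂ < V₁ := by simp only [hV₁, hV₂]; linarith
            linarith
          · rw [show w1 s = 0 from dbl_ne hs hsz _ _]
            have htr2 : b p (sing z W₂) s = b p (sing z W₂) y :=
              transport p z W₂ (le_of_lt hW₂0) s y hsz (Ne.symm hzy)
            rw [htr2]
            linarith
        obtain ⟨-, h2⟩ := force hb hpq (NNv_sing (le_of_lt hW₂0)) hw1nn hforce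
        have key2 := h2 z
        rw [sing_self, sing_ne (Ne.symm hzy), hbw1z, hbw1y] at key2
        linarith
      have := sup_trick (hξpos z) key
      linarith
    linarith [hξle x, hξpos z, hA6, hA7, hK0]
  -- contradiction by symmetry
  obtain ⟨x0, y0, hxy0⟩ : ∃ x y : A, y ≠ x := by
    obtain ⟨u, hu⟩ := Fintype.exists_ne_of_one_lt_card
      (show 1 < Fintype.card A by omega) (Classical.arbitrary A)
    exact ⟨Classical.arbitrary A, u, hu⟩
  obtain ⟨z0, hz0x, hz0y⟩ := exists_third hA x0 y0
  have h1 := hlt x0 y0 z0 hxy0 hz0x hz0y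
  have h2 := hlt z0 y0 x0 (fun h => hz0y h.symm) (fun h => hz0x h.symm) (fun h => hxy0 h.symm)
  linarith

/-- One-point valuations are announced truthfully (up to a constant). -/
lemma engineA (hb : Star b) (hN : 2 ≤ Fintype.card N) (hA : 3 ≤ Fintype.card A) :
    ∀ (j : N) (x : A) (W : ℝ), 0 < W → ∀ t, t ≠ x →
      b j (sing x W) x = b j (sing x W) t + W := by
  intro j x W hW t ht
  haveI : Nonempty A := ⟨x⟩
  obtain ⟨r, F, hF0, hs⟩ := shape_sing hb hN (by omega) j x hW
  have hbx : b j (sing x W) x = r + F := by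
    have := hs x; rw [if_pos rfl] at this; exact this
  have hbt : b j (sing x W) t = r := by
    have := hs t; rw [if_neg ht] at this; simpa using this
  rw [hbx, hbt]
  have hFW : F = W := by
    by_contra hne
    rcases lt_or_gt_of_ne hne with hlt | hgt
    · -- F < W : convert to an up-pair for a partner
      obtain ⟨q', hq'j⟩ := Fintype.exists_ne_of_one_lt_card (by omega) j
      obtain ⟨y, hyx⟩ := Fintype.exists_ne_of_one_lt_card
        (show 1 < Fintype.card A by omega) x
      set V : ℝ := (max F 0 + W) / 2 with hV
      have hFV : F < V := by
        have h1 : max F 0 < W := max_lt hlt hW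
        have h2 := le_max_left F 0
        simp only [hV]; linarith
      have hV0 : 0 < V := by
        have h2 := le_max_right F 0
        simp only [hV]; linarith
      have hVW : V < W := by
        have h1 : max F 0 < W := max_lt hlt hW
        simp only [hV]; linarith
      have hforce : ∀ s, s ≠ y → b j (sing x W) s + sing y V s <
          b j (sing x W) y + sing y V y := by
        intro s hs2
        rw [sing_self]
        have hby : b j (sing x W) y = r := by
          have := hs y; rw [if_neg hyx] at this; simpa using this
        rw [hby]
        by_cases hsx : s = x
        · rw [hsx, hbx, sing_ne (Ne.symm hyx)]
          linarith
        · have hbs : b j (sing x W) s = r := by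
            have := hs s; rw [if_neg hsx] at this; simpa using this
          rw [hbs, sing_ne hs2]
          linarith
      obtain ⟨-, h2⟩ := force hb (Ne.symm hq'j) (NNv_sing (le_of_lt hW))
        (NNv_sing (le_of_lt hV0)) hforce
      have key := h2 x
      rw [sing_self, sing_ne hyx] at key
      -- key : W + b q' (sing y V) x ≤ 0 + b q' (sing y V) y
      have hE : V < b q' (sing y V) y - b q' (sing y V) x := by linarith
      -- q' has an up-pair at (y, V); derive the universal inflation bound
      have hupq : ∀ s, s ≠ y → (b q' (sing y V) y - b q' (sing y V) x) +
          b q' (sing y V) s ≤ b q' (sing y V) y := by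
        intro s hs2
        have : b q' (sing y V) s = b q' (sing y V) x :=
          tie hb hN q' (sing y V) (NNv_sing (le_of_lt hV0))
            (by rw [sing_ne hs2, sing_ne (Ne.symm hyx)])
        rw [this]; linarith
      exact noUp hb hN hA q' y hV0 hE hupq
    · -- W < F : a direct up-pair
      have hupj : ∀ s, s ≠ x → F + b j (sing x W) s ≤ b j (sing x W) x := by
        intro s hs2
        have hbs : b j (sing x W) s = r := by
          have := hs s; rw [if_neg hs2] at this; simpa using this
        rw [hbs, hbx]; linarith
      exact noUp hb hN hA j x hW hgt hupj
  rw [hFW]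

/-- Two-point valuations are announced truthfully (up to a constant). -/
lemma step2 (hb : Star b) (hN : 2 ≤ Fintype.card N) (hA : 3 ≤ Fintype.card A) :
    ∀ (j : N) (x y : A), x ≠ y → ∀ (Y Z : ℝ), 0 < Z → Z < Y →
      ∃ c : ℝ, ∀ t, b j (dbl x y Y Z) t = dbl x y Y Z t + c := by
  intro j x y hxy Y Z hZ hZY
  haveI : Nonempty A := ⟨x⟩
  have hpin := engineA hb hN hA
  obtain ⟨i, hij'⟩ := Fintype.exists_ne_of_one_lt_card (by omega) j
  have hij : i ≠ j := hij'
  obtain ⟨r, H, K, hK0, hKH, hs⟩ := shape_dbl hb hN hA j hxy hZ hZY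
  have hbx : b j (dbl x y Y Z) x = r + H := by
    have := hs x; rw [if_pos rfl] at this; exact this
  have hby : b j (dbl x y Y Z) y = r + K := by
    have := hs y; rw [if_neg (Ne.symm hxy), if_pos rfl] at this; exact this
  have hbo : ∀ t, t ≠ x → t ≠ y → b j (dbl x y Y Z) t = r := by
    intro t h1 h2
    have := hs t; rw [if_neg h1, if_neg h2] at this; simpa using this
  obtain ⟨z₀, hz₀x, hz₀y⟩ := exists_third hA x y
  have hH0 : 0 < H := lt_trans hK0 hKH
  set w : A → ℝ := dbl x y Y Z with hw
  have hwnn : NNv w := NNv_dbl (by linarith) (le_of_lt hZ)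
  have hBsing : ∀ (z : A) (W : ℝ), 0 < W → ∀ s t : A, s ≠ z → t ≠ z →
      b i (sing z W) s = b i (sing z W) t := by
    intro z W hW s t hsz htz
    exact tie hb hN i (sing z W) (NNv_sing (le_of_lt hW))
      (by rw [sing_ne hsz, sing_ne htz])
  -- Part (a): H = Y, with helper at the off-support slot z₀
  have hHY : H = Y := by
    have low : ∀ W, max K 0 < W → W < H → W ≤ Y := by
      intro W hKW hWH
      have hW : 0 < W := lt_of_le_of_lt (le_max_right K 0) hKW
      have hKW' : K < W := lt_of_le_of_lt (le_max_left K 0) hKW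
      obtain ⟨xs, hxs⟩ := exists_argmax (fun t => b i (sing z₀ W) t + b j w t)
      obtain ⟨-, h2⟩ := star2 hb hij (sing z₀ W) w (NNv_sing (le_of_lt hW)) hwnn xs hxs
      have hpz : b i (sing z₀ W) z₀ = b i (sing z₀ W) x + W :=
        hpin i z₀ W hW x (Ne.symm hz₀x)
      have hxsx : xs = x := by
        by_contra hne
        have hlt2 : b i (sing z₀ W) xs + b j w xs < b i (sing z₀ W) x + b j w x := by
          rw [hbx]
          by_cases h1 : xs = z₀
          · rw [h1, hbo z₀ hz₀x hz₀y, hpz]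
            linarith
          · have e1 : b i (sing z₀ W) xs = b i (sing z₀ W) x :=
              hBsing z₀ W hW xs x h1 (Ne.symm hz₀x)
            rw [e1]
            by_cases h2' : xs = y
            · rw [h2', hby]; linarith
            · rw [hbo xs hne h2']; linarith
        exact absurd (hxs x) (not_le.mpr hlt2)
      have key := h2 z₀
      rw [hxsx] at key
      rw [hpz] at key
      have ewx : w x = Y := dbl_fst hxy Y Z
      have ewz : w z₀ = 0 := dbl_ne hz₀x hz₀y Y Z
      rw [ewx, ewz] at key
      linarith
    have high : ∀ W, H < W → W < H + 1 → Y ≤ W := by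
      intro W hHW hW1
      have hW : 0 < W := lt_trans hH0 hHW
      obtain ⟨xs, hxs⟩ := exists_argmax (fun t => b i (sing z₀ W) t + b j w t)
      obtain ⟨-, h2⟩ := star2 hb hij (sing z₀ W) w (NNv_sing (le_of_lt hW)) hwnn xs hxs
      have hpz : b i (sing z₀ W) z₀ = b i (sing z₀ W) x + W :=
        hpin i z₀ W hW x (Ne.symm hz₀x)
      have hxsz : xs = z₀ := by
        by_contra hne
        have hlt2 : b i (sing z₀ W) xs + b j w xs < b i (sing z₀ W) z₀ + b j w z₀ := by
          rw [hbo z₀ hz₀x hz₀y, hpz]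
          have e1 : b i (sing z₀ W) xs = b i (sing z₀ W) x :=
            hBsing z₀ W hW xs x hne (Ne.symm hz₀x)
          rw [e1]
          by_cases h1 : xs = x
          · rw [h1, hbx]; linarith
          · by_cases h2' : xs = y
            · rw [h2', hby]; linarith
            · rw [hbo xs h1 h2']; linarith
        exact absurd (hxs z₀) (not_le.mpr hlt2)
      have key := h2 x
      rw [hxsz] at key
      rw [hpz] at key
      have ewx : w x = Y := dbl_fst hxy Y Z
      have ewz : w z₀ = 0 := dbl_ne hz₀x hz₀y Y Z
      rw [ewx, ewz] at key
      linarith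
    have hle : H ≤ Y := sup_trick (max_lt hKH hH0) low
    have hge : Y ≤ H := inf_trick (lt_add_one H) high
    linarith
  -- Part (b): H - K = Y - Z, with the co-located helper at y
  have hHK : H - K = Y - Z := by
    have low : ∀ W, 0 < W → W < H - K → W ≤ Y - Z := by
      intro W hW hWHK
      obtain ⟨xs, hxs⟩ := exists_argmax (fun t => b i (sing y W) t + b j w t)
      obtain ⟨-, h2⟩ := star2 hb hij (sing y W) w (NNv_sing (le_of_lt hW)) hwnn xs hxs
      have hpz : b i (sing y W) y = b i (sing y W) x + W :=
        hpin i y W hW x hxy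
      have hxsx : xs = x := by
        by_contra hne
        have hlt2 : b i (sing y W) xs + b j w xs < b i (sing y W) x + b j w x := by
          rw [hbx]
          by_cases h1 : xs = y
          · rw [h1, hby, hpz]
            linarith
          · have e1 : b i (sing y W) xs = b i (sing y W) x :=
              hBsing y W hW xs x h1 hxy
            rw [e1]
            by_cases h2' : xs = x
            · exact absurd h2' hne
            · rw [hbo xs h2' h1]; linarith
        exact absurd (hxs x) (not_le.mpr hlt2)
      have key := h2 y
      rw [hxsx] at key
      rw [hpz] at key
      have ewx : w x = Y := dbl_fst hxy Y Z
      have ewy : w y = Z := dbl_snd hxy Y Z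
      rw [ewx, ewy] at key
      linarith
    have high : ∀ W, H - K < W → W < H - K + 1 → Y - Z ≤ W := by
      intro W hHKW hW1
      have hW : 0 < W := lt_trans (by linarith) hHKW
      obtain ⟨xs, hxs⟩ := exists_argmax (fun t => b i (sing y W) t + b j w t)
      obtain ⟨-, h2⟩ := star2 hb hij (sing y W) w (NNv_sing (le_of_lt hW)) hwnn xs hxs
      have hpz : b i (sing y W) y = b i (sing y W) x + W :=
        hpin i y W hW x hxy
      have hxsy : xs = y := by
        by_contra hne
        have hlt2 : b i (sing y W) xs + b j w xs < b i (sing y W) y + b j w y := by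
          rw [hby, hpz]
          by_cases h1 : xs = x
          · rw [h1, hbx]; linarith
          · have e1 : b i (sing y W) xs = b i (sing y W) x :=
              hBsing y W hW xs x hne hxy
            rw [e1, hbo xs h1 hne]
            linarith
        exact absurd (hxs y) (not_le.mpr hlt2)
      have key := h2 x
      rw [hxsy] at key
      rw [hpz] at key
      have ewx : w x = Y := dbl_fst hxy Y Z
      have ewy : w y = Z := dbl_snd hxy Y Z
      rw [ewx, ewy] at key
      linarith
    have hle : H - K ≤ Y - Z := sup_trick (by linarith : (0:ℝ) < H - K) low
    have hge : Y - Z ≤ H - K := inf_trick (lt_add_one (H - K)) high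
    linarith
  refine ⟨r, fun t => ?_⟩
  by_cases h1 : t = x
  · rw [h1, hbx, show w x = Y from dbl_fst hxy Y Z]; linarith
  · by_cases h2 : t = y
    · rw [h2, hby, show w y = Z from dbl_snd hxy Y Z]; linarith
    · rw [hbo t h1 h2, show w t = 0 from dbl_ne h1 h2 Y Z]; linarith

/-- Full pinning from two-point pinning: everyone announces a shift of the truth. -/
lemma leverage (hb : Star b) (hN : 2 ≤ Fintype.card N) (hA : 3 ≤ Fintype.card A) :
    ∀ (i : N) (v : A → ℝ), NNv v → ∀ x y : A, v x - v y ≤ b i v x - b i v y := by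
  intro i v hv x y
  by_cases hxy : x = y
  · subst hxy; simp
  haveI : Nonempty A := ⟨x⟩
  obtain ⟨j, hji⟩ := Fintype.exists_ne_of_one_lt_card (by omega) i
  have hij : i ≠ j := Ne.symm hji
  obtain ⟨tm, htm⟩ := exists_argmax (b i v)
  have aux : ∀ ε : ℝ, 0 < ε → b i v x - b i v y + ε ≠ 0 →
      v x - v y ≤ b i v x - b i v y + ε := by
    intro ε hε hne
    set t' : ℝ := b i v x - b i v y + ε with ht'
    set M₁ : ℝ := 1 + b i v tm - b i v x with hM₁
    set M₂ : ℝ := M₁ + t' with hM₂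
    have hM₁0 : 0 < M₁ := by have := htm x; simp only [hM₁]; linarith
    have hM₂0 : 0 < M₂ := by
      have := htm y; simp only [hM₂, hM₁, ht']; linarith
    have hM12 : M₁ ≠ M₂ := by
      intro h
      apply hne
      have : t' = 0 := by simp only [hM₂] at h; linarith
      simpa [ht'] using this
    set u : A → ℝ := dbl x y M₁ M₂ with hu
    have hunn : NNv u := NNv_dbl (le_of_lt hM₁0) (le_of_lt hM₂0)
    have hux : u x = M₁ := dbl_fst hxy _ _
    have huy : u y = M₂ := dbl_snd hxy _ _
    have huo : ∀ t, t ≠ x → t ≠ y → u t = 0 := fun t h1 h2 => dbl_ne h1 h2 _ _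
    have hpinned : ∃ c : ℝ, ∀ t, b j u t = u t + c := by
      rcases lt_or_gt_of_ne hM12 with hlt | hgt
      · have hu' : u = dbl y x M₂ M₁ := by
          funext t
          by_cases h1 : t = x
          · rw [h1, hux, dbl_snd (Ne.symm hxy)]
          · by_cases h2 : t = y
            · rw [h2, huy, dbl_fst (Ne.symm hxy)]
            · rw [huo t h1 h2, dbl_ne h2 h1]
        obtain ⟨c, hc⟩ := step2 hb hN hA j y x (Ne.symm hxy) M₂ M₁ hM₁0 hlt
        exact ⟨c, fun t => by rw [hu']; exact hc t⟩
      · exact step2 hb hN hA j x y hxy M₁ M₂ hM₂0 hgt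
    obtain ⟨c, hc⟩ := hpinned
    have hTy : ∀ t, b i v t + b j u t ≤ b i v y + b j u y := by
      intro t
      rw [hc t, hc y, huy]
      by_cases h1 : t = x
      · rw [h1, hux]
        simp only [hM₂]
        have : b i v x + M₁ + c ≤ b i v y + (M₁ + t') + c := by
          simp only [ht']; linarith
        linarith
      · by_cases h2 : t = y
        · rw [h2, huy]
        · rw [huo t h1 h2]
          have h3 := htm t
          simp only [hM₂, hM₁, ht']
          linarith
    obtain ⟨h1, -⟩ := star2 hb hij v u hv hunn y hTy
    have key := h1 x
    rw [hc x, hc y, hux, huy] at key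
    simp only [hM₂] at key
    simp only [ht'] at key
    linarith
  have main : ∀ ε : ℝ, 0 < ε → v x - v y ≤ b i v x - b i v y + ε := by
    intro ε hε
    by_cases hz : b i v x - b i v y + ε = 0
    · have h2 : b i v x - b i v y + ε / 2 ≠ 0 := by
        intro h; rw [← h] at hz; linarith
      have := aux (ε / 2) (by linarith) h2
      linarith
    · exact aux ε hε hz
  exact le_of_forall_pos_le_add main

/-- The conclusion of the theorem for `3 ≤ |A|`. -/
lemma shiftA (hb : Star b) (hN : 2 ≤ Fintype.card N) (hA : 3 ≤ Fintype.card A) (i : N) :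
    ∃ f : (A → ℝ) → ℝ, ∀ v : A → ℝ, (∀ a, 0 ≤ v a) → ∀ a : A, b i v a = v a + f v := by
  haveI : Nonempty A := Fintype.card_pos_iff.mp (by omega)
  set a₀ := Classical.arbitrary A with ha₀
  refine ⟨fun v => b i v a₀ - v a₀, fun v hv a => ?_⟩
  show b i v a = v a + (b i v a₀ - v a₀)
  have h1 := leverage hb hN hA i v hv a a₀
  have h2 := leverage hb hN hA i v hv a₀ a
  linarith

end EngineA

section EngineB

variable [DecidableEq A] {b : N → (A → ℝ) → A → ℝ}

/-- A valuation with a prescribed difference across the two alternatives. -/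
def vt (x y : A) (t : ℝ) : A → ℝ := fun a => if a = x then max t 0 else if a = y then max (-t) 0 else 0

lemma vt_nn (x y : A) (t : ℝ) : NNv (vt x y t) := by
  intro a; unfold vt; split_ifs <;> simp [le_max_right]

lemma vt_dv {x y : A} (hxy : x ≠ y) (t : ℝ) : vt x y t x - vt x y t y = t := by
  unfold vt
  rw [if_pos rfl, if_neg (Ne.symm hxy), if_pos rfl]
  rcases le_total 0 t with h | h
  · rw [max_eq_left h, max_eq_right (by linarith)]; ring
  · rw [max_eq_right h, max_eq_left (by linarith)]; ring

lemma exists_thirdN (hN : 3 ≤ Fintype.card N) (x z : N) : ∃ y : N, y ≠ x ∧ y ≠ z := by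
  by_contra hcon
  push_neg at hcon
  have hsub : (Finset.univ : Finset N) ⊆ {x, z} := by
    intro t _
    rcases eq_or_ne t x with rfl | htx
    · simp
    · simp [hcon t htx]
  have := Finset.card_le_card hsub
  have hle : Finset.card ({x, z} : Finset N) ≤ 2 :=
    (Finset.card_insert_le _ _).trans (by simp)
  rw [Finset.card_univ] at this
  omega

/-- Pair alignment: if agent `i`'s own condition is strictly positive then agent `j`'s
condition is nonnegative. -/
lemma pairB_main (hb : Star b) {x y : A} (hcov : ∀ t : A, t = x ∨ t = y)
    {i j : N} (hij : i ≠ j) (u w : A → ℝ) (hu : NNv u) (hw : NNv w)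
    (h : 0 < (b i u x - b i u y) + (w x - w y)) :
    0 ≤ (u x - u y) + (b j w x - b j w y) := by
  rcases lt_trichotomy ((b i u x - b i u y) + (b j w x - b j w y)) 0 with hs | hs | hs
  · -- total negative: y is the argmax, j's and i's conditions are ≤ 0 at scale
    have hy : ∀ t, b i u t + b j w t ≤ b i u y + b j w y := by
      intro t
      rcases hcov t with h' | h'
      · rw [h']; linarith
      · rw [h']
    obtain ⟨-, h2⟩ := star2 hb hij u w hu hw y hy
    have := h2 x
    linarith
  · -- total zero: both x and y are argmaxes, i's condition is an equality
    have hy : ∀ t, b i u t + b j w t ≤ b i u y + b j w y := by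
      intro t
      rcases hcov t with h' | h'
      · rw [h']; linarith
      · rw [h']
    obtain ⟨-, h2⟩ := star2 hb hij u w hu hw y hy
    have := h2 x
    linarith
  · -- total positive: x is the argmax
    have hx : ∀ t, b i u t + b j w t ≤ b i u x + b j w x := by
      intro t
      rcases hcov t with h' | h'
      · rw [h']
      · rw [h']; linarith
    obtain ⟨h1, -⟩ := star2 hb hij u w hu hw x hx
    have := h1 y
    linarith

/-- Triple alignment: if the middle agent's own condition is strictly positive then the
last agent's condition is nonnegative. -/
lemma tripleB_main (hb : Star b) {x y : A} (hcov : ∀ t : A, t = x ∨ t = y)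
    {m r q : N} (hmr : m ≠ r) (hmq : m ≠ q) (hrq : r ≠ q)
    (u w s : A → ℝ) (hu : NNv u) (hw : NNv w) (hs : NNv s)
    (h : 0 < (b m u x - b m u y) + (w x - w y) + (b q s x - b q s y)) :
    0 ≤ (b m u x - b m u y) + (b r w x - b r w y) + (s x - s y) := by
  rcases lt_trichotomy ((b m u x - b m u y) + (b r w x - b r w y) + (b q s x - b q s y)) 0
    with hsum | hsum | hsum
  · have hy : ∀ t, b m u t + b r w t + b q s t ≤ b m u y + b r w y + b q s y := by
      intro t
      rcases hcov t with h' | h'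
      · rw [h']; linarith
      · rw [h']
    obtain ⟨-, h2, -⟩ := star3 hb hmr hmq hrq u w s hu hw hs y hy
    have := h2 x
    linarith
  · have hy : ∀ t, b m u t + b r w t + b q s t ≤ b m u y + b r w y + b q s y := by
      intro t
      rcases hcov t with h' | h'
      · rw [h']; linarith
      · rw [h']
    obtain ⟨-, h2, -⟩ := star3 hb hmr hmq hrq u w s hu hw hs y hy
    have := h2 x
    linarith
  · have hx : ∀ t, b m u t + b r w t + b q s t ≤ b m u x + b r w x + b q s x := by
      intro t
      rcases hcov t with h' | h'
      · rw [h']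
      · rw [h']; linarith
    obtain ⟨-, -, h3⟩ := star3 hb hmr hmq hrq u w s hu hw hs x hx
    have := h3 y
    linarith

/-- No agent over-announces a positive difference (two alternatives, three agents). -/
lemma B_up (hb : Star b) (hN3 : 3 ≤ Fintype.card N) {x y : A} (hxy : x ≠ y)
    (hcov : ∀ t : A, t = x ∨ t = y) (p : N) (vs : A → ℝ) (hvs : NNv vs)
    (hX : 0 < vs x - vs y) (hXd : vs x - vs y < b p vs x - b p vs y) : False := by
  have hN : 2 ≤ Fintype.card N := by omega
  set X : ℝ := vs x - vs y with hXdef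
  set d : ℝ := b p vs x - b p vs y with hddef
  have hd : 0 < d := lt_trans hX hXd
  -- sign lemmas
  have sgn_pos : ∀ (m : N) (u : A → ℝ), NNv u → 0 < u x - u y →
      0 < b m u x - b m u y := by
    intro m u hu h
    have := mono hb hN m u hu (show u y < u x by linarith)
    linarith
  have sgn_neg : ∀ (m : N) (u : A → ℝ), NNv u → u x - u y < 0 →
      b m u x - b m u y < 0 := by
    intro m u hu h
    have := mono hb hN m u hu (show u x < u y by linarith)
    linarith
  -- L1 : partners of p are compressed on (-d, 0)
  have L1 : ∀ m : N, m ≠ p → ∀ u : A → ℝ, NNv u → -d < u x - u y → u x - u y < 0 →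
      -X ≤ b m u x - b m u y := by
    intro m hmp u hu h1 h2
    have key := pairB_main hb hcov (Ne.symm hmp) vs u hvs hu
      (by rw [← hddef]; linarith)
    rw [← hXdef] at key
    linarith
  -- L2a : p is inflated on the window
  have L2a : ∀ w : A → ℝ, NNv w → X < w x - w y → w x - w y < d →
      d ≤ b p w x - b p w y := by
    intro w hw h1 h2
    obtain ⟨m₀, hm₀p⟩ := Fintype.exists_ne_of_one_lt_card (by omega) p
    have key : ∀ V, 0 < V → V < d → V ≤ b p w x - b p w y := by
      intro V hV0 hVd
      set u : A → ℝ := vt x y (-V) with hu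
      have hudv : u x - u y = -V := vt_dv hxy (-V)
      have hunn : NNv u := vt_nn x y (-V)
      have he := L1 m₀ hm₀p u hunn (by rw [hudv]; linarith) (by rw [hudv]; linarith)
      have key2 := pairB_main hb hcov hm₀p u w hunn hw (by linarith)
      rw [hudv] at key2
      linarith
    have := sup_trick hd key
    linarith
  -- L2b : every agent is inflated on the window
  have L2b : ∀ (m : N) (w : A → ℝ), NNv w → X < w x - w y → w x - w y < d →
      d ≤ b m w x - b m w y := by
    intro m w hw h1 h2
    by_cases hmp : m = p
    · rw [hmp]; exact L2a w hw h1 h2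
    · obtain ⟨q', hq'p, hq'm⟩ := exists_thirdN hN3 p m
      have key : ∀ V, X < V → V < d → V ≤ b m w x - b m w y := by
        intro V hXV hVd
        set u : A → ℝ := vt x y (-V) with hu
        have hudv : u x - u y = -V := vt_dv hxy (-V)
        have hunn : NNv u := vt_nn x y (-V)
        have he := L1 q' hq'p u hunn (by rw [hudv]; linarith) (by rw [hudv]; linarith)
        have key2 := pairB_main hb hcov hq'm u w hunn hw (by linarith)
        rw [hudv] at key2
        linarith
      have := sup_trick hXd key
      linarith
  -- L3 : extended compression, parameterized by the current inflation level
  have L3 : ∀ c : ℝ, d ≤ c →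
      (∀ (m : N) (w : A → ℝ), NNv w → X < w x - w y → w x - w y < d →
        c ≤ b m w x - b m w y) →
      ∀ (m : N) (u : A → ℝ), NNv u → -c < u x - u y → u x - u y < 0 →
        -X ≤ b m u x - b m u y := by
    intro c hdc hInfl m u hu h1 h2
    obtain ⟨m', hm'm⟩ := Fintype.exists_ne_of_one_lt_card (by omega) m
    have key : ∀ W, X < W → W < d → -(b m u x - b m u y) ≤ W := by
      intro W hXW hWd
      set w : A → ℝ := vt x y W with hw
      have hwdv : w x - w y = W := vt_dv hxy W
      have hwnn : NNv w := vt_nn x y W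
      have hG := hInfl m' w hwnn (by rw [hwdv]; exact hXW) (by rw [hwdv]; exact hWd)
      have key2 := pairB_main hb hcov hm'm w u hwnn hu (by linarith)
      rw [hwdv] at key2
      linarith
    have := inf_trick hXd key
    linarith
  -- the booster magnitude
  set u₀ : ℝ := (d - X) / 2 with hu₀
  have hu₀0 : 0 < u₀ := by simp only [hu₀]; linarith
  have hu₀d : u₀ < d := by simp only [hu₀]; linarith
  set uv : A → ℝ := vt x y (-u₀) with huv
  have huvdv : uv x - uv y = -u₀ := vt_dv hxy (-u₀)
  have huvnn : NNv uv := vt_nn x y (-u₀)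
  have hσpos : ∀ r : N, 0 < -(b r uv x - b r uv y) := by
    intro r
    have := sgn_neg r uv huvnn (by rw [huvdv]; linarith)
    linarith
  have hσle : ∀ r : N, -(b r uv x - b r uv y) ≤ X := by
    intro r
    have := L3 d (le_refl d) L2b r uv huvnn (by rw [huvdv]; linarith)
      (by rw [huvdv]; linarith)
    linarith
  haveI : Nonempty N := Fintype.card_pos_iff.mp (by omega)
  obtain ⟨r₀, -, hr₀⟩ := Finset.exists_min_image Finset.univ
    (fun r => -(b r uv x - b r uv y)) ⟨Classical.arbitrary N, Finset.mem_univ _⟩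
  set σm : ℝ := -(b r₀ uv x - b r₀ uv y) with hσm
  have hσm0 : 0 < σm := hσpos r₀
  have hσmle : ∀ r : N, σm ≤ -(b r uv x - b r uv y) :=
    fun r => hr₀ r (Finset.mem_univ r)
  -- escalation by induction
  have IND : ∀ k : ℕ, ∀ (m : N) (w : A → ℝ), NNv w → X < w x - w y → w x - w y < d →
      d + k * σm ≤ b m w x - b m w y := by
    intro k
    induction k with
    | zero => simpa using L2b
    | succ n ih =>
      intro m w hw h1 h2
      set c : ℝ := d + n * σm with hc
      have hdc : d ≤ c := by
        have : (0:ℝ) ≤ n * σm := by positivity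
        simp only [hc]; linarith
      obtain ⟨r1, hr1m⟩ := Fintype.exists_ne_of_one_lt_card (by omega) m
      obtain ⟨q1, hq1m, hq1r1⟩ := exists_thirdN hN3 m r1
      have hG : c ≤ b m w x - b m w y := ih m w hw h1 h2
      have key : ∀ V, 0 < V → V < c → V ≤ (b m w x - b m w y) - σm := by
        intro V hV0 hVc
        set u : A → ℝ := vt x y (-V) with hu
        have hudv : u x - u y = -V := vt_dv hxy (-V)
        have hunn : NNv u := vt_nn x y (-V)
        have he : -X ≤ b q1 u x - b q1 u y :=
          L3 c hdc ih q1 u hunn (by rw [hudv]; linarith) (by rw [hudv]; linarith)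
        have hρ : σm ≤ -(b r1 uv x - b r1 uv y) := hσmle r1
        have harith : 0 < (b m w x - b m w y) + (uv x - uv y) + (b q1 u x - b q1 u y) := by
          rw [huvdv]
          have : d - u₀ - X = (d - X) / 2 := by simp only [hu₀]; ring
          linarith
        have key2 := tripleB_main hb hcov (Ne.symm hr1m) (Ne.symm hq1m)
          (Ne.symm hq1r1) w uv u hw huvnn hunn harith
        rw [hudv] at key2
        linarith
      have hsup := sup_trick (lt_of_lt_of_le hd hdc) key
      push_cast
      simp only [hc] at hsup
      linarith
  -- contradiction
  set wb : A → ℝ := vt x y ((X + d) / 2) with hwb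
  have hwbdv : wb x - wb y = (X + d) / 2 := vt_dv hxy _
  have hwbnn : NNv wb := vt_nn x y _
  obtain ⟨k, hk⟩ := exists_nat_gt (((b p wb x - b p wb y) - d) / σm)
  have hkey := IND k p wb hwbnn (by rw [hwbdv]; linarith) (by rw [hwbdv]; linarith)
  have : ((b p wb x - b p wb y) - d) < k * σm := by
    rw [div_lt_iff₀ hσm0] at hk
    linarith
  linarith

/-- Differences are announced truthfully when there are two alternatives, three agents. -/
lemma B_main (hb : Star b) (hN3 : 3 ≤ Fintype.card N) {x y : A} (hxy : x ≠ y)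
    (hcov : ∀ t : A, t = x ∨ t = y) :
    ∀ (j : N) (v : A → ℝ), NNv v → b j v x - b j v y = v x - v y := by
  have hN : 2 ≤ Fintype.card N := by omega
  have hcov' : ∀ t : A, t = y ∨ t = x := fun t => (hcov t).symm
  -- core: positive differences
  have core : ∀ (x' y' : A), x' ≠ y' → (∀ t : A, t = x' ∨ t = y') →
      ∀ (j : N) (v : A → ℝ), NNv v → 0 < v x' - v y' →
        b j v x' - b j v y' = v x' - v y' := by
    intro x' y' hxy' hcov' j v hv hpos
    have hsgn : 0 < b j v x' - b j v y' := by
      have := mono hb hN j v hv (show v y' < v x' by linarith)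
      linarith
    rcases lt_trichotomy (b j v x' - b j v y') (v x' - v y') with hlt | heq | hgt
    · -- under-announcement: convert to an over-announcement by a partner
      exfalso
      obtain ⟨j', hj'j⟩ := Fintype.exists_ne_of_one_lt_card (by omega) j
      set D : ℝ := b j v x' - b j v y' with hD
      set V : ℝ := (max D 0 + (v x' - v y')) / 2 with hV
      have hDV : D < V := by
        have h1 : max D 0 < v x' - v y' := max_lt hlt hpos
        have h2 := le_max_left D 0
        simp only [hV]; linarith
      have hV0 : 0 < V := by
        have h2 := le_max_right D 0
        simp only [hV]; linarith
      have hVdv : V < v x' - v y' := by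
        have h1 : max D 0 < v x' - v y' := max_lt hlt hpos
        simp only [hV]; linarith
      set u : A → ℝ := vt x' y' (-V) with hu
      have hudv : u x' - u y' = -V := vt_dv hxy' (-V)
      have hunn : NNv u := vt_nn x' y' (-V)
      -- j' must respond with a large negative difference
      have hneg : (v x' - v y') + (b j' u x' - b j' u y') ≤ 0 := by
        by_contra hcon
        push_neg at hcon
        have key := pairB_main hb hcov' hj'j u v hunn hv (by linarith)
        rw [hudv] at key
        have hDV' : b j v x' - b j v y' < V := hDV
        linarith
      -- so j' over-announces in the reversed orientation
      have hover : u y' - u x' < b j' u y' - b j' u x' := by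
        have h1 : b j' u x' - b j' u y' ≤ -(v x' - v y') := by linarith
        have : u y' - u x' = V := by rw [show u y' - u x' = -(u x' - u y') by ring, hudv]; ring
        rw [this]
        linarith
      exact B_up hb hN3 (Ne.symm hxy') (fun t => (hcov' t).symm) j' u hunn
        (by rw [show u y' - u x' = -(u x' - u y') by ring, hudv]; linarith) hover
    · exact heq
    · exact absurd (B_up hb hN3 hxy' hcov' j v hv hpos hgt) (fun h => h)
  intro j v hv
  rcases lt_trichotomy (v x - v y) 0 with hneg | hzero | hpos
  · have := core y x (Ne.symm hxy) hcov' j v hv (by linarith)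
    linarith
  · have hvx : v x = v y := by linarith
    have := tie hb hN j v hv hvx
    linarith
  · exact core x y hxy hcov j v hv hpos

/-- The conclusion of the theorem for `|A| = 2`, `3 ≤ n`. -/
lemma shiftB (hb : Star b) (hN3 : 3 ≤ Fintype.card N) (hA2 : Fintype.card A = 2) (i : N) :
    ∃ f : (A → ℝ) → ℝ, ∀ v : A → ℝ, (∀ a, 0 ≤ v a) → ∀ a : A, b i v a = v a + f v := by
  have hA2' : Nat.card A = 2 := by rw [Nat.card_eq_fintype_card]; exact hA2
  obtain ⟨x, y, hxy, huniv⟩ := Nat.card_eq_two_iff.mp hA2'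
  have hcov : ∀ t : A, t = x ∨ t = y := by
    intro t
    have : t ∈ ({x, y} : Set A) := by rw [huniv]; trivial
    simpa using this
  refine ⟨fun v => b i v y - v y, fun v hv a => ?_⟩
  show b i v a = v a + (b i v y - v y)
  rcases hcov a with rfl | rfl
  · have := B_main hb hN3 hxy hcov i v hv
    linarith
  · ring

end EngineB

end Stmt2Proof

/-- For nonnegative valuations, the ex-post equilibria of the class of VCG games are
exactly the nearly truth telling strategy profiles. -/
theorem stmt2 [Fintype N] [DecidableEq N] [Fintype A]
    (hcard : (2 ≤ Fintype.card N ∧ 2 < Fintype.card A) ∨ 3 ≤ Fintype.card N)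
    (b : N → (A → ℝ) → A → ℝ) :
    ExPostClass (fun _ : N => {v : A → ℝ | ∀ a, 0 ≤ v a}) b ↔
      ∀ i : N, ∃ f : (A → ℝ) → ℝ, ∀ v : A → ℝ, (∀ a, 0 ≤ v a) →
        ∀ a : A, b i v a = v a + f v := by
  classical
  constructor
  · intro hepc
    have hstar := Stmt2Proof.epc_star hepc
    intro i
    rcases le_or_gt (Fintype.card A) 1 with hA1 | hA1
    · -- at most one alternative: trivial
      haveI := Fintype.card_le_one_iff_subsingleton.mp hA1
      by_cases hne : Nonempty A
      · obtain ⟨a₀⟩ := hne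
        refine ⟨fun v => b i v a₀ - v a₀, fun v hv a => ?_⟩
        show b i v a = v a + (b i v a₀ - v a₀)
        have ha : a = a₀ := Subsingleton.elim a a₀
        rw [ha]; ring
      · exact ⟨fun _ => 0, fun v hv a => absurd ⟨a⟩ hne⟩
    · rcases lt_or_ge (Fintype.card A) 3 with hA2 | hA3
      · -- exactly two alternatives: need three agents
        have hA2' : Fintype.card A = 2 := by omega
        have hN3 : 3 ≤ Fintype.card N := by
          rcases hcard with ⟨-, h⟩ | h
          · omega
          · exact h
        exact Stmt2Proof.shiftB hstar hN3 hA2' i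
      · -- at least three alternatives: need two agents
        have hN2 : 2 ≤ Fintype.card N := by
          rcases hcard with ⟨h, -⟩ | h
          · exact h
          · omega
        exact Stmt2Proof.shiftA hstar hN2 hA3 i
  · exact Stmt2Proof.shift_epc
end

section
/- Let n ≥ 2, |A| ≥ 3, and let b be an ex-post equilibrium for the class of VCG games over (N,A,V). Suppose a ≠ a' are two alternatives and i ≠ j are two agents such that Z_i^{(a,s)} ∈ V_i and Z_j^{(a',s)} ∈ V_j for every s ≥ 0. Then the pair of functions g_i^{(a,a')} and g_j^{(a',a)} satisfies the mean value exclusion condition. -/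
open Finset

variable {N A : Type*}

/-- The valuation assigning value `s` to the alternative `a` and `0` to every other one. -/
noncomputable def Zval [DecidableEq A] (a : A) (s : ℝ) : A → ℝ :=
  fun x => if x = a then s else 0

/-- The pair of functions `f₁, f₂` (viewed as functions on `ℝ₊`) satisfies the
mean value exclusion condition. -/
def MVE (f₁ f₂ : ℝ → ℝ) : Prop :=
  ∀ s t y : ℝ, 0 ≤ s → 0 ≤ t → 0 ≤ y →
    (((s < y ∧ y ≤ f₁ s) ∨ (f₁ s ≤ y ∧ y < s)) → y ≠ f₂ t) ∧
    (((s < y ∧ y ≤ f₂ s) ∨ (f₂ s ≤ y ∧ y < s)) → y ≠ f₁ t)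

section Aux

variable {N A : Type*}

private lemma exists_argmax [Fintype A] [Nonempty A] (f : A → ℝ) :
    ∃ m : A, ∀ x, f x ≤ f m := by
  obtain ⟨m, -, hm⟩ := Finset.exists_max_image Finset.univ f Finset.univ_nonempty
  exact ⟨m, fun x => hm x (Finset.mem_univ x)⟩

/-- Key lemma: at any true profile, any maximizer `m` of the announced welfare of `S`
must also maximize `v i + (others' announcements)` for each `i ∈ S`. -/
private lemma key_lemma [Fintype N] [DecidableEq N] [Fintype A] [DecidableEq A] [Nonempty A]
    (V : N → Set (A → ℝ)) (b : N → (A → ℝ) → A → ℝ) (hb : ExPostClass V b)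
    (S : Finset N) (hS : S.Nonempty) (v : N → A → ℝ) (hv : ∀ j ∈ S, v j ∈ V j)
    (i : N) (hi : i ∈ S) (m : A)
    (hm : ∀ x, ∑ j ∈ S, b j (v j) x ≤ ∑ j ∈ S, b j (v j) m) (x : A) :
    v i x + ∑ j ∈ S.erase i, b j (v j) x ≤ v i m + ∑ j ∈ S.erase i, b j (v j) m := by
  classical
  set β : N → A → ℝ := fun j => b j (v j) with hβ
  set σ : A → ℝ := fun y => ∑ j ∈ S.erase i, β j y with hσ
  have hex : ∀ w : N → A → ℝ, ∃ m', ∀ y, ∑ j ∈ S, w j y ≤ ∑ j ∈ S, w j m' :=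
    fun w => exists_argmax _
  choose pick hpick using hex
  set M : (N → A → ℝ) → A := fun w => if w = β then m else pick w with hM
  have hMβ : M β = m := by rw [hM]; exact if_pos rfl
  have hmβ : ∀ z, ∑ j ∈ S, β j z ≤ ∑ j ∈ S, β j m := hm
  have hSWM : IsSWM S M := by
    intro w y
    by_cases hw : w = β
    · subst hw; rw [hMβ]; exact hmβ y
    · have hMw : M w = pick w := by rw [hM]; exact if_neg hw
      rw [hMw]; exact hpick w y
  have hVal : ValidH (fun (_ : N) (_ : N → A → ℝ) => (0:ℝ)) := fun _ _ _ _ => rfl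
  set K : ℝ := 1 + |β i x| + |σ x| + ∑ y : A, |σ y| with hK
  set d : A → ℝ := fun y => if y = x then K else 0 with hd
  set w' : N → A → ℝ := Function.update β i d with hw'
  have hsumabs : ∀ z : A, |σ z| ≤ ∑ y : A, |σ y| :=
    fun z => Finset.single_le_sum (f := fun y => |σ y|) (fun _ _ => abs_nonneg _)
      (Finset.mem_univ z)
  have hKx : β i x < K := by
    have h1 := abs_nonneg (σ x)
    have h2 := hsumabs x
    have h3 := le_abs_self (β i x)
    rw [hK]; linarith
  have hwne : w' ≠ β := by
    intro hcontra
    have hdi : d = β i := by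
      have h := congrFun hcontra i
      rwa [hw', Function.update_self] at h
    have hx2 : K = β i x := by
      have h := congrFun hdi x
      rw [hd] at h
      simpa using h
    rw [← hx2] at hKx
    exact lt_irrefl _ hKx
  have herase : ∀ y, ∑ j ∈ S.erase i, w' j y = σ y := by
    intro y
    show ∑ j ∈ S.erase i, w' j y = ∑ j ∈ S.erase i, β j y
    apply Finset.sum_congr rfl
    intro k hk
    rw [hw', Function.update_of_ne (Finset.ne_of_mem_erase hk)]
  have hsum' : ∀ y, ∑ j ∈ S, w' j y = d y + σ y := by
    intro y
    rw [← Finset.add_sum_erase S (fun j => w' j y) hi]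
    congr 1
    · rw [hw', Function.update_self]
    · exact herase y
  have hMw' : M w' = x := by
    have hMw : M w' = pick w' := by rw [hM]; exact if_neg hwne
    rw [hMw]
    by_contra hne
    have h1 := hpick w' x
    rw [hsum' x, hsum' (pick w')] at h1
    have hdx : d x = K := by rw [hd]; simp
    have hdp : d (pick w') = 0 := by rw [hd]; simp [hne]
    rw [hdx, hdp] at h1
    have h2 := hsumabs (pick w')
    have h3 := le_abs_self (σ (pick w'))
    have h4 := neg_abs_le (σ x)
    have h5 := abs_nonneg (β i x)
    rw [hK] at h1
    linarith
  have heq := hb S hS M hSWM _ hVal i hi v hv d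
  have heq' : utility S M (fun _ _ => (0:ℝ)) i (v i) w' ≤
      utility S M (fun _ _ => (0:ℝ)) i (v i) β := heq
  simp only [utility] at heq'
  rw [hMβ, hMw'] at heq'
  rw [herase x] at heq'
  have h2 : ∑ j ∈ S.erase i, β j m = σ m := rfl
  rw [h2] at heq'
  show v i x + σ x ≤ v i m + σ m
  linarith

/-- Singleton coalition: with a single-minded valuation `Zval a s`, `s > 0`,
the bid has a strict maximum at `a`. -/
private lemma strict_lemma [Fintype N] [DecidableEq N] [Fintype A] [DecidableEq A] [Nonempty A]
    (V : N → Set (A → ℝ)) (b : N → (A → ℝ) → A → ℝ) (hb : ExPostClass V b)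
    (i : N) (a : A) (s : ℝ) (hs : 0 < s) (hZ : Zval a s ∈ V i)
    (x : A) (hx : x ≠ a) : b i (Zval a s) x < b i (Zval a s) a := by
  classical
  have hkey : ∀ m', (∀ z, b i (Zval a s) z ≤ b i (Zval a s) m') →
      ∀ z, Zval a s z ≤ Zval a s m' := by
    intro m' hm' z
    have h := key_lemma V b hb {i} ⟨i, Finset.mem_singleton_self i⟩ (fun _ => Zval a s)
      (fun k hk => by rw [Finset.mem_singleton] at hk; subst hk; exact hZ)
      i (Finset.mem_singleton_self i) m'
      (fun w => by simpa using hm' w) z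
    simpa [Finset.erase_singleton] using h
  obtain ⟨m, hm0⟩ := exists_argmax (b i (Zval a s))
  have hm : ∀ z, b i (Zval a s) z ≤ b i (Zval a s) m := hm0
  have hma : m = a := by
    by_contra h
    have h1 := hkey m hm a
    simp [Zval, h] at h1
    linarith
  by_contra hle
  push_neg at hle
  have hxmax : ∀ z, b i (Zval a s) z ≤ b i (Zval a s) x := fun z => (hm z).trans (hma ▸ hle)
  have h1 := hkey x hxmax a
  simp [Zval, hx] at h1
  linarith

/-- Pair coalition `{i,j}` with single-minded valuations: any welfare maximizer `m`
also maximizes each agent's true valuation plus the other's bid. -/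
private lemma pair_lemma [Fintype N] [DecidableEq N] [Fintype A] [DecidableEq A] [Nonempty A]
    (V : N → Set (A → ℝ)) (b : N → (A → ℝ) → A → ℝ) (hb : ExPostClass V b)
    (a a' : A) (i j : N) (hij : i ≠ j)
    (s t : ℝ) (hZi : Zval a s ∈ V i) (hZj : Zval a' t ∈ V j) (m : A)
    (hm : ∀ y, b i (Zval a s) y + b j (Zval a' t) y ≤
      b i (Zval a s) m + b j (Zval a' t) m) :
    (∀ y, Zval a s y + b j (Zval a' t) y ≤ Zval a s m + b j (Zval a' t) m) ∧
    (∀ y, Zval a' t y + b i (Zval a s) y ≤ Zval a' t m + b i (Zval a s) m) := by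
  classical
  set v : N → A → ℝ := fun k => if k = i then Zval a s else Zval a' t with hvdef
  have hvi : v i = Zval a s := by rw [hvdef]; simp
  have hvj : v j = Zval a' t := by rw [hvdef]; simp [hij.symm]
  have hv : ∀ k ∈ ({i, j} : Finset N), v k ∈ V k := by
    intro k hk
    rcases Finset.mem_insert.mp hk with hk | hk
    · subst hk; rw [hvi]; exact hZi
    · rw [Finset.mem_singleton] at hk; subst hk; rw [hvj]; exact hZj
  have hsum : ∀ y, ∑ k ∈ ({i, j} : Finset N), b k (v k) y
      = b i (Zval a s) y + b j (Zval a' t) y := by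
    intro y; rw [Finset.sum_pair hij, hvi, hvj]
  have hei : ({i, j} : Finset N).erase i = {j} := by
    rw [show ({i, j} : Finset N) = insert i {j} from rfl,
      Finset.erase_insert (by simp [hij])]
  have hej : ({i, j} : Finset N).erase j = {i} := by
    rw [show ({i, j} : Finset N) = insert i {j} from rfl,
      Finset.erase_insert_of_ne hij]
    simp
  constructor
  · intro y
    have h := key_lemma V b hb {i, j} ⟨i, by simp⟩ v hv i (by simp) m
      (fun w => by rw [hsum w, hsum m]; exact hm w) y
    rw [hei, hvi] at h
    simpa [hvj] using h
  · intro y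
    have h := key_lemma V b hb {i, j} ⟨i, by simp⟩ v hv j (by simp) m
      (fun w => by rw [hsum w, hsum m]; exact hm w) y
    rw [hej, hvj] at h
    simpa [hvi] using h

private lemma main_half [Fintype N] [DecidableEq N] [Fintype A] [DecidableEq A] [Nonempty A]
    (V : N → Set (A → ℝ)) (b : N → (A → ℝ) → A → ℝ) (hb : ExPostClass V b)
    (a a' : A) (haa : a ≠ a') (i j : N) (hij : i ≠ j)
    (hZi : ∀ s : ℝ, 0 ≤ s → Zval a s ∈ V i)
    (hZj : ∀ s : ℝ, 0 ≤ s → Zval a' s ∈ V j)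
    (s t y : ℝ) (hs : 0 ≤ s) (ht : 0 ≤ t) (hy : 0 ≤ y)
    (hcase : (s < y ∧ y ≤ b i (Zval a s) a - b i (Zval a s) a') ∨
             (b i (Zval a s) a - b i (Zval a s) a' ≤ y ∧ y < s)) :
    y ≠ b j (Zval a' t) a' - b j (Zval a' t) a := by
  classical
  intro hgy
  obtain ⟨m, hm0⟩ := exists_argmax (fun z => b i (Zval a s) z + b j (Zval a' t) z)
  have hm : ∀ z, b i (Zval a s) z + b j (Zval a' t) z ≤
      b i (Zval a s) m + b j (Zval a' t) m := hm0
  obtain ⟨hfi, hfj⟩ := pair_lemma V b hb a a' i j hij s t (hZi s hs) (hZj t ht) m hm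
  rcases hcase with ⟨hsy, hyg⟩ | ⟨hgy', hys⟩
  · -- Case A : s < y ≤ g₁ s, and y = g₂ t
    by_cases hs0 : 0 < s
    · have hma : m ≠ a := by
        intro h
        have h1 := hfi a'
        rw [h] at h1
        simp [Zval, Ne.symm haa] at h1
        linarith
      have hma' : m = a' := by
        by_contra h
        have h1 := hfj a
        have h2 := strict_lemma V b hb i a s hs0 (hZi s hs) m hma
        simp [Zval, haa, h] at h1
        linarith
      have hm' : ∀ z, b i (Zval a s) z + b j (Zval a' t) z ≤
          b i (Zval a s) a + b j (Zval a' t) a := by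
        intro z
        have h3 := hm z
        rw [hma'] at h3
        linarith
      obtain ⟨hfi', -⟩ := pair_lemma V b hb a a' i j hij s t (hZi s hs) (hZj t ht) a hm'
      have h1 := hfi' a'
      simp [Zval, Ne.symm haa] at h1
      linarith
    · -- s = 0
      have hs0' : s = 0 := le_antisymm (not_lt.mp hs0) hs
      subst hs0'
      have hεlem : ∀ ε : ℝ, 0 < ε → b i (Zval a 0) a ≤ ε + b i (Zval a 0) a' := by
        intro ε hε
        obtain ⟨m2, hm20⟩ := exists_argmax (fun z => b i (Zval a 0) z + b j (Zval a' ε) z)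
        have hm2 : ∀ z, b i (Zval a 0) z + b j (Zval a' ε) z ≤
            b i (Zval a 0) m2 + b j (Zval a' ε) m2 := hm20
        obtain ⟨hfi2, hfj2⟩ := pair_lemma V b hb a a' i j hij 0 ε
          (hZi 0 le_rfl) (hZj ε hε.le) m2 hm2
        have hm2a' : m2 = a' := by
          by_contra h
          have h1 := hfi2 a'
          have h2 := strict_lemma V b hb j a' ε hε (hZj ε hε.le) m2 h
          simp [Zval] at h1
          linarith
        have h1 := hfj2 a
        rw [hm2a'] at h1
        simp [Zval, haa] at h1
        linarith
      have hfin := hεlem ((b i (Zval a 0) a - b i (Zval a 0) a') / 2) (by linarith)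
      linarith
  · -- Case B : g₁ s ≤ y < s, and y = g₂ t
    have hs0 : 0 < s := lt_of_le_of_lt hy hys
    have hma' : m ≠ a' := by
      intro h
      have h1 := hfi a
      rw [h] at h1
      simp [Zval, Ne.symm haa] at h1
      linarith
    have hma : m = a := by
      by_contra h
      have h1 := hfj a
      have h2 := strict_lemma V b hb i a s hs0 (hZi s hs) m h
      simp [Zval, haa, hma'] at h1
      linarith
    have hm' : ∀ z, b i (Zval a s) z + b j (Zval a' t) z ≤
        b i (Zval a s) a' + b j (Zval a' t) a' := by
      intro z
      have h3 := hm z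
      rw [hma] at h3
      linarith
    obtain ⟨hfi', -⟩ := pair_lemma V b hb a a' i j hij s t (hZi s hs) (hZj t ht) a' hm'
    have h1 := hfi' a
    simp [Zval, Ne.symm haa] at h1
    linarith

end Aux

/-- In an ex-post equilibrium (with `n ≥ 2`, `|A| ≥ 3`), for agents `i ≠ j` and
alternatives `a ≠ a'` whose single-minded valuations lie in the valuation sets,
the functions `g_i^{(a,a')}` and `g_j^{(a',a)}` satisfy mean value exclusion. -/
theorem stmt11 [Fintype N] [DecidableEq N] [Fintype A] [DecidableEq A]
    (hn : 2 ≤ Fintype.card N) (hA : 3 ≤ Fintype.card A)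
    (V : N → Set (A → ℝ)) (b : N → (A → ℝ) → A → ℝ)
    (hb : ExPostClass V b)
    (a a' : A) (haa : a ≠ a') (i j : N) (hij : i ≠ j)
    (hZi : ∀ s : ℝ, 0 ≤ s → Zval a s ∈ V i)
    (hZj : ∀ s : ℝ, 0 ≤ s → Zval a' s ∈ V j) :
    MVE (fun s => b i (Zval a s) a - b i (Zval a s) a')
        (fun s => b j (Zval a' s) a' - b j (Zval a' s) a) := by
  have hNA : Nonempty A := Fintype.card_pos_iff.mp (by omega)
  intro s t y hs ht hy
  constructor
  · exact main_half V b hb a a' haa i j hij hZi hZj s t y hs ht hy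
  · exact main_half V b hb a' a haa.symm j i hij.symm hZj hZi s t y hs ht hy
end

section
/- Let n ≥ 3, |A| ≥ 3, and let b be an ex-post equilibrium for the class of VCG games over (N,A,(ℝ₊^A)^n). Then b_i(Z_i^{(a,s)})(a) − b_i(Z_i^{(a,s)})(a') = s for every agent i, every s ≥ 0, and all alternatives a, a' ∈ A with a' ≠ a. -/
/-!
Test the ex-post condition, with zero transfers, against a welfare maximiser that picks a given
maximiser `y` at the truthful profile and the unique winner `x` after agent `i` deviates: it
shows that `y` also maximises `vᵢ + ∑_{j ≠ i} bⱼ(vⱼ)`. For a lone agent this makes the bid on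
`Z^{(a,s)}` strictly favour `a`. Hence when one agent holds `Z^{(a,s)}` and the others hold
valuations `Z^{(a',·)}`, the welfare winner is `a` or `a'`, and either case bounds the bid gaps
by the values. With two agents the gaps must err in opposite directions; a third agent on `a'`
then excludes overbidding, and once overbidding is gone the two-agent case excludes
underbidding.
-/

open Finset

variable {N A : Type*}

theorem exists_ne_ne_of_three_le_card [Fintype N] (hn : 3 ≤ Fintype.card N) (i : N) :
    ∃ j l : N, i ≠ j ∧ i ≠ l ∧ j ≠ l := by
  classical
  have : 1 < (univ.erase i).card := by rw [card_erase_of_mem (mem_univ i), card_univ]; omega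
  obtain ⟨j, l, hj, hl, hjl⟩ := one_lt_card_iff.1 this
  exact ⟨j, l, (ne_of_mem_erase hj).symm, (ne_of_mem_erase hl).symm, hjl⟩

theorem exists_isSWM [Finite A] [Nonempty A] (S : Finset N) :
    ∃ M : (N → A → ℝ) → A, IsSWM S M := by
  choose M hM using fun w : N → A → ℝ => Finite.exists_max fun z => ∑ j ∈ S, w j z
  exact ⟨M, hM⟩

open Classical in
theorem IsSWM.update {S : Finset N} {M : (N → A → ℝ) → A} (hM : IsSWM S M)
    {w : N → A → ℝ} {y : A} (hy : ∀ z, ∑ j ∈ S, w j z ≤ ∑ j ∈ S, w j y) :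
    IsSWM S (Function.update M w y) := by
  intro w' z
  rcases eq_or_ne w' w with rfl | hw
  · simpa using hy z
  · simpa [Function.update_of_ne hw] using hM w' z

theorem IsSWM.eq_of_forall_lt {S : Finset N} {M : (N → A → ℝ) → A} (hM : IsSWM S M)
    {w : N → A → ℝ} {x : A} (hx : ∀ z ≠ x, ∑ j ∈ S, w j z < ∑ j ∈ S, w j x) : M w = x := by
  by_contra h
  exact (hM w x).not_gt (hx _ h)

section ExPost

variable [DecidableEq N] {V : N → Set (A → ℝ)} {b : N → (A → ℝ) → A → ℝ}

theorem ExPostClass.value_add_sum_erase_le [Finite A] (hb : ExPostClass V b) {S : Finset N}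
    {i : N} (hi : i ∈ S) {v : N → A → ℝ} (hv : ∀ j ∈ S, v j ∈ V j) {y : A}
    (hy : ∀ z, ∑ j ∈ S, b j (v j) z ≤ ∑ j ∈ S, b j (v j) y) (x : A) :
    v i x + ∑ j ∈ S.erase i, b j (v j) x ≤ v i y + ∑ j ∈ S.erase i, b j (v j) y := by
  classical
  have : Nonempty A := ⟨x⟩
  obtain ⟨M₀, hM₀⟩ := exists_isSWM (A := A) S
  set β : N → A → ℝ := fun j => b j (v j) with hβ
  set C : A → ℝ := fun z => ∑ j ∈ S.erase i, β j z
  -- Announcing `1_x - C` makes `x` the unique maximiser of the announced welfare.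
  set d : A → ℝ := fun z => (if z = x then 1 else 0) - C z
  have hC : ∀ z, ∑ j ∈ S.erase i, Function.update β i d j z = C z := fun z =>
    sum_congr rfl fun j hj => by rw [Function.update_of_ne (ne_of_mem_erase hj)]
  have hwin : Function.update M₀ β y (Function.update β i d) = x := by
    refine (hM₀.update hy).eq_of_forall_lt fun z hz => ?_
    rw [← add_sum_erase _ _ hi, ← add_sum_erase _ _ hi, hC, hC]
    simp [d, hz]
  have := hb S ⟨i, hi⟩ _ (hM₀.update hy) (fun _ _ => 0) (fun _ _ _ _ => rfl) i hi v hv d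
  simpa only [utility, ← hβ, hwin, hC, Function.update_self, sub_zero] using this

theorem ExPostClass.value_sub_bid_add_welfare_le [Finite A] (hb : ExPostClass V b)
    {S : Finset N} {i : N} (hi : i ∈ S) {v : N → A → ℝ} (hv : ∀ j ∈ S, v j ∈ V j) {y : A}
    (hy : ∀ z, ∑ j ∈ S, b j (v j) z ≤ ∑ j ∈ S, b j (v j) y) (x : A) :
    v i x - b i (v i) x + ∑ j ∈ S, b j (v j) x ≤ v i y - b i (v i) y + ∑ j ∈ S, b j (v j) y := by
  have := hb.value_add_sum_erase_le hi hv hy x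
  rw [sum_erase_eq_sub hi, sum_erase_eq_sub hi] at this
  linarith

theorem ExPostClass.bid_lt_of_forall_lt [Finite A] (hb : ExPostClass V b) {i : N}
    {v : A → ℝ} (hv : v ∈ V i) {x : A} (hx : ∀ z ≠ x, v z < v x) {z : A} (hz : z ≠ x) :
    b i v z < b i v x := by
  have : Nonempty A := ⟨x⟩
  have hmax : ∀ y, (∀ z, b i v z ≤ b i v y) → y = x := by
    intro y hy
    by_contra hyx
    have := hb.value_add_sum_erase_le (S := {i}) (v := fun _ => v) (mem_singleton_self i)
      (by simpa using hv) (by simpa using hy) x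
    simp only [erase_singleton, sum_empty, add_zero] at this
    exact (hx y hyx).not_ge this
  obtain ⟨y, hy⟩ := Finite.exists_max (b i v)
  obtain rfl := hmax y hy
  exact (hy z).lt_of_ne fun h => hz (hmax z fun w => h ▸ hy w)

end ExPost

section SingleMinded

variable [DecidableEq A]

theorem Zval_nonneg {a : A} {s : ℝ} (hs : 0 ≤ s) (x : A) : 0 ≤ Zval a s x := by
  unfold Zval
  split_ifs <;> simp [hs]

@[simp]
theorem Zval_self (a : A) (s : ℝ) : Zval a s a = s := if_pos rfl

theorem Zval_of_ne {a x : A} (h : x ≠ a) (s : ℝ) : Zval a s x = 0 := if_neg h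

theorem Zval_lt_self {a x : A} (h : x ≠ a) {s : ℝ} (hs : 0 < s) : Zval a s x < Zval a s a := by
  rwa [Zval_of_ne h, Zval_self]

@[simp]
theorem Zval_zero (a : A) : Zval a 0 = 0 := by
  funext x
  simp [Zval]

noncomputable def bidGap (b : N → (A → ℝ) → A → ℝ) (i : N) (a a' : A) (s : ℝ) : ℝ :=
  b i (Zval a s) a - b i (Zval a s) a'

theorem bidGap_zero_swap (b : N → (A → ℝ) → A → ℝ) (i : N) (a a' : A) :
    bidGap b i a' a 0 = -bidGap b i a a' 0 := by
  simp [bidGap]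

variable [DecidableEq N] {b : N → (A → ℝ) → A → ℝ}

theorem ExPostClass.bidGap_pos [Finite A]
    (hb : ExPostClass (fun _ : N => {v : A → ℝ | ∀ a, 0 ≤ v a}) b) (i : N) {a a' : A}
    (haa : a ≠ a') {t : ℝ} (ht : 0 < t) : 0 < bidGap b i a a' t := by
  have := hb.bid_lt_of_forall_lt (i := i) (Zval_nonneg ht.le) (fun _ hz => Zval_lt_self hz ht)
    haa.symm
  unfold bidGap
  linarith

theorem ExPostClass.bidGap_pair_dichotomy [Finite A]
    (hb : ExPostClass (fun _ : N => {v : A → ℝ | ∀ a, 0 ≤ v a}) b) {i j : N} (hij : i ≠ j)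
    {a a' : A} (haa : a ≠ a') {s t : ℝ} (hs : 0 ≤ s) (ht : 0 < t) :
    (bidGap b j a' a t ≤ s ∧ t ≤ bidGap b i a a' s) ∨
      (s ≤ bidGap b j a' a t ∧ bidGap b i a a' s ≤ t) := by
  set v : N → A → ℝ := Function.update (fun _ => Zval a' t) i (Zval a s)
  have hvi : v i = Zval a s := Function.update_self ..
  have hvj : v j = Zval a' t := Function.update_of_ne hij.symm ..
  have hv : ∀ m ∈ ({i, j} : Finset N), ∀ z, 0 ≤ v m z := by
    simp only [mem_insert, mem_singleton, forall_eq_or_imp, forall_eq, hvi, hvj]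
    exact ⟨Zval_nonneg hs, Zval_nonneg ht.le⟩
  have : Nonempty A := ⟨a⟩
  obtain ⟨y, hy⟩ := Finite.exists_max fun z => ∑ m ∈ {i, j}, b m (v m) z
  have hW : ∀ z, ∑ m ∈ {i, j}, b m (v m) z = b i (Zval a s) z + b j (Zval a' t) z := fun z => by
    rw [sum_pair hij, hvi, hvj]
  have key_i := hb.value_sub_bid_add_welfare_le (i := i) (by simp) hv hy
  have key_j := hb.value_sub_bid_add_welfare_le (i := j) (by simp) hv hy
  simp only [hW, hvi, hvj] at key_i key_j
  unfold bidGap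
  rcases eq_or_ne y a with rfl | hya
  · have hi := key_i a'
    have hj := key_j a'
    rw [Zval_self, Zval_of_ne haa.symm] at hi
    rw [Zval_self, Zval_of_ne haa] at hj
    exact Or.inl ⟨by linarith, by linarith⟩
  rcases eq_or_ne y a' with rfl | hya'
  · have hi := key_i a
    have hj := key_j a
    rw [Zval_self, Zval_of_ne haa.symm] at hi
    rw [Zval_self, Zval_of_ne haa] at hj
    exact Or.inr ⟨by linarith, by linarith⟩
  have hi := key_i a'
  rw [Zval_of_ne haa.symm, Zval_of_ne hya] at hi
  have hj := hb.bidGap_pos j hya'.symm ht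
  unfold bidGap at hj
  linarith

theorem ExPostClass.bidGap_triple_dichotomy [Finite A]
    (hb : ExPostClass (fun _ : N => {v : A → ℝ | ∀ a, 0 ≤ v a}) b) {i j l : N} (hij : i ≠ j)
    (hil : i ≠ l) (hjl : j ≠ l) {a a' : A} (haa : a ≠ a') {s t r : ℝ} (hs : 0 ≤ s) (ht : 0 < t)
    (hr : 0 < r) :
    t + bidGap b l a' a r ≤ bidGap b i a a' s ∨ bidGap b i a a' s ≤ r + bidGap b j a' a t := by
  set v : N → A → ℝ :=
    Function.update (Function.update (fun _ => Zval a' r) j (Zval a' t)) i (Zval a s)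
  have hvi : v i = Zval a s := by simp [v]
  have hvj : v j = Zval a' t := by simp [v, hij.symm]
  have hvl : v l = Zval a' r := by simp [v, hil.symm, hjl.symm]
  have hv : ∀ m ∈ ({i, j, l} : Finset N), ∀ z, 0 ≤ v m z := by
    simp only [mem_insert, mem_singleton, forall_eq_or_imp, forall_eq, hvi, hvj, hvl]
    exact ⟨Zval_nonneg hs, Zval_nonneg ht.le, Zval_nonneg hr.le⟩
  have : Nonempty A := ⟨a⟩
  obtain ⟨y, hy⟩ := Finite.exists_max fun z => ∑ m ∈ {i, j, l}, b m (v m) z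
  have hW : ∀ z, ∑ m ∈ {i, j, l}, b m (v m) z =
      b i (Zval a s) z + b j (Zval a' t) z + b l (Zval a' r) z := fun z => by
    rw [sum_insert (by simp [hij, hil]), sum_pair hjl, hvi, hvj, hvl, add_assoc]
  have key_i := hb.value_sub_bid_add_welfare_le (i := i) (by simp) hv hy
  have key_j := hb.value_sub_bid_add_welfare_le (i := j) (by simp) hv hy
  have key_l := hb.value_sub_bid_add_welfare_le (i := l) (by simp) hv hy
  simp only [hW, hvi, hvj, hvl] at key_i key_j key_l
  unfold bidGap
  rcases eq_or_ne y a with rfl | hya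
  · have h := key_j a'
    rw [Zval_self, Zval_of_ne haa] at h
    exact Or.inl (by linarith)
  rcases eq_or_ne y a' with rfl | hya'
  · have h := key_l a
    rw [Zval_self, Zval_of_ne haa] at h
    exact Or.inr (by linarith)
  have h := key_i a'
  rw [Zval_of_ne haa.symm, Zval_of_ne hya] at h
  have hj := hb.bidGap_pos j hya'.symm ht
  have hl := hb.bidGap_pos l hya'.symm hr
  unfold bidGap at hj hl
  linarith

theorem ExPostClass.bidGap_le [Fintype N] [Finite A]
    (hb : ExPostClass (fun _ : N => {v : A → ℝ | ∀ a, 0 ≤ v a}) b)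
    (hn : 3 ≤ Fintype.card N) (i : N) {a a' : A} (haa : a ≠ a') {s : ℝ} (hs : 0 ≤ s) :
    bidGap b i a a' s ≤ s := by
  by_contra! hover
  obtain ⟨j, l, hij, hil, hjl⟩ := exists_ne_ne_of_three_le_card hn i
  -- `r` and `t` are chosen so that both alternatives of the three-agent dichotomy fail.
  set r := (bidGap b i a a' s - s) / 2 with hr_def
  have hr : 0 < r := by linarith
  have hl := hb.bidGap_pos l haa.symm hr
  obtain ⟨t, hts, htG⟩ := exists_between (max_lt hover (sub_lt_self _ hl))
  rw [max_lt_iff] at hts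
  have ht : 0 < t := hs.trans_lt hts.1
  have hj : bidGap b j a' a t ≤ s := by
    rcases hb.bidGap_pair_dichotomy hij haa hs ht with h | h
    · exact h.1
    · linarith [h.2]
  rcases hb.bidGap_triple_dichotomy hij hil hjl haa hs ht hr with h | h <;> linarith [hts.2]

theorem ExPostClass.le_bidGap [Fintype N] [Finite A]
    (hb : ExPostClass (fun _ : N => {v : A → ℝ | ∀ a, 0 ≤ v a}) b)
    (hn : 3 ≤ Fintype.card N) (i : N) {a a' : A} (haa : a ≠ a') {s : ℝ} (hs : 0 ≤ s) :
    s ≤ bidGap b i a a' s := by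
  rcases hs.eq_or_lt with rfl | hs'
  · linarith [bidGap_zero_swap b i a a', hb.bidGap_le hn i haa.symm le_rfl]
  by_contra! hunder
  obtain ⟨j, -, hij, -⟩ := exists_ne_ne_of_three_le_card hn i
  obtain ⟨t, hGt, hts⟩ := exists_between (max_lt hunder hs')
  rw [max_lt_iff] at hGt
  have hj := hb.bidGap_le hn j haa.symm hGt.2.le
  rcases hb.bidGap_pair_dichotomy hij haa hs hGt.2 with h | h <;> linarith [h.1, h.2]

end SingleMinded

theorem stmt12_general [Fintype N] [DecidableEq N] [Fintype A] [DecidableEq A]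
    (hn : 3 ≤ Fintype.card N)
    (b : N → (A → ℝ) → A → ℝ)
    (hb : ExPostClass (fun _ : N => {v : A → ℝ | ∀ a, 0 ≤ v a}) b) :
    ∀ i : N, ∀ s : ℝ, 0 ≤ s → ∀ a a' : A, a' ≠ a →
      b i (Zval a s) a - b i (Zval a s) a' = s :=
  fun i _ hs _ _ haa => le_antisymm (hb.bidGap_le hn i haa.symm hs) (hb.le_bidGap hn i haa.symm hs)

/-- Let `n ≥ 3`, `|A| ≥ 3`, and let `b` be an ex-post equilibrium for the class of VCG
games over nonnegative valuations.  Then on a single-minded valuation the difference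
between the bid on the valued alternative and any other alternative equals the value. -/
theorem stmt12 [Fintype N] [DecidableEq N] [Fintype A] [DecidableEq A]
    (hn : 3 ≤ Fintype.card N) (hA : 3 ≤ Fintype.card A)
    (b : N → (A → ℝ) → A → ℝ)
    (hb : ExPostClass (fun _ : N => {v : A → ℝ | ∀ a, 0 ≤ v a}) b) :
    ∀ i : N, ∀ s : ℝ, 0 ≤ s → ∀ a a' : A, a' ≠ a →
      b i (Zval a s) a - b i (Zval a s) a' = s :=
  stmt12_general hn b hb
end

section
/- (Parallelogram) Suppose g₁,g₂ : ℝ₊ → ℝ₊ satisfy the mean value exclusion condition. Then there exist a collection Ω of pairwise disjoint bounded open intervals in ℝ₊ and a function G : Ω → {−1,+1} with G(I)·G(J) = −1 whenever I⁺ = J⁻ for I,J ∈ Ω, such that: (1) if x ∈ ℝ₊ lies in the closure of no interval of Ω, then g₁(x) = g₂(x) = x; (2) if x ∈ I ∈ Ω and G(I) = −1, then g₁(x) = I⁻ and g₂(x) = I⁺; (3) if x ∈ I ∈ Ω and G(I) = +1, then g₁(x) = I⁺ and g₂(x) = I⁻; (4) if I ∈ Ω and I⁻ is not the right endpoint of any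 interval of Ω, then (g₁(I⁻), g₂(I⁻)) = (I⁻, I⁺) when G(I) = −1 and (I⁺, I⁻) when G(I) = +1; (5) if I ∈ Ω and I⁺ is not the left endpoint of any interval of Ω, then (g₁(I⁺), g₂(I⁺)) = (I⁻, I⁺) when G(I) = −1 and (I⁺, I⁻) when G(I) = +1; (6) if I⁺ = J⁻ for some I ≠ J in Ω and G(I) = +1, then g₁(I⁺) = I⁺ and g₂(I⁺) ∈ {I⁻, J⁺}; (7) if I⁺ = J⁻ for some I ≠ J in Ω and G(I) = −1, then g₂(I⁺) = I⁺ and g₁(I⁺) ∈ {I⁻, J⁺}. -/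
section Aux

variable {f₁ f₂ : ℝ → ℝ}

theorem MVE.symm (h : MVE f₁ f₂) : MVE f₂ f₁ := fun s t y hs ht hy =>
  ⟨(h s t y hs ht hy).2, (h s t y hs ht hy).1⟩

theorem e1 (h : MVE f₁ f₂) {s t y : ℝ} (hs : 0 ≤ s) (ht : 0 ≤ t) (hy : 0 ≤ y)
    (h1 : s < y) (h2 : y ≤ f₁ s) : y ≠ f₂ t :=
  (h s t y hs ht hy).1 (Or.inl ⟨h1, h2⟩)

theorem e1' (h : MVE f₁ f₂) {s t y : ℝ} (hs : 0 ≤ s) (ht : 0 ≤ t) (hy : 0 ≤ y)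
    (h1 : f₁ s ≤ y) (h2 : y < s) : y ≠ f₂ t :=
  (h s t y hs ht hy).1 (Or.inr ⟨h1, h2⟩)

theorem e2 (h : MVE f₁ f₂) {s t y : ℝ} (hs : 0 ≤ s) (ht : 0 ≤ t) (hy : 0 ≤ y)
    (h1 : s < y) (h2 : y ≤ f₂ s) : y ≠ f₁ t :=
  (h s t y hs ht hy).2 (Or.inl ⟨h1, h2⟩)

theorem e2' (h : MVE f₁ f₂) {s t y : ℝ} (hs : 0 ≤ s) (ht : 0 ≤ t) (hy : 0 ≤ y)
    (h1 : f₂ s ≤ y) (h2 : y < s) : y ≠ f₁ t :=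
  (h s t y hs ht hy).2 (Or.inr ⟨h1, h2⟩)

theorem lemA (h : MVE f₁ f₂) (hf₁ : ∀ x, 0 ≤ x → 0 ≤ f₁ x) (hf₂ : ∀ x, 0 ≤ x → 0 ≤ f₂ x)
    (x : ℝ) (hx : 0 ≤ x) : (f₁ x ≤ x ∧ x ≤ f₂ x) ∨ (f₂ x ≤ x ∧ x ≤ f₁ x) := by
  have h1 := hf₁ x hx
  have h2 := hf₂ x hx
  rcases le_or_gt (f₁ x) x with ha | ha
  · rcases le_or_gt x (f₂ x) with hb | hb
    · exact Or.inl ⟨ha, hb⟩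
    · rcases eq_or_lt_of_le ha with he | ha'
      · exact Or.inr ⟨hb.le, he.ge⟩
      · exfalso
        rcases le_or_gt (f₁ x) (f₂ x) with hc | hc
        · exact e1' h hx hx h2 hc hb rfl
        · exact e2' h hx hx h1 hc.le ha' rfl
  · rcases le_or_gt (f₂ x) x with hb | hb
    · exact Or.inr ⟨hb, ha.le⟩
    · exfalso
      rcases le_or_gt (f₁ x) (f₂ x) with hc | hc
      · exact e2 h hx hx h1 ha hc rfl
      · exact e1 h hx hx h2 hb hc.le rfl

variable (h : MVE f₁ f₂) (hf₁ : ∀ x, 0 ≤ x → 0 ≤ f₁ x) (hf₂ : ∀ x, 0 ≤ x → 0 ≤ f₂ x)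

include h hf₁ hf₂

/-- right side, step 1 -/
theorem lemR1 {s x : ℝ} (hs : 0 ≤ s) (h1 : s < x) (h2 : x < f₂ s) :
    f₁ x ≤ s ∧ x ≤ f₂ x := by
  have hx0 : 0 ≤ x := hs.trans h1.le
  have hb0 : 0 ≤ f₂ s := hf₂ s hs
  have hne : x ≠ f₁ x := e2 h hs hx0 hx0 h1 h2.le
  have hle : f₁ x ≤ x := by
    by_contra hc
    push_neg at hc
    rcases le_or_gt (f₁ x) (f₂ s) with h3 | h3
    · exact e2 h hs hx0 (hf₁ x hx0) (h1.trans hc) h3 rfl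
    · exact e1 h hx0 hs hb0 h2 h3.le rfl
  have hlt : f₁ x < x := lt_of_le_of_ne hle hne.symm
  constructor
  · by_contra hc
    push_neg at hc
    exact e2 h hs hx0 (hf₁ x hx0) hc (by linarith) rfl
  · rcases lemA h hf₁ hf₂ x hx0 with ⟨_, h4⟩ | ⟨h4, h5⟩
    · exact h4
    · linarith

/-- left side, step 1 -/
theorem lemL1 {s z : ℝ} (hs : 0 ≤ s) (h1 : f₁ s < z) (h2 : z < s) :
    s ≤ f₂ z ∧ f₁ z ≤ z := by
  have hz0 : 0 ≤ z := (hf₁ s hs).trans h1.le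
  have hne : z ≠ f₂ z := e1' h hs hz0 hz0 h1.le h2
  have hle : z ≤ f₂ z := by
    by_contra hc
    push_neg at hc
    rcases le_or_gt (f₁ s) (f₂ z) with h3 | h3
    · exact e1' h hs hz0 (hf₂ z hz0) h3 (by linarith) rfl
    · exact e2' h hz0 hs (hf₁ s hs) h3.le h1 rfl
  have hlt : z < f₂ z := lt_of_le_of_ne hle hne
  constructor
  · by_contra hc
    push_neg at hc
    exact e1' h hs hz0 (hf₂ z hz0) (by linarith) hc rfl
  · rcases lemA h hf₁ hf₂ z hz0 with ⟨h4, _⟩ | ⟨h4, h5⟩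
    · exact h4
    · linarith

theorem lemR2 {s x : ℝ} (hs : 0 ≤ s) (h1 : s < x) (h2 : x < f₂ s) :
    f₂ x ≤ f₂ s := by
  obtain ⟨hr1, hr2⟩ := lemR1 h hf₁ hf₂ hs h1 h2
  have hx0 : 0 ≤ x := hs.trans h1.le
  have hb0 : 0 ≤ f₂ s := hf₂ s hs
  by_contra hc
  push_neg at hc
  set u := (f₂ s + f₂ x) / 2 with hu
  have hu1 : f₂ s < u := by simp only [hu]; linarith
  have hu2 : u < f₂ x := by simp only [hu]; linarith
  have hu0 : 0 ≤ u := by linarith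
  obtain ⟨hq1, _⟩ := lemR1 h hf₁ hf₂ hx0 (h2.trans hu1) hu2
  have hq2 : f₁ u ≤ s := by
    by_contra hc2
    push_neg at hc2
    exact e2 h hs hu0 (hf₁ u hu0) hc2 (hq1.trans h2.le) rfl
  exact e1' h hu0 hs hb0 (by linarith) hu1 rfl

theorem lemL2 {s z : ℝ} (hs : 0 ≤ s) (h1 : f₁ s < z) (h2 : z < s) :
    f₂ z ≤ f₂ s := by
  obtain ⟨hl1, hl2⟩ := lemL1 h hf₁ hf₂ hs h1 h2
  have hz0 : 0 ≤ z := (hf₁ s hs).trans h1.le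
  have hsb : s ≤ f₂ s := by
    rcases lemA h hf₁ hf₂ s hs with ⟨_, h4⟩ | ⟨h4, h5⟩
    · exact h4
    · linarith
  by_contra hc
  push_neg at hc
  set u := (f₂ s + f₂ z) / 2 with hu
  have hu1 : f₂ s < u := by simp only [hu]; linarith
  have hu2 : u < f₂ z := by simp only [hu]; linarith
  have hu0 : 0 ≤ u := hs.trans (hsb.trans hu1.le)
  obtain ⟨hq1, _⟩ := lemR1 h hf₁ hf₂ hz0 (by linarith) hu2
  exact e1' h hu0 hs (hf₂ s hs) (by linarith) hu1 rfl

theorem lemR3 {s x : ℝ} (hs : 0 ≤ s) (h1 : s < x) (h2 : x < f₂ s) :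
    f₁ s ≤ f₁ x := by
  obtain ⟨hr1, hr2⟩ := lemR1 h hf₁ hf₂ hs h1 h2
  have hx0 : 0 ≤ x := hs.trans h1.le
  have ha0 : 0 ≤ f₁ x := hf₁ x hx0
  have hsa : f₁ s ≤ s := by
    rcases lemA h hf₁ hf₂ s hs with ⟨h4, _⟩ | ⟨h4, h5⟩
    · exact h4
    · linarith
  by_contra hc
  push_neg at hc
  set u := (f₁ x + f₁ s) / 2 with hu
  have hu1 : f₁ x < u := by simp only [hu]; linarith
  have hu2 : u < f₁ s := by simp only [hu]; linarith
  have hu0 : 0 ≤ u := ha0.trans hu1.le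
  obtain ⟨hq1, _⟩ := lemL1 h hf₁ hf₂ hx0 hu1 (by linarith)
  exact e2 h hu0 hs (hf₁ s hs) hu2 (by linarith) rfl

theorem lemL3 {s z : ℝ} (hs : 0 ≤ s) (h1 : f₁ s < z) (h2 : z < s) :
    f₁ s ≤ f₁ z := by
  obtain ⟨hl1, hl2⟩ := lemL1 h hf₁ hf₂ hs h1 h2
  have hz0 : 0 ≤ z := (hf₁ s hs).trans h1.le
  by_contra hc
  push_neg at hc
  set u := (f₁ z + f₁ s) / 2 with hu
  have hu1 : f₁ z < u := by simp only [hu]; linarith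
  have hu2 : u < f₁ s := by simp only [hu]; linarith
  have hu0 : 0 ≤ u := (hf₁ z hz0).trans hu1.le
  obtain ⟨hq1, _⟩ := lemL1 h hf₁ hf₂ hz0 hu1 (by linarith)
  exact e2 h hu0 hs (hf₁ s hs) hu2 (by linarith) rfl

theorem lemR4 {s x : ℝ} (hs : 0 ≤ s) (h1 : s < x) (h2 : x < f₂ s) :
    f₂ s ≤ f₂ x := by
  obtain ⟨hr1, hr2⟩ := lemR1 h hf₁ hf₂ hs h1 h2
  have hx0 : 0 ≤ x := hs.trans h1.le
  by_contra hc
  push_neg at hc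
  set u := (f₂ x + f₂ s) / 2 with hu
  have hu1 : f₂ x < u := by simp only [hu]; linarith
  have hu2 : u < f₂ s := by simp only [hu]; linarith
  have hu0 : 0 ≤ u := (hf₂ x hx0).trans hu1.le
  obtain ⟨hq1, _⟩ := lemR1 h hf₁ hf₂ hs (by linarith) hu2
  exact e1' h hu0 hx0 (hf₂ x hx0) (by linarith) hu1 rfl

theorem lemR5 {s x : ℝ} (hs : 0 ≤ s) (h1 : s < x) (h2 : x < f₂ s) :
    f₁ x ≤ f₁ s := by
  obtain ⟨hr1, hr2⟩ := lemR1 h hf₁ hf₂ hs h1 h2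
  have hx0 : 0 ≤ x := hs.trans h1.le
  by_contra hc
  push_neg at hc
  set u := (f₁ s + f₁ x) / 2 with hu
  have hu1 : f₁ s < u := by simp only [hu]; linarith
  have hu2 : u < f₁ x := by simp only [hu]; linarith
  have hu0 : 0 ≤ u := (hf₁ s hs).trans hu1.le
  obtain ⟨hq1, _⟩ := lemL1 h hf₁ hf₂ hs hu1 (by linarith)
  exact e2 h hu0 hx0 (hf₁ x hx0) hu2 (by linarith) rfl

theorem lemL4 {s z : ℝ} (hs : 0 ≤ s) (h1 : f₁ s < z) (h2 : z < s) :
    f₂ s ≤ f₂ z := by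
  obtain ⟨hl1, hl2⟩ := lemL1 h hf₁ hf₂ hs h1 h2
  have hz0 : 0 ≤ z := (hf₁ s hs).trans h1.le
  by_contra hc
  push_neg at hc
  set u := (f₂ z + f₂ s) / 2 with hu
  have hu1 : f₂ z < u := by simp only [hu]; linarith
  have hu2 : u < f₂ s := by simp only [hu]; linarith
  have hu0 : 0 ≤ u := (hf₂ z hz0).trans hu1.le
  obtain ⟨hq1, _⟩ := lemR1 h hf₁ hf₂ hs (by linarith) hu2
  exact e1' h hu0 hz0 (hf₂ z hz0) (by linarith) hu1 rfl

theorem lemL5 {s z : ℝ} (hs : 0 ≤ s) (h1 : f₁ s < z) (h2 : z < s) :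
    f₁ z ≤ f₁ s := by
  obtain ⟨hl1, hl2⟩ := lemL1 h hf₁ hf₂ hs h1 h2
  have hz0 : 0 ≤ z := (hf₁ s hs).trans h1.le
  by_contra hc
  push_neg at hc
  set u := (f₁ s + f₁ z) / 2 with hu
  have hu1 : f₁ s < u := by simp only [hu]; linarith
  have hu2 : u < f₁ z := by simp only [hu]; linarith
  have hu0 : 0 ≤ u := (hf₁ s hs).trans hu1.le
  obtain ⟨hq1, _⟩ := lemL1 h hf₁ hf₂ hs hu1 (by linarith)
  exact e2 h hu0 hz0 (hf₁ z hz0) hu2 (by linarith) rfl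

/-- interior rigidity -/
theorem lemRigid {s x : ℝ} (hs : 0 ≤ s) (h1 : f₁ s < x) (h2 : x < f₂ s) :
    f₁ x = f₁ s ∧ f₂ x = f₂ s := by
  rcases lt_trichotomy x s with hc | hc | hc
  · exact ⟨le_antisymm (lemL5 h hf₁ hf₂ hs h1 hc) (lemL3 h hf₁ hf₂ hs h1 hc),
      le_antisymm (lemL2 h hf₁ hf₂ hs h1 hc) (lemL4 h hf₁ hf₂ hs h1 hc)⟩
  · subst hc; exact ⟨rfl, rfl⟩
  · exact ⟨le_antisymm (lemR5 h hf₁ hf₂ hs hc h2) (lemR3 h hf₁ hf₂ hs hc h2),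
      le_antisymm (lemR2 h hf₁ hf₂ hs hc h2) (lemR4 h hf₁ hf₂ hs hc h2)⟩

end Aux
/-- `I` is realized with `f₁` at the bottom and `f₂` at the top. -/
def NegP (f₁ f₂ : ℝ → ℝ) (I : ℝ × ℝ) : Prop :=
  ∃ x, 0 ≤ x ∧ f₁ x = I.1 ∧ f₂ x = I.2 ∧ I.1 < I.2

section Struct

variable {f₁ f₂ : ℝ → ℝ} (h : MVE f₁ f₂)
  (hf₁ : ∀ x, 0 ≤ x → 0 ≤ f₁ x) (hf₂ : ∀ x, 0 ≤ x → 0 ≤ f₂ x)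

include h hf₁ hf₂

theorem negP_rigid {I : ℝ × ℝ} (hI : NegP f₁ f₂ I) {x : ℝ}
    (h1 : I.1 < x) (h2 : x < I.2) : f₁ x = I.1 ∧ f₂ x = I.2 := by
  obtain ⟨s, hs0, hsa, hsb, hab⟩ := hI
  obtain ⟨r1, r2⟩ := lemRigid h hf₁ hf₂ hs0 (x := x) (by rw [hsa]; exact h1)
    (by rw [hsb]; exact h2)
  exact ⟨r1.trans hsa, r2.trans hsb⟩

theorem negP_base {I : ℝ × ℝ} (hI : NegP f₁ f₂ I) :
    ∃ s, 0 ≤ s ∧ f₁ s = I.1 ∧ f₂ s = I.2 ∧ I.1 < I.2 ∧ I.1 ≤ s ∧ s ≤ I.2 ∧ 0 ≤ I.1 ∧ 0 ≤ I.2 := by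
  obtain ⟨s, hs0, hsa, hsb, hab⟩ := hI
  have ha0 : 0 ≤ I.1 := hsa ▸ hf₁ s hs0
  have hb0 : 0 ≤ I.2 := hsb ▸ hf₂ s hs0
  rcases lemA h hf₁ hf₂ s hs0 with ⟨u1, u2⟩ | ⟨u1, u2⟩
  · rw [hsa] at u1; rw [hsb] at u2
    exact ⟨s, hs0, hsa, hsb, hab, u1, u2, ha0, hb0⟩
  · exfalso; rw [hsb] at u1; rw [hsa] at u2; linarith

theorem negP_posP {I : ℝ × ℝ} (h1 : NegP f₁ f₂ I) (h2 : NegP f₂ f₁ I) : False := by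
  obtain ⟨t, ht0, hta, htb, hab, htl, htr, _, hb0⟩ := negP_base h hf₁ hf₂ h1
  obtain ⟨s, hs0, hsa, hsb, _⟩ := h2
  have hsle : I.1 ≤ s ∧ s ≤ I.2 := by
    rcases lemA h hf₁ hf₂ s hs0 with ⟨u1, u2⟩ | ⟨u1, u2⟩
    · exfalso; rw [hsb] at u1; rw [hsa] at u2; linarith
    · rw [hsa] at u1; rw [hsb] at u2; exact ⟨u1, u2⟩
  rcases eq_or_lt_of_le hsle.2 with hes | hlt
  · rcases eq_or_lt_of_le htr with het | hlt2
    · have h' : f₂ t = I.1 := by rw [het, ← hes, hsa]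
      rw [htb] at h'; linarith
    · exact e2 h ht0 hs0 hb0 hlt2 htb.ge hsb.symm
  · exact e1 h hs0 ht0 hb0 hlt hsb.ge htb.symm

theorem negP_adj {I J : ℝ × ℝ} (hI : NegP f₁ f₂ I) (hJ : NegP f₁ f₂ J)
    (he : I.2 = J.1) : False := by
  obtain ⟨s, hs0, hsa, hsb, hab, hsl, hsr, _, hb0⟩ := negP_base h hf₁ hf₂ hI
  obtain ⟨t, ht0, hta, htb, hcd, htl, htr, _, _⟩ := negP_base h hf₁ hf₂ hJ
  rcases eq_or_lt_of_le hsr with hes | hlt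
  · rcases eq_or_lt_of_le (show I.2 ≤ t by rw [he]; exact htl) with het | hlt2
    · have h' : f₁ t = I.1 := by rw [← het, ← hes, hsa]
      have h'' : J.1 = I.1 := hta.symm.trans h'
      rw [he] at hab; linarith
    · exact e1' h ht0 hs0 hb0 (le_of_eq (hta.trans he.symm)) hlt2 hsb.symm
  · exact e2 h hs0 ht0 hb0 hlt hsb.ge (hta.trans he.symm).symm

theorem overlap_eq {I J : ℝ × ℝ} {x : ℝ}
    (hI : NegP f₁ f₂ I ∨ NegP f₂ f₁ I) (hJ : NegP f₁ f₂ J ∨ NegP f₂ f₁ J)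
    (h1 : I.1 < x) (h2 : x < I.2) (h3 : J.1 < x) (h4 : x < J.2) : I = J := by
  have h' := h.symm
  rcases hI with hNI | hPI <;> rcases hJ with hNJ | hPJ
  · obtain ⟨r1, r2⟩ := negP_rigid h hf₁ hf₂ hNI h1 h2
    obtain ⟨q1, q2⟩ := negP_rigid h hf₁ hf₂ hNJ h3 h4
    exact Prod.ext_iff.mpr ⟨r1.symm.trans q1, r2.symm.trans q2⟩
  · obtain ⟨r1, r2⟩ := negP_rigid h hf₁ hf₂ hNI h1 h2
    obtain ⟨q1, q2⟩ := negP_rigid h' hf₂ hf₁ hPJ h3 h4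
    exfalso; linarith
  · obtain ⟨r1, r2⟩ := negP_rigid h' hf₂ hf₁ hPI h1 h2
    obtain ⟨q1, q2⟩ := negP_rigid h hf₁ hf₂ hNJ h3 h4
    exfalso; linarith
  · obtain ⟨r1, r2⟩ := negP_rigid h' hf₂ hf₁ hPI h1 h2
    obtain ⟨q1, q2⟩ := negP_rigid h' hf₂ hf₁ hPJ h3 h4
    exact Prod.ext_iff.mpr ⟨r1.symm.trans q1, r2.symm.trans q2⟩

theorem left_neg {I : ℝ × ℝ} (hI : NegP f₁ f₂ I)
    (hne : ∀ J : ℝ × ℝ, (NegP f₁ f₂ J ∨ NegP f₂ f₁ J) → J.2 ≠ I.1) :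
    f₁ I.1 = I.1 ∧ f₂ I.1 = I.2 := by
  have hI' := hI
  obtain ⟨s, hs0, hsa, hsb, hab, hsl, hsr, ha0, hb0⟩ := negP_base h hf₁ hf₂ hI
  rcases eq_or_lt_of_le hsl with hes | hlt
  · rw [← hes] at hsa hsb
    exact ⟨hsa, hsb⟩
  · have h2a : f₂ I.1 ≠ I.1 := fun hc =>
      e1' h hs0 ha0 ha0 (le_of_eq hsa) hlt hc.symm
    rcases lemA h hf₁ hf₂ I.1 ha0 with ⟨u1, u2⟩ | ⟨u1, u2⟩
    · have hgt : I.1 < f₂ I.1 := lt_of_le_of_ne u2 (Ne.symm h2a)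
      have hmin : I.1 < min (f₂ I.1) I.2 := lt_min hgt hab
      set m := (I.1 + min (f₂ I.1) I.2) / 2 with hm
      have hm1 : I.1 < m := by simp only [hm]; linarith
      have hm2 : m < min (f₂ I.1) I.2 := by simp only [hm]; linarith
      have hmb : m < f₂ I.1 := hm2.trans_le (min_le_left _ _)
      have hmc : m < I.2 := hm2.trans_le (min_le_right _ _)
      rcases eq_or_lt_of_le u1 with he1 | hlt1
      · refine ⟨he1, ?_⟩
        have hK : NegP f₁ f₂ (I.1, f₂ I.1) := ⟨I.1, ha0, he1, rfl, hgt⟩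
        have hKI : (I.1, f₂ I.1) = I :=
          overlap_eq h hf₁ hf₂ (Or.inl hK) (Or.inl hI') hm1 hmb hm1 hmc
        exact congrArg Prod.snd hKI
      · exfalso
        have hK : NegP f₁ f₂ (f₁ I.1, f₂ I.1) := ⟨I.1, ha0, rfl, rfl, hlt1.trans hgt⟩
        have hKI : (f₁ I.1, f₂ I.1) = I :=
          overlap_eq h hf₁ hf₂ (Or.inl hK) (Or.inl hI') (hlt1.trans hm1) hmb hm1 hmc
        exact absurd (congrArg Prod.fst hKI) (ne_of_lt hlt1)
    · have hltb : f₂ I.1 < I.1 := lt_of_le_of_ne u1 h2a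
      rcases eq_or_lt_of_le u2 with he1 | hlt1
      · exact absurd rfl (hne (f₂ I.1, I.1) (Or.inr ⟨I.1, ha0, rfl, he1.symm, hltb⟩))
      · exfalso
        have hK : NegP f₂ f₁ (f₂ I.1, f₁ I.1) := ⟨I.1, ha0, rfl, rfl, hltb.trans hlt1⟩
        have hmin : I.1 < min (f₁ I.1) I.2 := lt_min hlt1 hab
        set m := (I.1 + min (f₁ I.1) I.2) / 2 with hm
        have hm1 : I.1 < m := by simp only [hm]; linarith
        have hm2 : m < min (f₁ I.1) I.2 := by simp only [hm]; linarith
        have hKI : (f₂ I.1, f₁ I.1) = I :=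
          overlap_eq h hf₁ hf₂ (Or.inr hK) (Or.inl hI') (hltb.trans hm1)
            (hm2.trans_le (min_le_left _ _)) hm1 (hm2.trans_le (min_le_right _ _))
        exact absurd (congrArg Prod.fst hKI) (ne_of_lt hltb)

theorem right_neg {I : ℝ × ℝ} (hI : NegP f₁ f₂ I)
    (hne : ∀ J : ℝ × ℝ, (NegP f₁ f₂ J ∨ NegP f₂ f₁ J) → J.1 ≠ I.2) :
    f₁ I.2 = I.1 ∧ f₂ I.2 = I.2 := by
  have hI' := hI
  obtain ⟨s, hs0, hsa, hsb, hab, hsl, hsr, ha0, hb0⟩ := negP_base h hf₁ hf₂ hI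
  rcases eq_or_lt_of_le hsr with hes | hlt
  · rw [hes] at hsa hsb
    exact ⟨hsa, hsb⟩
  · have h1b : f₁ I.2 ≠ I.2 := fun hc => e2 h hs0 hb0 hb0 hlt hsb.ge hc.symm
    rcases lemA h hf₁ hf₂ I.2 hb0 with ⟨u1, u2⟩ | ⟨u1, u2⟩
    · have hlt1 : f₁ I.2 < I.2 := lt_of_le_of_ne u1 h1b
      have hmax : max I.1 (f₁ I.2) < I.2 := max_lt hab hlt1
      set m := (max I.1 (f₁ I.2) + I.2) / 2 with hm
      have hm1 : max I.1 (f₁ I.2) < m := by simp only [hm]; linarith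
      have hm2 : m < I.2 := by simp only [hm]; linarith
      have hma : I.1 < m := (le_max_left _ _).trans_lt hm1
      have hmb : f₁ I.2 < m := (le_max_right _ _).trans_lt hm1
      rcases eq_or_lt_of_le u2 with he1 | hgt
      · have hK : NegP f₁ f₂ (f₁ I.2, I.2) := ⟨I.2, hb0, rfl, he1.symm, hlt1⟩
        have hKI : (f₁ I.2, I.2) = I :=
          overlap_eq h hf₁ hf₂ (Or.inl hK) (Or.inl hI') hmb hm2 hma hm2
        exact ⟨congrArg Prod.fst hKI, he1.symm⟩
      · exfalso
        have hK : NegP f₁ f₂ (f₁ I.2, f₂ I.2) := ⟨I.2, hb0, rfl, rfl, hlt1.trans hgt⟩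
        have hKI : (f₁ I.2, f₂ I.2) = I :=
          overlap_eq h hf₁ hf₂ (Or.inl hK) (Or.inl hI') hmb (hm2.trans hgt) hma hm2
        have := congrArg Prod.snd hKI
        simp only at this
        linarith
    · have hgt1 : I.2 < f₁ I.2 := lt_of_le_of_ne u2 (Ne.symm h1b)
      rcases eq_or_lt_of_le u1 with he1 | hlt2
      · exact absurd rfl (hne (I.2, f₁ I.2) (Or.inr ⟨I.2, hb0, he1, rfl, hgt1⟩))
      · exfalso
        have hK : NegP f₂ f₁ (f₂ I.2, f₁ I.2) := ⟨I.2, hb0, rfl, rfl, hlt2.trans hgt1⟩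
        have hmax : max I.1 (f₂ I.2) < I.2 := max_lt hab hlt2
        set m := (max I.1 (f₂ I.2) + I.2) / 2 with hm
        have hm1 : max I.1 (f₂ I.2) < m := by simp only [hm]; linarith
        have hm2 : m < I.2 := by simp only [hm]; linarith
        have hKI : (f₂ I.2, f₁ I.2) = I :=
          overlap_eq h hf₁ hf₂ (Or.inr hK) (Or.inl hI')
            ((le_max_right _ _).trans_lt hm1) (hm2.trans hgt1)
            ((le_max_left _ _).trans_lt hm1) hm2
        exact absurd (congrArg Prod.snd hKI) (ne_of_gt hgt1)

theorem adj_neg {I J : ℝ × ℝ} (hI : NegP f₁ f₂ I)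
    (hJ : NegP f₁ f₂ J ∨ NegP f₂ f₁ J) (he : I.2 = J.1) :
    f₂ I.2 = I.2 ∧ (f₁ I.2 = I.1 ∨ f₁ I.2 = J.2) := by
  have hI' := hI
  obtain ⟨s, hs0, hsa, hsb, hab, hsl, hsr, ha0, hb0⟩ := negP_base h hf₁ hf₂ hI
  have hcd : J.1 < J.2 := by
    rcases hJ with ⟨t, _, _, _, hc⟩ | ⟨t, _, _, _, hc⟩ <;> exact hc
  rcases eq_or_lt_of_le hsr with hes | hlt
  · rw [hes] at hsa hsb
    exact ⟨hsb, Or.inl hsa⟩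
  · have h1b : f₁ I.2 ≠ I.2 := fun hc => e2 h hs0 hb0 hb0 hlt hsb.ge hc.symm
    rcases lemA h hf₁ hf₂ I.2 hb0 with ⟨u1, u2⟩ | ⟨u1, u2⟩
    · have hlt1 : f₁ I.2 < I.2 := lt_of_le_of_ne u1 h1b
      have hmax : max I.1 (f₁ I.2) < I.2 := max_lt hab hlt1
      set m := (max I.1 (f₁ I.2) + I.2) / 2 with hm
      have hm1 : max I.1 (f₁ I.2) < m := by simp only [hm]; linarith
      have hm2 : m < I.2 := by simp only [hm]; linarith
      have hma : I.1 < m := (le_max_left _ _).trans_lt hm1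
      have hmb : f₁ I.2 < m := (le_max_right _ _).trans_lt hm1
      rcases eq_or_lt_of_le u2 with he1 | hgt
      · have hK : NegP f₁ f₂ (f₁ I.2, I.2) := ⟨I.2, hb0, rfl, he1.symm, hlt1⟩
        have hKI : (f₁ I.2, I.2) = I :=
          overlap_eq h hf₁ hf₂ (Or.inl hK) (Or.inl hI') hmb hm2 hma hm2
        exact ⟨he1.symm, Or.inl (congrArg Prod.fst hKI)⟩
      · exfalso
        have hK : NegP f₁ f₂ (f₁ I.2, f₂ I.2) := ⟨I.2, hb0, rfl, rfl, hlt1.trans hgt⟩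
        have hKI : (f₁ I.2, f₂ I.2) = I :=
          overlap_eq h hf₁ hf₂ (Or.inl hK) (Or.inl hI') hmb (hm2.trans hgt) hma hm2
        have := congrArg Prod.snd hKI
        simp only at this
        linarith
    · have hgt1 : I.2 < f₁ I.2 := lt_of_le_of_ne u2 (Ne.symm h1b)
      rcases eq_or_lt_of_le u1 with he1 | hlt2
      · refine ⟨he1, Or.inr ?_⟩
        have hK : NegP f₂ f₁ (I.2, f₁ I.2) := ⟨I.2, hb0, he1, rfl, hgt1⟩
        have hmin : I.2 < min (f₁ I.2) J.2 := lt_min hgt1 (by rw [he]; exact hcd)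
        set m := (I.2 + min (f₁ I.2) J.2) / 2 with hm
        have hm1 : I.2 < m := by simp only [hm]; linarith
        have hm2 : m < min (f₁ I.2) J.2 := by simp only [hm]; linarith
        have hKJ : (I.2, f₁ I.2) = J :=
          overlap_eq h hf₁ hf₂ (Or.inr hK) hJ hm1 (hm2.trans_le (min_le_left _ _))
            (by rw [← he]; exact hm1) (hm2.trans_le (min_le_right _ _))
        exact congrArg Prod.snd hKJ
      · exfalso
        have hK : NegP f₂ f₁ (f₂ I.2, f₁ I.2) := ⟨I.2, hb0, rfl, rfl, hlt2.trans hgt1⟩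
        have hmax : max I.1 (f₂ I.2) < I.2 := max_lt hab hlt2
        set m := (max I.1 (f₂ I.2) + I.2) / 2 with hm
        have hm1 : max I.1 (f₂ I.2) < m := by simp only [hm]; linarith
        have hm2 : m < I.2 := by simp only [hm]; linarith
        have hKI : (f₂ I.2, f₁ I.2) = I :=
          overlap_eq h hf₁ hf₂ (Or.inr hK) (Or.inl hI')
            ((le_max_right _ _).trans_lt hm1) (hm2.trans hgt1)
            ((le_max_left _ _).trans_lt hm1) hm2
        exact absurd (congrArg Prod.snd hKI) (ne_of_gt hgt1)

end Struct
/-- Parallelogram proposition: functions satisfying mean value exclusion are determined,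
up to signs and endpoint choices, by a family of disjoint bounded open intervals. -/
theorem stmt13 (g₁ g₂ : ℝ → ℝ)
    (hg₁ : ∀ x : ℝ, 0 ≤ x → 0 ≤ g₁ x) (hg₂ : ∀ x : ℝ, 0 ≤ x → 0 ≤ g₂ x)
    (hmve : MVE g₁ g₂) :
    ∃ (Ω : Set (ℝ × ℝ)) (G : ℝ × ℝ → ℤ),
      (∀ I ∈ Ω, 0 ≤ I.1 ∧ I.1 < I.2) ∧
      (∀ I ∈ Ω, ∀ J ∈ Ω, I ≠ J → Set.Ioo I.1 I.2 ∩ Set.Ioo J.1 J.2 = ∅) ∧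
      (∀ I ∈ Ω, G I = 1 ∨ G I = -1) ∧
      (∀ I ∈ Ω, ∀ J ∈ Ω, I.2 = J.1 → G I * G J = -1) ∧
      -- (1)
      (∀ x : ℝ, 0 ≤ x → (∀ I ∈ Ω, x ∉ Set.Icc I.1 I.2) → g₁ x = x ∧ g₂ x = x) ∧
      -- (2)
      (∀ I ∈ Ω, G I = -1 → ∀ x ∈ Set.Ioo I.1 I.2, g₁ x = I.1 ∧ g₂ x = I.2) ∧
      -- (3)
      (∀ I ∈ Ω, G I = 1 → ∀ x ∈ Set.Ioo I.1 I.2, g₁ x = I.2 ∧ g₂ x = I.1) ∧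
      -- (4)
      (∀ I ∈ Ω, (∀ J ∈ Ω, J.2 ≠ I.1) →
        (G I = -1 → g₁ I.1 = I.1 ∧ g₂ I.1 = I.2) ∧
        (G I = 1 → g₁ I.1 = I.2 ∧ g₂ I.1 = I.1)) ∧
      -- (5)
      (∀ I ∈ Ω, (∀ J ∈ Ω, J.1 ≠ I.2) →
        (G I = -1 → g₁ I.2 = I.1 ∧ g₂ I.2 = I.2) ∧
        (G I = 1 → g₁ I.2 = I.2 ∧ g₂ I.2 = I.1)) ∧
      -- (6)
      (∀ I ∈ Ω, ∀ J ∈ Ω, I ≠ J → I.2 = J.1 → G I = 1 →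
        g₁ I.2 = I.2 ∧ (g₂ I.2 = I.1 ∨ g₂ I.2 = J.2)) ∧
      -- (7)
      (∀ I ∈ Ω, ∀ J ∈ Ω, I ≠ J → I.2 = J.1 → G I = -1 →
        g₂ I.2 = I.2 ∧ (g₁ I.2 = I.1 ∨ g₁ I.2 = J.2)) := by
  classical
  have hsymm : MVE g₂ g₁ := hmve.symm
  refine ⟨{I : ℝ × ℝ | NegP g₁ g₂ I ∨ NegP g₂ g₁ I},
    fun I => if NegP g₂ g₁ I then 1 else -1, ?_, ?_, ?_, ?_, ?_, ?_, ?_, ?_, ?_, ?_, ?_⟩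
  -- bounds
  · rintro I (hI | hI)
    · obtain ⟨s, _, _, _, hab, _, _, ha0, _⟩ := negP_base hmve hg₁ hg₂ hI
      exact ⟨ha0, hab⟩
    · obtain ⟨s, _, _, _, hab, _, _, ha0, _⟩ := negP_base hsymm hg₂ hg₁ hI
      exact ⟨ha0, hab⟩
  -- disjointness
  · intro I hI J hJ hne
    by_contra hc
    obtain ⟨x, ⟨h1, h2⟩, ⟨h3, h4⟩⟩ := Set.nonempty_iff_ne_empty.2 hc
    exact hne (overlap_eq hmve hg₁ hg₂ hI hJ h1 h2 h3 h4)
  -- signs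
  · intro I _
    by_cases hP : NegP g₂ g₁ I
    · exact Or.inl (if_pos hP)
    · exact Or.inr (if_neg hP)
  -- adjacent signs multiply to -1
  · intro I hI J hJ he
    by_cases hP : NegP g₂ g₁ I
    · have hPJ : ¬ NegP g₂ g₁ J := fun hPJ => negP_adj hsymm hg₂ hg₁ hP hPJ he
      simp only [if_pos hP, if_neg hPJ]
      norm_num
    · have hNI : NegP g₁ g₂ I := hI.resolve_right hP
      have hNJ : ¬ NegP g₁ g₂ J := fun hNJ => negP_adj hmve hg₁ hg₂ hNI hNJ he
      have hPJ : NegP g₂ g₁ J := hJ.resolve_left hNJ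
      simp only [if_neg hP, if_pos hPJ]
      norm_num
  -- (1)
  · intro x hx hnotin
    rcases lemA hmve hg₁ hg₂ x hx with ⟨u1, u2⟩ | ⟨u1, u2⟩
    · rcases eq_or_lt_of_le (u1.trans u2) with he | hlt
      · constructor <;> linarith
      · exfalso
        exact hnotin (g₁ x, g₂ x) (Or.inl ⟨x, hx, rfl, rfl, hlt⟩) ⟨u1, u2⟩
    · rcases eq_or_lt_of_le (u1.trans u2) with he | hlt
      · constructor <;> linarith
      · exfalso
        exact hnotin (g₂ x, g₁ x) (Or.inr ⟨x, hx, rfl, rfl, hlt⟩) ⟨u1, u2⟩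
  -- (2)
  · intro I hI hG x hx
    have hN : NegP g₁ g₂ I := by
      rcases hI with hN | hP
      · exact hN
      · simp only [if_pos hP] at hG; norm_num at hG
    exact negP_rigid hmve hg₁ hg₂ hN hx.1 hx.2
  -- (3)
  · intro I hI hG x hx
    have hP : NegP g₂ g₁ I := by
      by_contra hP
      simp only [if_neg hP] at hG; norm_num at hG
    obtain ⟨r1, r2⟩ := negP_rigid hsymm hg₂ hg₁ hP hx.1 hx.2
    exact ⟨r2, r1⟩
  -- (4)
  · intro I hI hne
    constructor
    · intro hG
      have hN : NegP g₁ g₂ I := by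
        rcases hI with hN | hP
        · exact hN
        · simp only [if_pos hP] at hG; norm_num at hG
      exact left_neg hmve hg₁ hg₂ hN fun J hJ => hne J hJ
    · intro hG
      have hP : NegP g₂ g₁ I := by
        by_contra hP
        simp only [if_neg hP] at hG; norm_num at hG
      obtain ⟨r1, r2⟩ := left_neg hsymm hg₂ hg₁ hP fun J hJ => hne J hJ.symm
      exact ⟨r2, r1⟩
  -- (5)
  · intro I hI hne
    constructor
    · intro hG
      have hN : NegP g₁ g₂ I := by
        rcases hI with hN | hP
        · exact hN
        · simp only [if_pos hP] at hG; norm_num at hG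
      exact right_neg hmve hg₁ hg₂ hN fun J hJ => hne J hJ
    · intro hG
      have hP : NegP g₂ g₁ I := by
        by_contra hP
        simp only [if_neg hP] at hG; norm_num at hG
      obtain ⟨r1, r2⟩ := right_neg hsymm hg₂ hg₁ hP fun J hJ => hne J hJ.symm
      exact ⟨r2, r1⟩
  -- (6)
  · intro I hI J hJ _ he hG
    have hP : NegP g₂ g₁ I := by
      by_contra hP
      simp only [if_neg hP] at hG; norm_num at hG
    exact adj_neg hsymm hg₂ hg₁ hP hJ.symm he
  -- (7)
  · intro I hI J hJ _ he hG
    have hN : NegP g₁ g₂ I := by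
      rcases hI with hN | hP
      · exact hN
      · simp only [if_pos hP] at hG; norm_num at hG
    exact adj_neg hmve hg₁ hg₂ hN hJ he
end

section
/- Let g₁,g₂ : ℝ₊ → ℝ₊ satisfy the mean value exclusion condition. Then for every x ≥ 0, the set {y ∈ ℝ₊ : x < y and g₁(y) = x} is bounded above; in particular there is no sequence y_k with x < y_k, g₁(y_k) = x for all k, and y_k → ∞. -/
/-- Under mean value exclusion, for each `x ≥ 0` the set of `y > x` with `g₁ y = x` is
bounded above; in particular there is no sequence `y_k → ∞` with `x < y_k` and
`g₁ (y_k) = x` for all `k`. -/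
theorem stmt14 (g₁ g₂ : ℝ → ℝ)
    (hg₁ : ∀ x : ℝ, 0 ≤ x → 0 ≤ g₁ x) (hg₂ : ∀ x : ℝ, 0 ≤ x → 0 ≤ g₂ x)
    (hmve : MVE g₁ g₂) :
    ∀ x : ℝ, 0 ≤ x →
      BddAbove {y : ℝ | x < y ∧ g₁ y = x} ∧
      ¬ ∃ y : ℕ → ℝ, (∀ k, x < y k ∧ g₁ (y k) = x) ∧
          Filter.Tendsto y Filter.atTop Filter.atTop := by
  intro x hx
  have hbdd : BddAbove {y : ℝ | x < y ∧ g₁ y = x} := by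
    by_contra hub
    -- the set is nonempty
    obtain ⟨y₀, hy₀⟩ : ∃ y₀, y₀ ∈ {y : ℝ | x < y ∧ g₁ y = x} := by
      by_contra h
      push_neg at h
      exact hub ⟨0, fun z hz => absurd hz (h z)⟩
    obtain ⟨hy₀x, hy₀g⟩ := hy₀
    have hy₀0 : 0 ≤ y₀ := le_of_lt (lt_of_le_of_lt hx hy₀x)
    -- Claim: g₂ t < x for all t ≥ 0
    have hclaim : ∀ t : ℝ, 0 ≤ t → g₂ t < x := by
      intro t ht
      by_contra hge
      push_neg at hge
      -- find y in the set with y > g₂ t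
      have : ¬ (g₂ t) ∈ upperBounds {y : ℝ | x < y ∧ g₁ y = x} := fun h => hub ⟨_, h⟩
      simp only [upperBounds, Set.mem_setOf_eq, not_forall] at this
      obtain ⟨y, hy, hylt⟩ := this
      push_neg at hylt
      have hy0 : 0 ≤ y := le_of_lt (lt_of_le_of_lt hx hy.1)
      have := (hmve y t (g₂ t) hy0 ht (hg₂ t ht)).1
        (Or.inr ⟨hy.2 ▸ hge, hylt⟩)
      exact this rfl
    have h2 := (hmve y₀ y₀ x hy₀0 hy₀0 hx).2
      (Or.inr ⟨le_of_lt (hclaim y₀ hy₀0), hy₀x⟩)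
    exact h2 hy₀g.symm
  refine ⟨hbdd, ?_⟩
  rintro ⟨y, hy, hty⟩
  obtain ⟨M, hM⟩ := hbdd
  obtain ⟨k, hk⟩ := (Filter.tendsto_atTop.1 hty (M + 1)).exists
  have := hM ⟨(hy k).1, (hy k).2⟩
  linarith
end

section
/- Let g₁,g₂ : ℝ₊ → ℝ₊ satisfy the mean value exclusion condition, and let D be the associated family of intervals. If x ∈ ℝ₊ does not belong to the closure of any interval in D, then g₁(x) = g₂(x) = x. -/
/-- The interval `(I.1, I.2)` belongs to the family `D = D₃ ∪ D₄ ∪ D₅ ∪ D₆`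
associated with `g₁`. -/
def memD (g₁ : ℝ → ℝ) (I : ℝ × ℝ) : Prop :=
  (0 ≤ I.1 ∧ I.1 < I.2) ∧
  ((g₁ I.1 = I.2 ∧ ∀ x', 0 ≤ x' → x' < I.1 → g₁ x' ≠ I.2) ∨
   (g₁ I.2 = I.1 ∧ ∀ y', I.2 < y' → g₁ y' ≠ I.1) ∨
   ((∃ x : ℕ → ℝ, StrictAnti x ∧ Filter.Tendsto x Filter.atTop (nhds I.1) ∧
       ∀ k, g₁ (x k) = I.2) ∧ ∀ x', 0 ≤ x' → x' ≤ I.1 → g₁ x' ≠ I.2) ∨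
   ((∃ y : ℕ → ℝ, StrictMono y ∧ Filter.Tendsto y Filter.atTop (nhds I.2) ∧
       ∀ k, g₁ (y k) = I.1) ∧ ∀ y', I.2 ≤ y' → g₁ y' ≠ I.1))

/-- If `g₁ y > y ≥ 0`, there is an interval of `D` of the form `(a, g₁ y)` with `a ≤ y`. -/
lemma coverA (g₁ : ℝ → ℝ) {y : ℝ} (hy : 0 ≤ y) (hgy : y < g₁ y) :
    ∃ I : ℝ × ℝ, memD g₁ I ∧ I.1 ≤ y ∧ I.2 = g₁ y := by
  set b := g₁ y with hb
  set S : Set ℝ := {x' | 0 ≤ x' ∧ x' < b ∧ g₁ x' = b} with hS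
  have hyS : y ∈ S := ⟨hy, hgy, rfl⟩
  have hne : S.Nonempty := ⟨y, hyS⟩
  have hbdd : BddBelow S := ⟨0, fun z hz => hz.1⟩
  set a := sInf S with ha
  have hay : a ≤ y := csInf_le hbdd hyS
  have ha0 : 0 ≤ a := le_csInf hne fun z hz => hz.1
  have hab : a < b := lt_of_le_of_lt hay hgy
  by_cases hmem : a ∈ S
  · refine ⟨(a, b), ⟨⟨ha0, hab⟩, Or.inl ⟨hmem.2.2, ?_⟩⟩, hay, rfl⟩
    intro x' hx'0 hx'a hgx'
    exact absurd (csInf_le hbdd ⟨hx'0, lt_trans hx'a hab, hgx'⟩) (not_le.2 hx'a)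
  · obtain ⟨u, hu1, _, hu3, hu4⟩ :=
      (isGLB_csInf hne hbdd).exists_seq_strictAnti_tendsto_of_notMem hmem hne
    refine ⟨(a, b), ⟨⟨ha0, hab⟩, Or.inr (Or.inr (Or.inl ⟨⟨u, hu1, hu3, fun k => (hu4 k).2.2⟩,
      ?_⟩))⟩, hay, rfl⟩
    intro x' hx'0 hx'a hgx'
    have hx'S : x' ∈ S := ⟨hx'0, lt_of_le_of_lt hx'a hab, hgx'⟩
    have : a ≤ x' := csInf_le hbdd hx'S
    exact hmem (le_antisymm this hx'a ▸ hx'S)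

/-- If `0 ≤ g₁ y < y`, there is an interval of `D` of the form `(g₁ y, b)` with `y ≤ b`.
Boundedness of the relevant set uses the mean value exclusion condition. -/
lemma coverB (g₁ g₂ : ℝ → ℝ)
    (hg₁ : ∀ x : ℝ, 0 ≤ x → 0 ≤ g₁ x) (hg₂ : ∀ x : ℝ, 0 ≤ x → 0 ≤ g₂ x)
    (hmve : MVE g₁ g₂) {y : ℝ} (hy : 0 ≤ y) (hgy : g₁ y < y) :
    ∃ I : ℝ × ℝ, memD g₁ I ∧ I.1 = g₁ y ∧ y ≤ I.2 := by
  set a := g₁ y with ha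
  have ha0 : 0 ≤ a := hg₁ y hy
  set S : Set ℝ := {y' | a < y' ∧ g₁ y' = a} with hS
  have hyS : y ∈ S := ⟨hgy, rfl⟩
  have hne : S.Nonempty := ⟨y, hyS⟩
  have hbdd : BddAbove S := by
    by_contra hub
    -- every value of g₂ is < a
    have hg2lt : ∀ t, 0 ≤ t → g₂ t < a := by
      intro t ht
      by_contra hz
      push_neg at hz
      obtain ⟨y', hy'S, hy'⟩ := not_bddAbove_iff.1 hub (g₂ t)
      have hy'0 : (0:ℝ) ≤ y' := le_trans ha0 (le_of_lt hy'S.1)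
      have hz0 : (0:ℝ) ≤ g₂ t := hg₂ t ht
      exact (hmve y' t (g₂ t) hy'0 ht hz0).1
        (Or.inr ⟨hy'S.2 ▸ hz, hy'⟩) rfl
    have := (hmve y y a hy hy ha0).2 (Or.inr ⟨le_of_lt (hg2lt y hy), hgy⟩)
    exact this ha.symm
  set b := sSup S with hb
  have hyb : y ≤ b := le_csSup hbdd hyS
  have hab : a < b := lt_of_lt_of_le hgy hyb
  by_cases hmem : b ∈ S
  · refine ⟨(a, b), ⟨⟨ha0, hab⟩, Or.inr (Or.inl ⟨hmem.2, ?_⟩)⟩, rfl, hyb⟩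
    intro y' hy' hgy'
    exact absurd (le_csSup hbdd ⟨lt_trans hab hy', hgy'⟩) (not_le.2 hy')
  · obtain ⟨u, hu1, _, hu3, hu4⟩ :=
      (isLUB_csSup hne hbdd).exists_seq_strictMono_tendsto_of_notMem hmem hne
    refine ⟨(a, b), ⟨⟨ha0, hab⟩, Or.inr (Or.inr (Or.inr ⟨⟨u, hu1, hu3, fun k => (hu4 k).2⟩,
      ?_⟩))⟩, rfl, hyb⟩
    intro y' hy' hgy'
    have hy'S : y' ∈ S := ⟨lt_of_lt_of_le hab hy', hgy'⟩
    have : y' ≤ b := le_csSup hbdd hy'S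
    exact hmem ((le_antisymm this hy').symm ▸ hy'S)

/-- If `x ≥ 0` belongs to the closure of no interval of the family `D` associated with
`g₁`, then `g₁ x = g₂ x = x`. -/
theorem stmt15 (g₁ g₂ : ℝ → ℝ)
    (hg₁ : ∀ x : ℝ, 0 ≤ x → 0 ≤ g₁ x) (hg₂ : ∀ x : ℝ, 0 ≤ x → 0 ≤ g₂ x)
    (hmve : MVE g₁ g₂) :
    ∀ x : ℝ, 0 ≤ x → (∀ I : ℝ × ℝ, memD g₁ I → x ∉ Set.Icc I.1 I.2) →
      g₁ x = x ∧ g₂ x = x := by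
  intro x hx hD
  have h1 : g₁ x = x := by
    rcases lt_trichotomy (g₁ x) x with h | h | h
    · obtain ⟨I, hI, hI1, hI2⟩ := coverB g₁ g₂ hg₁ hg₂ hmve hx h
      exact absurd ⟨hI1 ▸ le_of_lt h, hI2⟩ (hD I hI)
    · exact h
    · obtain ⟨I, hI, hI1, hI2⟩ := coverA g₁ hx h
      exact absurd ⟨hI1, hI2 ▸ le_of_lt h⟩ (hD I hI)
  refine ⟨h1, ?_⟩
  rcases lt_trichotomy (g₂ x) x with h | h | h
  · -- a := g₂ x < x
    set a := g₂ x with ha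
    have ha0 : 0 ≤ a := hg₂ x hx
    set y := (a + x) / 2 with hy
    have hay : a < y := by simp only [hy]; linarith
    have hyx : y < x := by simp only [hy]; linarith
    have hy0 : 0 ≤ y := le_trans ha0 (le_of_lt hay)
    have hexcl : ∀ z, 0 ≤ z → a ≤ z → z < x → ∀ t, 0 ≤ t → z ≠ g₁ t := by
      intro z hz0 hz1 hz2 t ht
      exact (hmve x t z hx ht hz0).2 (Or.inr ⟨hz1, hz2⟩)
    rcases lt_trichotomy (g₁ y) y with h' | h' | h'
    · have hga : g₁ y < a := by
        by_contra hc
        push_neg at hc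
        exact hexcl (g₁ y) (hg₁ y hy0) hc (lt_trans h' hyx) y hy0 rfl
      have := (hmve y x a hy0 hx ha0).1 (Or.inr ⟨le_of_lt hga, hay⟩)
      exact absurd ha this
    · exact absurd rfl (h' ▸ hexcl y hy0 (le_of_lt hay) hyx y hy0)
    · have hgx : x ≤ g₁ y := by
        by_contra hc
        push_neg at hc
        exact hexcl (g₁ y) (hg₁ y hy0) (le_of_lt (lt_trans hay h')) hc y hy0 rfl
      obtain ⟨I, hI, hI1, hI2⟩ := coverA g₁ hy0 h'
      exact absurd ⟨le_trans hI1 (le_of_lt hyx), hI2 ▸ hgx⟩ (hD I hI)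
  · exact h
  · -- b := g₂ x > x
    set b := g₂ x with hb
    set y := (x + b) / 2 with hy
    have hxy : x < y := by simp only [hy]; linarith
    have hyb : y < b := by simp only [hy]; linarith
    have hy0 : 0 ≤ y := le_trans hx (le_of_lt hxy)
    have hexcl : ∀ z, x < z → z ≤ b → ∀ t, 0 ≤ t → z ≠ g₁ t := by
      intro z hz1 hz2 t ht
      exact (hmve x t z hx ht (le_trans hx (le_of_lt hz1))).2 (Or.inl ⟨hz1, hz2⟩)
    rcases lt_trichotomy (g₁ y) y with h' | h' | h'
    · have hga : g₁ y ≤ x := by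
        by_contra hc
        push_neg at hc
        exact hexcl (g₁ y) hc (le_of_lt (lt_trans h' hyb)) y hy0 rfl
      obtain ⟨I, hI, hI1, hI2⟩ := coverB g₁ g₂ hg₁ hg₂ hmve hy0 h'
      exact absurd ⟨hI1 ▸ hga, le_trans (le_of_lt hxy) hI2⟩ (hD I hI)
    · exact absurd rfl (h' ▸ hexcl y hxy (le_of_lt hyb) y hy0)
    · have hgb : b < g₁ y := by
        by_contra hc
        push_neg at hc
        exact hexcl (g₁ y) (lt_trans hxy h') hc y hy0 rfl
      have hb0 : 0 ≤ b := le_trans hy0 (le_of_lt hyb)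
      have := (hmve y x b hy0 hx hb0).1 (Or.inl ⟨hyb, le_of_lt hgb⟩)
      exact absurd hb this
end

section
/- Let g₁,g₂ : ℝ₊ → ℝ₊ satisfy the mean value exclusion condition, and let D be the associated family of intervals. Then every I ∈ D satisfies the '+' condition or the '−' condition. Moreover, if I satisfies the '+' condition then g₂(I⁻) = I⁻ and g₁(I⁺) = I⁺, and if I satisfies the '−' condition then g₁(I⁻) = I⁻ and g₂(I⁺) = I⁺. -/
section Aux

variable {g₁ g₂ : ℝ → ℝ}

/-- If `b` is a value of `g₁` at a nonnegative point, then no `s < b` can have `g₁ s > b`. -/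
lemma plusL1 (hmve : MVE g₁ g₂) (hg₂ : ∀ x : ℝ, 0 ≤ x → 0 ≤ g₂ x)
    {b : ℝ} (hB : ∃ p, 0 ≤ p ∧ g₁ p = b) :
    ∀ s, 0 ≤ s → s < b → b < g₁ s → False := by
  intro s hs hsb hbs
  obtain ⟨p, hp, hpb⟩ := hB
  set u := (b + g₁ s) / 2 with hu
  have hu1 : b < u := by rw [hu]; linarith
  have hu2 : u < g₁ s := by rw [hu]; linarith
  have hu0 : 0 ≤ u := by linarith [hs.trans hsb.le]
  have hgu0 : 0 ≤ g₂ u := hg₂ u hu0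
  rcases lt_trichotomy (g₂ u) u with h | h | h
  · rcases le_or_gt (g₂ u) b with h2 | h2
    · exact (hmve u p b hu0 hp (by linarith)).2 (Or.inr ⟨h2, hu1⟩) hpb.symm
    · exact (hmve s u (g₂ u) hs hu0 hgu0).1 (Or.inl ⟨by linarith, by linarith⟩) rfl
  · exact (hmve s u u hs hu0 hu0).1 (Or.inl ⟨by linarith, hu2.le⟩) h.symm
  · rcases le_or_gt (g₂ u) (g₁ s) with h2 | h2
    · exact (hmve s u (g₂ u) hs hu0 hgu0).1 (Or.inl ⟨by linarith, h2⟩) rfl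
    · exact (hmve u s (g₁ s) hu0 hs (by linarith)).2 (Or.inl ⟨hu2, h2.le⟩) rfl

/-- Under the `+` side hypotheses, `g₂ t ≤ a` on `(a,b)`. -/
lemma plusStep12 (hmve : MVE g₁ g₂) (hg₂ : ∀ x : ℝ, 0 ≤ x → 0 ≤ g₂ x)
    {a b : ℝ} (ha : 0 ≤ a)
    (hA : ∀ y, a < y → y ≤ b → ∀ t, 0 ≤ t → y ≠ g₂ t)
    (hB : ∃ p, 0 ≤ p ∧ g₁ p = b) :
    ∀ t, a < t → t < b → g₂ t ≤ a := by
  intro t hat htb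
  have ht0 : 0 ≤ t := ha.trans hat.le
  by_contra h
  push_neg at h
  rcases le_or_gt (g₂ t) b with h2 | h2
  · exact hA (g₂ t) h h2 t ht0 rfl
  · obtain ⟨p, hp, hpb⟩ := hB
    exact (hmve t p b ht0 hp (by linarith)).2 (Or.inl ⟨htb, h2.le⟩) hpb.symm

lemma plusG1 (hmve : MVE g₁ g₂) (hg₁ : ∀ x : ℝ, 0 ≤ x → 0 ≤ g₁ x)
    (hg₂ : ∀ x : ℝ, 0 ≤ x → 0 ≤ g₂ x)
    {a b : ℝ} (ha : 0 ≤ a)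
    (hA : ∀ y, a < y → y ≤ b → ∀ t, 0 ≤ t → y ≠ g₂ t)
    (hB : ∃ p, 0 ≤ p ∧ g₁ p = b) :
    ∀ t, a < t → t < b → g₁ t = b := by
  intro t hat htb
  have ht0 : 0 ≤ t := ha.trans hat.le
  have hgt : g₂ t ≤ a := plusStep12 hmve hg₂ ha hA hB t hat htb
  have hgt0 : 0 ≤ g₂ t := hg₂ t ht0
  have hg1t0 : 0 ≤ g₁ t := hg₁ t ht0
  have h3 : t ≤ g₁ t := by
    by_contra h
    push_neg at h
    rcases le_or_gt (g₂ t) (g₁ t) with h2 | h2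
    · exact (hmve t t (g₁ t) ht0 ht0 hg1t0).2 (Or.inr ⟨h2, h⟩) rfl
    · exact (hmve t t (g₂ t) ht0 ht0 hgt0).1 (Or.inr ⟨h2.le, by linarith⟩) rfl
  have h4 : b ≤ g₁ t := by
    by_contra h
    push_neg at h
    set u := (g₁ t + b) / 2 with hudef
    have hu1 : g₁ t < u := by rw [hudef]; linarith
    have hu2 : u < b := by rw [hudef]; linarith
    have hau : a < u := by linarith
    have hgu : g₂ u ≤ a := plusStep12 hmve hg₂ ha hA hB u hau hu2
    exact (hmve u t (g₁ t) (by linarith) ht0 hg1t0).2 (Or.inr ⟨by linarith, hu1⟩) rfl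
  rcases h4.lt_or_eq with h5 | h5
  · exact ((plusL1 hmve hg₂ hB) t ht0 htb h5).elim
  · exact h5.symm

lemma plusG2 (hmve : MVE g₁ g₂) (hg₁ : ∀ x : ℝ, 0 ≤ x → 0 ≤ g₁ x)
    (hg₂ : ∀ x : ℝ, 0 ≤ x → 0 ≤ g₂ x)
    {a b : ℝ} (ha : 0 ≤ a) (hab : a < b)
    (hA : ∀ y, a < y → y ≤ b → ∀ t, 0 ≤ t → y ≠ g₂ t)
    (hB : ∃ p, 0 ≤ p ∧ g₁ p = b)
    (hC : ∀ u, 0 ≤ u → u < a → g₁ u ≠ b) :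
    ∀ t, a < t → t < b → g₂ t = a := by
  intro t hat htb
  have ht0 : 0 ≤ t := ha.trans hat.le
  have hgt : g₂ t ≤ a := plusStep12 hmve hg₂ ha hA hB t hat htb
  rcases hgt.lt_or_eq with h | h
  · exfalso
    have hgt0 : 0 ≤ g₂ t := hg₂ t ht0
    set u := (g₂ t + a) / 2 with hudef
    have hu1 : g₂ t < u := by rw [hudef]; linarith
    have hu2 : u < a := by rw [hudef]; linarith
    have hu0 : 0 ≤ u := by linarith
    have hg1u0 : 0 ≤ g₁ u := hg₁ u hu0
    rcases lt_or_ge (g₁ u) (g₂ t) with h1 | h1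
    · exact (hmve u t (g₂ t) hu0 ht0 hgt0).1 (Or.inr ⟨h1.le, hu1⟩) rfl
    rcases lt_or_ge (g₁ u) t with h2 | h2
    · exact (hmve t u (g₁ u) ht0 hu0 hg1u0).2 (Or.inr ⟨h1, h2⟩) rfl
    rcases lt_trichotomy (g₁ u) b with h3 | h3 | h3
    · set v := (g₁ u + b) / 2 with hvdef
      have hv1 : g₁ u < v := by rw [hvdef]; linarith
      have hv2 : v < b := by rw [hvdef]; linarith
      have hav : a < v := by linarith
      have hgv : g₂ v ≤ a := plusStep12 hmve hg₂ ha hA hB v hav hv2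
      exact (hmve v u (g₁ u) (by linarith) hu0 hg1u0).2 (Or.inr ⟨by linarith, hv1⟩) rfl
    · exact hC u hu0 hu2 h3
    · exact plusL1 hmve hg₂ hB u hu0 (by linarith) h3
  · exact h

/-- If `a` is a value of `g₁` at a nonnegative point, then no `s > a` can have `g₁ s < a`. -/
lemma minusL1 (hmve : MVE g₁ g₂) (hg₁ : ∀ x : ℝ, 0 ≤ x → 0 ≤ g₁ x)
    (hg₂ : ∀ x : ℝ, 0 ≤ x → 0 ≤ g₂ x)
    {a : ℝ} (hB : ∃ p, 0 ≤ p ∧ g₁ p = a) :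
    ∀ s, 0 ≤ s → a < s → g₁ s < a → False := by
  intro s hs has hsa
  obtain ⟨p, hp, hpa⟩ := hB
  have hg1s0 : 0 ≤ g₁ s := hg₁ s hs
  set u := (g₁ s + a) / 2 with hudef
  have hu1 : g₁ s < u := by rw [hudef]; linarith
  have hu2 : u < a := by rw [hudef]; linarith
  have hu0 : 0 ≤ u := by linarith
  have hgu0 : 0 ≤ g₂ u := hg₂ u hu0
  rcases lt_trichotomy (g₂ u) u with h | h | h
  · rcases lt_or_ge (g₂ u) (g₁ s) with h2 | h2
    · exact (hmve u s (g₁ s) hu0 hs hg1s0).2 (Or.inr ⟨h2.le, hu1⟩) rfl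
    · exact (hmve s u (g₂ u) hs hu0 hgu0).1 (Or.inr ⟨h2, by linarith⟩) rfl
  · exact (hmve s u u hs hu0 hu0).1 (Or.inr ⟨hu1.le, by linarith⟩) h.symm
  · rcases lt_or_ge (g₂ u) a with h2 | h2
    · exact (hmve s u (g₂ u) hs hu0 hgu0).1 (Or.inr ⟨by linarith, by linarith⟩) rfl
    · exact (hmve u p a hu0 hp (by linarith)).2 (Or.inl ⟨hu2, h2⟩) hpa.symm

/-- Under the `−` side hypotheses, `b ≤ g₂ t` on `(a,b)`. -/
lemma minusStep12 (hmve : MVE g₁ g₂)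
    {a b : ℝ} (ha : 0 ≤ a)
    (hA : ∀ y, a ≤ y → y < b → ∀ t, 0 ≤ t → y ≠ g₂ t)
    (hB : ∃ p, 0 ≤ p ∧ g₁ p = a) :
    ∀ t, a < t → t < b → b ≤ g₂ t := by
  intro t hat htb
  have ht0 : 0 ≤ t := ha.trans hat.le
  by_contra h
  push_neg at h
  rcases le_or_gt a (g₂ t) with h2 | h2
  · exact hA (g₂ t) h2 h t ht0 rfl
  · obtain ⟨p, hp, hpa⟩ := hB
    exact (hmve t p a ht0 hp ha).2 (Or.inr ⟨h2.le, hat⟩) hpa.symm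

lemma minusG1 (hmve : MVE g₁ g₂) (hg₁ : ∀ x : ℝ, 0 ≤ x → 0 ≤ g₁ x)
    (hg₂ : ∀ x : ℝ, 0 ≤ x → 0 ≤ g₂ x)
    {a b : ℝ} (ha : 0 ≤ a)
    (hA : ∀ y, a ≤ y → y < b → ∀ t, 0 ≤ t → y ≠ g₂ t)
    (hB : ∃ p, 0 ≤ p ∧ g₁ p = a) :
    ∀ t, a < t → t < b → g₁ t = a := by
  intro t hat htb
  have ht0 : 0 ≤ t := ha.trans hat.le
  have hgt : b ≤ g₂ t := minusStep12 hmve ha hA hB t hat htb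
  have hgt0 : 0 ≤ g₂ t := hg₂ t ht0
  have hg1t0 : 0 ≤ g₁ t := hg₁ t ht0
  have h3 : g₁ t ≤ t := by
    by_contra h
    push_neg at h
    rcases le_or_gt (g₁ t) (g₂ t) with h2 | h2
    · exact (hmve t t (g₁ t) ht0 ht0 hg1t0).2 (Or.inl ⟨h, h2⟩) rfl
    · exact (hmve t t (g₂ t) ht0 ht0 hgt0).1 (Or.inl ⟨by linarith, h2.le⟩) rfl
  have h4 : g₁ t ≤ a := by
    by_contra h
    push_neg at h
    set u := (a + g₁ t) / 2 with hudef
    have hu1 : a < u := by rw [hudef]; linarith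
    have hu2 : u < g₁ t := by rw [hudef]; linarith
    have hub : u < b := by linarith
    have hgu : b ≤ g₂ u := minusStep12 hmve ha hA hB u hu1 hub
    exact (hmve u t (g₁ t) (by linarith) ht0 hg1t0).2 (Or.inl ⟨hu2, by linarith⟩) rfl
  rcases h4.lt_or_eq with h5 | h5
  · exact ((minusL1 hmve hg₁ hg₂ hB) t ht0 hat h5).elim
  · exact h5

lemma minusG2 (hmve : MVE g₁ g₂) (hg₁ : ∀ x : ℝ, 0 ≤ x → 0 ≤ g₁ x)
    (hg₂ : ∀ x : ℝ, 0 ≤ x → 0 ≤ g₂ x)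
    {a b : ℝ} (ha : 0 ≤ a) (hab : a < b)
    (hA : ∀ y, a ≤ y → y < b → ∀ t, 0 ≤ t → y ≠ g₂ t)
    (hB : ∃ p, 0 ≤ p ∧ g₁ p = a)
    (hC : ∀ v, b < v → g₁ v ≠ a) :
    ∀ t, a < t → t < b → g₂ t = b := by
  intro t hat htb
  have ht0 : 0 ≤ t := ha.trans hat.le
  have hgt : b ≤ g₂ t := minusStep12 hmve ha hA hB t hat htb
  rcases hgt.lt_or_eq with h | h
  · exfalso
    have hgt0 : 0 ≤ g₂ t := hg₂ t ht0
    set u := (b + g₂ t) / 2 with hudef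
    have hu1 : b < u := by rw [hudef]; linarith
    have hu2 : u < g₂ t := by rw [hudef]; linarith
    have hu0 : 0 ≤ u := by linarith
    have hg1u0 : 0 ≤ g₁ u := hg₁ u hu0
    rcases lt_trichotomy (g₁ u) a with h1 | h1 | h1
    · exact minusL1 hmve hg₁ hg₂ hB u hu0 (by linarith) h1
    · exact hC u hu1 h1
    rcases le_or_gt (g₁ u) t with h2 | h2
    · set v := (a + g₁ u) / 2 with hvdef
      have hv1 : a < v := by rw [hvdef]; linarith
      have hv2 : v < g₁ u := by rw [hvdef]; linarith
      have hvb : v < b := by linarith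
      have hgv : b ≤ g₂ v := minusStep12 hmve ha hA hB v hv1 hvb
      exact (hmve v u (g₁ u) (by linarith) hu0 hg1u0).2 (Or.inl ⟨hv2, by linarith⟩) rfl
    rcases le_or_gt (g₁ u) (g₂ t) with h3 | h3
    · exact (hmve t u (g₁ u) ht0 hu0 hg1u0).2 (Or.inl ⟨h2, h3⟩) rfl
    · exact (hmve u t (g₂ t) hu0 ht0 hgt0).1 (Or.inl ⟨hu2, h3.le⟩) rfl
  · exact h.symm

/-- Endpoint identities from the `+` condition. -/
lemma plusEndpoints (hmve : MVE g₁ g₂) (hg₁ : ∀ x : ℝ, 0 ≤ x → 0 ≤ g₁ x)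
    (hg₂ : ∀ x : ℝ, 0 ≤ x → 0 ≤ g₂ x)
    {a b : ℝ} (ha : 0 ≤ a) (hab : a < b)
    (hp : ∀ t, a < t → t < b → g₁ t = b ∧ g₂ t = a) :
    g₂ a = a ∧ g₁ b = b := by
  have hb0 : 0 ≤ b := ha.trans hab.le
  set t₀ := (a + b) / 2 with ht₀def
  have ht₀1 : a < t₀ := by rw [ht₀def]; linarith
  have ht₀2 : t₀ < b := by rw [ht₀def]; linarith
  have ht₀0 : 0 ≤ t₀ := ha.trans ht₀1.le
  obtain ⟨hbA, haB⟩ := hp t₀ ht₀1 ht₀2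
  have h2a0 : 0 ≤ g₂ a := hg₂ a ha
  constructor
  · -- g₂ a = a
    have hle : g₂ a ≤ a := by
      by_contra h
      push_neg at h
      rcases le_or_gt (g₂ a) b with h2 | h2
      · set t' := (a + g₂ a) / 2 with ht'def
        have h3 : a < t' := by rw [ht'def]; linarith
        have h4 : t' < g₂ a := by rw [ht'def]; linarith
        have h5 : t' < b := by linarith
        have h6 : g₁ t' = b := (hp t' h3 h5).1
        exact (hmve t' a (g₂ a) (ha.trans h3.le) ha h2a0).1
          (Or.inl ⟨h4, by rw [h6]; exact h2⟩) rfl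
      · exact (hmve a t₀ b ha ht₀0 hb0).2 (Or.inl ⟨hab, h2.le⟩) hbA.symm
    rcases hle.lt_or_eq with h | h
    · exfalso
      set u := (g₂ a + a) / 2 with hudef
      have hu1 : g₂ a < u := by rw [hudef]; linarith
      have hu2 : u < a := by rw [hudef]; linarith
      have hu0 : 0 ≤ u := by linarith
      have hg1u0 : 0 ≤ g₁ u := hg₁ u hu0
      rcases lt_or_ge (g₁ u) (g₂ a) with h1 | h1
      · exact (hmve u a (g₂ a) hu0 ha h2a0).1 (Or.inr ⟨h1.le, hu1⟩) rfl
      rcases lt_or_ge (g₁ u) a with h2 | h2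
      · exact (hmve a u (g₁ u) ha hu0 hg1u0).2 (Or.inr ⟨h1, h2⟩) rfl
      rcases lt_or_ge (g₁ u) b with h3 | h3
      · set v := (g₁ u + b) / 2 with hvdef
        have hv1 : g₁ u < v := by rw [hvdef]; linarith
        have hv2 : v < b := by rw [hvdef]; linarith
        have hav : a < v := by linarith
        have hgv : g₂ v = a := (hp v hav hv2).2
        exact (hmve v u (g₁ u) (ha.trans hav.le) hu0 hg1u0).2
          (Or.inr ⟨by rw [hgv]; exact h2, hv1⟩) rfl
      · exact (hmve u t₀ a hu0 ht₀0 ha).1 (Or.inl ⟨hu2, by linarith⟩) haB.symm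
    · exact h
  · -- g₁ b = b
    have hg1b0 : 0 ≤ g₁ b := hg₁ b hb0
    have hge : b ≤ g₁ b := by
      by_contra h
      push_neg at h
      rcases le_or_gt (g₁ b) a with h2 | h2
      · exact (hmve b t₀ a hb0 ht₀0 ha).1 (Or.inr ⟨h2, hab⟩) haB.symm
      · set t' := (g₁ b + b) / 2 with ht'def
        have h3 : g₁ b < t' := by rw [ht'def]; linarith
        have h4 : t' < b := by rw [ht'def]; linarith
        have h5 : a < t' := by linarith
        have h6 : g₂ t' = a := (hp t' h5 h4).2
        exact (hmve t' b (g₁ b) (ha.trans h5.le) hb0 hg1b0).2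
          (Or.inr ⟨by rw [h6]; exact h2.le, h3⟩) rfl
    rcases hge.lt_or_eq with h | h
    · exfalso
      set u := (b + g₁ b) / 2 with hudef
      have hu1 : b < u := by rw [hudef]; linarith
      have hu2 : u < g₁ b := by rw [hudef]; linarith
      have hu0 : 0 ≤ u := by linarith
      have hgu0 : 0 ≤ g₂ u := hg₂ u hu0
      rcases le_or_gt (g₂ u) b with h1 | h1
      · exact (hmve u t₀ b hu0 ht₀0 hb0).2 (Or.inr ⟨h1, hu1⟩) hbA.symm
      rcases le_or_gt (g₂ u) (g₁ b) with h2 | h2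
      · exact (hmve b u (g₂ u) hb0 hu0 hgu0).1 (Or.inl ⟨h1, h2⟩) rfl
      · exact (hmve u b (g₁ b) hu0 hb0 hg1b0).2 (Or.inl ⟨hu2, h2.le⟩) rfl
    · exact h.symm

/-- Endpoint identities from the `−` condition. -/
lemma minusEndpoints (hmve : MVE g₁ g₂) (hg₁ : ∀ x : ℝ, 0 ≤ x → 0 ≤ g₁ x)
    (hg₂ : ∀ x : ℝ, 0 ≤ x → 0 ≤ g₂ x)
    {a b : ℝ} (ha : 0 ≤ a) (hab : a < b)
    (hp : ∀ t, a < t → t < b → g₁ t = a ∧ g₂ t = b) :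
    g₁ a = a ∧ g₂ b = b := by
  have hb0 : 0 ≤ b := ha.trans hab.le
  set t₀ := (a + b) / 2 with ht₀def
  have ht₀1 : a < t₀ := by rw [ht₀def]; linarith
  have ht₀2 : t₀ < b := by rw [ht₀def]; linarith
  have ht₀0 : 0 ≤ t₀ := ha.trans ht₀1.le
  obtain ⟨haA, hbB⟩ := hp t₀ ht₀1 ht₀2
  have h1a0 : 0 ≤ g₁ a := hg₁ a ha
  constructor
  · -- g₁ a = a
    have hle : g₁ a ≤ a := by
      by_contra h
      push_neg at h
      rcases le_or_gt b (g₁ a) with h2 | h2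
      · exact (hmve a t₀ b ha ht₀0 hb0).1 (Or.inl ⟨hab, h2⟩) hbB.symm
      · set t' := (a + g₁ a) / 2 with ht'def
        have h3 : a < t' := by rw [ht'def]; linarith
        have h4 : t' < g₁ a := by rw [ht'def]; linarith
        have h5 : t' < b := by linarith
        have h6 : g₂ t' = b := (hp t' h3 h5).2
        exact (hmve t' a (g₁ a) (ha.trans h3.le) ha h1a0).2
          (Or.inl ⟨h4, by rw [h6]; exact h2.le⟩) rfl
    rcases hle.lt_or_eq with h | h
    · exfalso
      set u := (g₁ a + a) / 2 with hudef
      have hu1 : g₁ a < u := by rw [hudef]; linarith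
      have hu2 : u < a := by rw [hudef]; linarith
      have hu0 : 0 ≤ u := by linarith
      have hgu0 : 0 ≤ g₂ u := hg₂ u hu0
      rcases le_or_gt a (g₂ u) with h1 | h1
      · exact (hmve u t₀ a hu0 ht₀0 ha).2 (Or.inl ⟨hu2, h1⟩) haA.symm
      rcases le_or_gt (g₁ a) (g₂ u) with h2 | h2
      · exact (hmve a u (g₂ u) ha hu0 hgu0).1 (Or.inr ⟨h2, h1⟩) rfl
      · exact (hmve u a (g₁ a) hu0 ha h1a0).2 (Or.inr ⟨h2.le, hu1⟩) rfl
    · exact h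
  · -- g₂ b = b
    have h2b0 : 0 ≤ g₂ b := hg₂ b hb0
    have hge : b ≤ g₂ b := by
      by_contra h
      push_neg at h
      rcases le_or_gt (g₂ b) a with h2 | h2
      · exact (hmve b t₀ a hb0 ht₀0 ha).2 (Or.inr ⟨h2, hab⟩) haA.symm
      · set t' := (g₂ b + b) / 2 with ht'def
        have h3 : g₂ b < t' := by rw [ht'def]; linarith
        have h4 : t' < b := by rw [ht'def]; linarith
        have h5 : a < t' := by linarith
        have h6 : g₁ t' = a := (hp t' h5 h4).1
        exact (hmve t' b (g₂ b) (ha.trans h5.le) hb0 h2b0).1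
          (Or.inr ⟨by rw [h6]; exact h2.le, h3⟩) rfl
    rcases hge.lt_or_eq with h | h
    · exfalso
      set u := (b + g₂ b) / 2 with hudef
      have hu1 : b < u := by rw [hudef]; linarith
      have hu2 : u < g₂ b := by rw [hudef]; linarith
      have hu0 : 0 ≤ u := by linarith
      have hg1u0 : 0 ≤ g₁ u := hg₁ u hu0
      rcases le_or_gt (g₁ u) b with h1 | h1
      · exact (hmve u t₀ b hu0 ht₀0 hb0).1 (Or.inr ⟨h1, hu1⟩) hbB.symm
      rcases le_or_gt (g₁ u) (g₂ b) with h2 | h2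
      · exact (hmve b u (g₁ u) hb0 hu0 hg1u0).2 (Or.inl ⟨h1, h2⟩) rfl
      · exact (hmve u b (g₂ b) hu0 hb0 h2b0).1 (Or.inl ⟨hu2, h2.le⟩) rfl
    · exact h.symm

end Aux

/-- Every interval of the family `D` satisfies the "+" condition or the "−" condition,
and the corresponding endpoint identities hold. -/
theorem stmt16 (g₁ g₂ : ℝ → ℝ)
    (hg₁ : ∀ x : ℝ, 0 ≤ x → 0 ≤ g₁ x) (hg₂ : ∀ x : ℝ, 0 ≤ x → 0 ≤ g₂ x)
    (hmve : MVE g₁ g₂) :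
    ∀ I : ℝ × ℝ, memD g₁ I →
      ((∀ t ∈ Set.Ioo I.1 I.2, g₁ t = I.2 ∧ g₂ t = I.1) ∨
        (∀ t ∈ Set.Ioo I.1 I.2, g₁ t = I.1 ∧ g₂ t = I.2)) ∧
      ((∀ t ∈ Set.Ioo I.1 I.2, g₁ t = I.2 ∧ g₂ t = I.1) →
        g₂ I.1 = I.1 ∧ g₁ I.2 = I.2) ∧
      ((∀ t ∈ Set.Ioo I.1 I.2, g₁ t = I.1 ∧ g₂ t = I.2) →
        g₁ I.1 = I.1 ∧ g₂ I.2 = I.2) := by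
  rintro ⟨a, b⟩ ⟨⟨ha, hab⟩, hD⟩
  simp only [Set.mem_Ioo] at *
  refine ⟨?_, fun h => plusEndpoints hmve hg₁ hg₂ ha hab
      (fun t h1 h2 => h t ⟨h1, h2⟩),
    fun h => minusEndpoints hmve hg₁ hg₂ ha hab (fun t h1 h2 => h t ⟨h1, h2⟩)⟩
  rcases hD with ⟨h1, hmin⟩ | ⟨h1, hmin⟩ | ⟨⟨x, hanti, hlim, hxk⟩, hmin⟩ |
    ⟨⟨y, hmono, hlim, hyk⟩, hmin⟩
  · -- D₃
    have hA : ∀ y, a < y → y ≤ b → ∀ t, 0 ≤ t → y ≠ g₂ t := fun y hy1 hy2 t ht =>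
      (hmve a t y ha ht (ha.trans hy1.le)).1 (Or.inl ⟨hy1, by rw [h1]; exact hy2⟩)
    have hB : ∃ p, 0 ≤ p ∧ g₁ p = b := ⟨a, ha, h1⟩
    exact Or.inl fun t ht => ⟨plusG1 hmve hg₁ hg₂ ha hA hB t ht.1 ht.2,
      plusG2 hmve hg₁ hg₂ ha hab hA hB hmin t ht.1 ht.2⟩
  · -- D₄
    have hb0 : 0 ≤ b := ha.trans hab.le
    have hA : ∀ y, a ≤ y → y < b → ∀ t, 0 ≤ t → y ≠ g₂ t := fun y hy1 hy2 t ht =>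
      (hmve b t y hb0 ht (ha.trans hy1)).1 (Or.inr ⟨by rw [h1]; exact hy1, hy2⟩)
    have hB : ∃ p, 0 ≤ p ∧ g₁ p = a := ⟨b, hb0, h1⟩
    exact Or.inr fun t ht => ⟨minusG1 hmve hg₁ hg₂ ha hA hB t ht.1 ht.2,
      minusG2 hmve hg₁ hg₂ ha hab hA hB hmin t ht.1 ht.2⟩
  · -- D₅
    have hge : ∀ k, a ≤ x k := fun k =>
      le_of_tendsto hlim (Filter.eventually_atTop.2 ⟨k, fun j hj => hanti.antitone hj⟩)
    have hgt : ∀ k, a < x k := fun k =>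
      lt_of_le_of_lt (hge (k + 1)) (hanti (Nat.lt_succ_self k))
    have hA : ∀ y, a < y → y ≤ b → ∀ t, 0 ≤ t → y ≠ g₂ t := by
      intro z hz1 hz2 t ht
      obtain ⟨k, hk⟩ := (hlim.eventually (gt_mem_nhds hz1)).exists
      exact (hmve (x k) t z (ha.trans (hge k)) ht (ha.trans hz1.le)).1
        (Or.inl ⟨hk, by rw [hxk k]; exact hz2⟩)
    have hB : ∃ p, 0 ≤ p ∧ g₁ p = b := ⟨x 0, ha.trans (hge 0), hxk 0⟩
    have hC : ∀ u, 0 ≤ u → u < a → g₁ u ≠ b := fun u hu hua => hmin u hu hua.le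
    exact Or.inl fun t ht => ⟨plusG1 hmve hg₁ hg₂ ha hA hB t ht.1 ht.2,
      plusG2 hmve hg₁ hg₂ ha hab hA hB hC t ht.1 ht.2⟩
  · -- D₆
    have hle : ∀ k, y k ≤ b := fun k =>
      ge_of_tendsto hlim (Filter.eventually_atTop.2 ⟨k, fun j hj => hmono.monotone hj⟩)
    have hA : ∀ z, a ≤ z → z < b → ∀ t, 0 ≤ t → z ≠ g₂ t := by
      intro z hz1 hz2 t ht
      obtain ⟨k, hk⟩ := (hlim.eventually (lt_mem_nhds hz2)).exists
      exact (hmve (y k) t z (ha.trans (hz1.trans hk.le)) ht (ha.trans hz1)).1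
        (Or.inr ⟨by rw [hyk k]; exact hz1, hk⟩)
    have hB : ∃ p, 0 ≤ p ∧ g₁ p = a := by
      obtain ⟨k, hk⟩ := (hlim.eventually (lt_mem_nhds hab)).exists
      exact ⟨y k, ha.trans hk.le, hyk k⟩
    have hC : ∀ v, b < v → g₁ v ≠ a := fun v hv => hmin v hv.le
    exact Or.inr fun t ht => ⟨minusG1 hmve hg₁ hg₂ ha hA hB t ht.1 ht.2,
      minusG2 hmve hg₁ hg₂ ha hab hA hB hC t ht.1 ht.2⟩
end

section
/- Let g₁,g₂ : ℝ₊ → ℝ₊ satisfy the mean value exclusion condition, and let D be the associated family of intervals. Then any two distinct intervals I₁, I₂ ∈ D are disjoint: I₁ ∩ I₂ = ∅. -/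
/-- A strictly antitone sequence tending to `L` stays strictly above `L`. -/
lemma seq_gt_lim {x : ℕ → ℝ} {L : ℝ} (hx : StrictAnti x)
    (hlim : Filter.Tendsto x Filter.atTop (nhds L)) (k : ℕ) : L < x k := by
  have h1 : L ≤ x (k + 1) :=
    le_of_tendsto hlim (Filter.eventually_atTop.2 ⟨k + 1, fun j hj => hx.antitone hj⟩)
  exact h1.trans_lt (hx (Nat.lt_succ_self k))

/-- A strictly monotone sequence tending to `L` stays strictly below `L`. -/
lemma seq_lt_lim {x : ℕ → ℝ} {L : ℝ} (hx : StrictMono x)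
    (hlim : Filter.Tendsto x Filter.atTop (nhds L)) (k : ℕ) : x k < L := by
  have h1 : x (k + 1) ≤ L :=
    ge_of_tendsto hlim (Filter.eventually_atTop.2 ⟨k + 1, fun j hj => hx.monotone hj⟩)
  exact (hx (Nat.lt_succ_self k)).trans_le h1

/-- The open interval of a member of `D` contains no value of `g₂`. -/
lemma memD_free {g₁ g₂ : ℝ → ℝ} (hmve : MVE g₁ g₂) {I : ℝ × ℝ}
    (hI : memD g₁ I) {m : ℝ} (h1 : I.1 < m) (h2 : m < I.2) :
    ∀ t, 0 ≤ t → g₂ t ≠ m := by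
  obtain ⟨⟨ha0, hab⟩, hc⟩ := hI
  have hm0 : 0 ≤ m := ha0.trans h1.le
  intro t ht heq
  rcases hc with ⟨he, _⟩ | ⟨he, _⟩ | ⟨⟨x, hanti, hlim, hx⟩, _⟩ | ⟨⟨y, hmono, hlim, hy⟩, _⟩
  · refine (hmve I.1 t m ha0 ht hm0).1 (Or.inl ⟨h1, ?_⟩) heq.symm
    rw [he]; exact h2.le
  · refine (hmve I.2 t m (ha0.trans hab.le) ht hm0).1 (Or.inr ⟨?_, h2⟩) heq.symm
    rw [he]; exact h1.le
  · obtain ⟨k, hk⟩ := (hlim.eventually_lt_const h1).exists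
    have hxk : I.1 < x k := seq_gt_lim hanti hlim k
    refine (hmve (x k) t m (ha0.trans hxk.le) ht hm0).1 (Or.inl ⟨hk, ?_⟩) heq.symm
    rw [hx k]; exact h2.le
  · obtain ⟨k, hk⟩ := (hlim.eventually_const_lt h2).exists
    refine (hmve (y k) t m (hm0.trans hk.le) ht hm0).1 (Or.inr ⟨?_, hk⟩) heq.symm
    rw [hy k]; exact h1.le

/-- Structural dichotomy for members of `D`: either `g₁` attains the left
endpoint at points arbitrarily close below the right endpoint (and nowhere
above it), or `g₁` attains the right endpoint at points arbitrarily close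
above the left endpoint (and nowhere below it). -/
lemma memD_struct {g₁ : ℝ → ℝ} {I : ℝ × ℝ} (hI : memD g₁ I) :
    ((∀ w, I.2 < w → g₁ w ≠ I.1) ∧
      ∀ u, u < I.2 → ∃ w, u < w ∧ 0 ≤ w ∧ g₁ w = I.1) ∨
    ((∀ w, 0 ≤ w → w < I.1 → g₁ w ≠ I.2) ∧
      ∀ u, I.1 < u → ∃ w, w < u ∧ 0 ≤ w ∧ g₁ w = I.2) := by
  obtain ⟨⟨ha0, hab⟩, hc⟩ := hI
  rcases hc with ⟨he, hmin⟩ | ⟨he, hmin⟩ | ⟨⟨x, hanti, hlim, hx⟩, hmin⟩ |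
    ⟨⟨y, hmono, hlim, hy⟩, hmin⟩
  · refine Or.inr ⟨hmin, fun u hu => ⟨I.1, hu, ha0, he⟩⟩
  · refine Or.inl ⟨hmin, fun u hu => ⟨I.2, hu, ha0.trans hab.le, he⟩⟩
  · refine Or.inr ⟨fun w hw0 hw => hmin w hw0 hw.le, fun u hu => ?_⟩
    obtain ⟨k, hk⟩ := (hlim.eventually_lt_const hu).exists
    exact ⟨x k, hk, ha0.trans (seq_gt_lim hanti hlim k).le, hx k⟩
  · refine Or.inl ⟨fun w hw => hmin w hw.le, fun u hu => ?_⟩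
    have hmax : max u I.1 < I.2 := max_lt hu hab
    obtain ⟨k, hk⟩ := (hlim.eventually_const_lt hmax).exists
    have hk1 : u < y k := (le_max_left u I.1).trans_lt hk
    have hk2 : I.1 < y k := (le_max_right u I.1).trans_lt hk
    exact ⟨y k, hk1, ha0.trans hk2.le, hy k⟩

/-- Any two distinct intervals of the family `D` are disjoint. -/
theorem stmt17 (g₁ g₂ : ℝ → ℝ)
    (hg₁ : ∀ x : ℝ, 0 ≤ x → 0 ≤ g₁ x) (hg₂ : ∀ x : ℝ, 0 ≤ x → 0 ≤ g₂ x)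
    (hmve : MVE g₁ g₂) :
    ∀ I J : ℝ × ℝ, memD g₁ I → memD g₁ J → I ≠ J →
      Set.Ioo I.1 I.2 ∩ Set.Ioo J.1 J.2 = ∅ := by
  intro I J hI hJ hne
  rw [Set.eq_empty_iff_forall_notMem]
  rintro p ⟨⟨hI1, hI2⟩, hJ1, hJ2⟩
  have hIa0 : (0:ℝ) ≤ I.1 := hI.1.1
  have hIab : I.1 < I.2 := hI.1.2
  have hJa0 : (0:ℝ) ≤ J.1 := hJ.1.1
  have hJab : J.1 < J.2 := hJ.1.2
  set al := min I.1 J.1 with hal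
  set be := max I.2 J.2 with hbe
  have hal0 : (0:ℝ) ≤ al := le_min hIa0 hJa0
  -- the union (al, be) of the two overlapping intervals contains no value of g₂
  have hfree : ∀ m, al < m → m < be → ∀ t, 0 ≤ t → g₂ t ≠ m := by
    intro m hm1 hm2 t ht
    rcases le_or_gt m p with hmp | hmp
    · rcases min_lt_iff.1 hm1 with h | h
      · exact memD_free hmve hI h (hmp.trans_lt hI2) t ht
      · exact memD_free hmve hJ h (hmp.trans_lt hJ2) t ht
    · rcases lt_max_iff.1 hm2 with h | h
      · exact memD_free hmve hI (hI1.trans hmp) h t ht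
      · exact memD_free hmve hJ (hJ1.trans hmp) h t ht
  -- key lemma: g₁ cannot attain two distinct values in [al, be]
  have key : ∀ v v' t t' : ℝ, 0 ≤ t → 0 ≤ t' → g₁ t = v → g₁ t' = v' →
      al ≤ v → al ≤ v' → v ≤ be → v' ≤ be → v < v' → False := by
    intro v v' t t' ht ht' hv hv' hv1 hv'1 hv2 hv'2 hlt
    set m := (v + v') / 2 with hm
    have hvm : v < m := by rw [hm]; linarith
    have hmv' : m < v' := by rw [hm]; linarith
    have hm0 : 0 ≤ m := (hal0.trans hv1).trans hvm.le
    rcases le_or_gt (g₂ m) al with h | h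
    · exact (hmve m t v hm0 ht (hal0.trans hv1)).2 (Or.inr ⟨h.trans hv1, hvm⟩) hv.symm
    · rcases le_or_gt be (g₂ m) with h2 | h2
      · exact (hmve m t' v' hm0 ht' (hal0.trans hv'1)).2
          (Or.inl ⟨hmv', hv'2.trans h2⟩) hv'.symm
      · exact hfree (g₂ m) h h2 m hm0 rfl
  have key2 : ∀ v v' t t' : ℝ, 0 ≤ t → 0 ≤ t' → g₁ t = v → g₁ t' = v' →
      al ≤ v → al ≤ v' → v ≤ be → v' ≤ be → v ≠ v' → False := by
    intro v v' t t' ht ht' hv hv' hv1 hv'1 hv2 hv'2 hnev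
    rcases hnev.lt_or_gt with h | h
    · exact key v v' t t' ht ht' hv hv' hv1 hv'1 hv2 hv'2 h
    · exact key v' v t' t ht' ht hv' hv hv'1 hv1 hv'2 hv2 h
  -- endpoint bounds
  have bI1l : al ≤ I.1 := min_le_left _ _
  have bI1r : I.1 ≤ be := hIab.le.trans (le_max_left _ _)
  have bI2l : al ≤ I.2 := bI1l.trans hIab.le
  have bI2r : I.2 ≤ be := le_max_left _ _
  have bJ1l : al ≤ J.1 := min_le_right _ _
  have bJ1r : J.1 ≤ be := hJab.le.trans (le_max_right _ _)
  have bJ2l : al ≤ J.2 := bJ1l.trans hJab.le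
  have bJ2r : J.2 ≤ be := le_max_right _ _
  rcases memD_struct hI with ⟨minI, witI⟩ | ⟨minI, witI⟩ <;>
    rcases memD_struct hJ with ⟨minJ, witJ⟩ | ⟨minJ, witJ⟩
  · -- I bottom, J bottom
    by_cases h : I.1 = J.1
    · have hne2 : I.2 ≠ J.2 := fun h2 => hne (Prod.ext h h2)
      rcases hne2.lt_or_gt with hlt | hlt
      · obtain ⟨w, hw1, _, hweq⟩ := witJ I.2 hlt
        exact minI w hw1 (hweq.trans h.symm)
      · obtain ⟨w, hw1, _, hweq⟩ := witI J.2 hlt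
        exact minJ w hw1 (hweq.trans h)
    · obtain ⟨tI, _, htI0, htIeq⟩ := witI I.1 hIab
      obtain ⟨tJ, _, htJ0, htJeq⟩ := witJ J.1 hJab
      exact key2 I.1 J.1 tI tJ htI0 htJ0 htIeq htJeq bI1l bJ1l bI1r bJ1r h
  · -- I bottom, J top
    obtain ⟨tI, _, htI0, htIeq⟩ := witI I.1 hIab
    obtain ⟨tJ, _, htJ0, htJeq⟩ := witJ J.2 hJab
    exact key2 I.1 J.2 tI tJ htI0 htJ0 htIeq htJeq bI1l bJ2l bI1r bJ2r
      (ne_of_lt (hI1.trans hJ2))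
  · -- I top, J bottom
    obtain ⟨tI, _, htI0, htIeq⟩ := witI I.2 hIab
    obtain ⟨tJ, _, htJ0, htJeq⟩ := witJ J.1 hJab
    exact key2 I.2 J.1 tI tJ htI0 htJ0 htIeq htJeq bI2l bJ1l bI2r bJ1r
      (ne_of_gt (hJ1.trans hI2))
  · -- I top, J top
    by_cases h : I.2 = J.2
    · have hne1 : I.1 ≠ J.1 := fun h1 => hne (Prod.ext h1 h)
      rcases hne1.lt_or_gt with hlt | hlt
      · obtain ⟨w, hw1, hw0, hweq⟩ := witI J.1 hlt
        exact minJ w hw0 hw1 (hweq.trans h)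
      · obtain ⟨w, hw1, hw0, hweq⟩ := witJ I.1 hlt
        exact minI w hw0 hw1 (hweq.trans h.symm)
    · obtain ⟨tI, _, htI0, htIeq⟩ := witI I.2 hIab
      obtain ⟨tJ, _, htJ0, htJeq⟩ := witJ J.2 hJab
      exact key2 I.2 J.2 tI tJ htI0 htJ0 htIeq htJeq bI2l bJ2l bI2r bJ2r h
end
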